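/- arXiv:2505.07799 — 6 statements merged into one kernel-verified Lean document; each statement's English description precedes it below -/
import Mathlib

section
/- For 0 < ε < 1, a rectangle in the strip ℝ × [0,ε] with vertical side length ε and horizontal side length at most N/M cannot contain a triangle b b' c with ||b - c|| = ||b' - c|| = 1, where b, b' lie on opposite vertical sides of the rectangle, unless ε ≥ √(1 - N²/(4M²)). -/
noncomputable section

lemma strip_aux (ε q : ℝ) (p c : EuclideanSpace ℝ (Fin 2)) (h : dist p c = 1)
    (hpc : |p 0 - c 0| ≤ q) (hp1 : p 1 ∈ Set.Icc 0 ε) (hc1 : c 1 ∈ Set.Icc 0 ε) :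
    1 - q ^ 2 ≤ ε ^ 2 := by
  have hd : (p 0 - c 0) ^ 2 + (p 1 - c 1) ^ 2 = 1 := by
    have h2 := congrArg (· ^ 2) h
    rw [dist_eq_norm, EuclideanSpace.norm_eq] at h2
    simp only [Fin.sum_univ_two] at h2
    rw [Real.sq_sqrt (by positivity)] at h2
    simpa [sq_abs] using h2
  obtain ⟨hp1a, hp1b⟩ := hp1
  obtain ⟨hc1a, hc1b⟩ := hc1
  have h1 : (p 0 - c 0) ^ 2 ≤ q ^ 2 := by
    have := sq_abs (p 0 - c 0)
    nlinarith [abs_nonneg (p 0 - c 0)]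
  nlinarith [sq_nonneg (p 1 - c 1)]

/-- For `0 < ε < 1`, an axis-parallel rectangle `[x₀, x₀+w] × [0,ε]` in the strip
`ℝ × [0,ε]` with vertical side length `ε` and horizontal side length `w ≤ N/M` cannot
contain a triangle `b b' c` with `‖b - c‖ = ‖b' - c‖ = 1`, where `b, b'` lie on the two
opposite vertical sides, unless `ε ≥ √(1 - N²/(4M²))`. -/
theorem strip_rectangle_triangle (N M : ℕ) (hN : 0 < N) (hNM : N < M)
    (ε : ℝ) (hε0 : 0 < ε) (hε1 : ε < 1)
    (x₀ w : ℝ) (hw0 : 0 ≤ w) (hw : w ≤ (N : ℝ) / M)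
    (b b' c : EuclideanSpace ℝ (Fin 2))
    (hb : b 0 = x₀) (hb' : b' 0 = x₀ + w)
    (hbv : b 1 ∈ Set.Icc 0 ε) (hb'v : b' 1 ∈ Set.Icc 0 ε)
    (hch : c 0 ∈ Set.Icc x₀ (x₀ + w)) (hcv : c 1 ∈ Set.Icc 0 ε)
    (hbc : dist b c = 1) (hb'c : dist b' c = 1) :
    ε ≥ Real.sqrt (1 - (N : ℝ) ^ 2 / (4 * (M : ℝ) ^ 2)) := by
  have hM : (0 : ℝ) < M := by exact_mod_cast hN.trans hNM
  set q : ℝ := (N : ℝ) / (2 * M) with hq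
  have hq2 : q ^ 2 = (N : ℝ) ^ 2 / (4 * (M : ℝ) ^ 2) := by
    rw [hq]; field_simp; ring
  have hwq : w / 2 ≤ q := by
    have h2 : (N : ℝ) / (2 * M) = ((N : ℝ) / M) / 2 := by ring
    rw [hq, h2]; linarith
  obtain ⟨hca, hcb⟩ := hch
  have key : 1 - q ^ 2 ≤ ε ^ 2 := by
    rcases le_total (c 0) (x₀ + w / 2) with hc | hc
    · refine strip_aux ε q b c hbc ?_ hbv hcv
      rw [hb, abs_le]; constructor <;> linarith
    · refine strip_aux ε q b' c hb'c ?_ hb'v hcv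
      rw [hb', abs_le]; constructor <;> linarith
  calc Real.sqrt (1 - (N : ℝ) ^ 2 / (4 * (M : ℝ) ^ 2))
      ≤ Real.sqrt (ε ^ 2) := Real.sqrt_le_sqrt (by rw [← hq2]; exact key)
    _ = ε := Real.sqrt_sq hε0.le
end
end

section
/- Let 0 < ε < 1 and N, M ∈ ℕ with M > N. If the strip ℝ × [0,ε] contains an (N,M)-comb, then ε ≥ √(1 - N²/(4M²)). Conversely, if ε ≥ √(1 - N²/(4M²)) then the strip contains an (N,M)-comb. -/
noncomputable section

/-- The strip `ℝ × [0, ε]` as a subset of the Euclidean plane; coordinate `0` is the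
horizontal coordinate and coordinate `1` is the vertical coordinate. -/
def Strip (ε : ℝ) : Set (EuclideanSpace ℝ (Fin 2)) := {p | p 1 ∈ Set.Icc 0 ε}

/-- The unit distance graph of the strip: two points are adjacent iff their Euclidean
distance is exactly `1`. -/
def stripGraph (ε : ℝ) : SimpleGraph (Strip ε) where
  Adj x y := dist x.1 y.1 = 1
  symm := ⟨fun x y h => by show dist y.1 x.1 = 1; rw [dist_comm]; exact h⟩
  loopless := ⟨fun x h => by have h' : dist x.1 x.1 = 1 := h; simp at h'⟩

/-- `v` lies strictly between `u` and `w` (in either order). -/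
def StrictBetween (u v w : ℝ) : Prop := (u < v ∧ v < w) ∨ (w < v ∧ v < u)

/-- `a₀,…,a_N`, `b₀,…,b_M`, `c₁,…,c_M` form an `(N,M)`-comb in the strip `ℝ × [0,ε]`. -/
def IsComb (ε : ℝ) (N M : ℕ)
    (a b c : ℕ → EuclideanSpace ℝ (Fin 2)) : Prop :=
  (∀ i ≤ N, a i ∈ Strip ε) ∧ (∀ i ≤ M, b i ∈ Strip ε) ∧
  (∀ i, 1 ≤ i → i ≤ M → c i ∈ Strip ε) ∧
  -- the points are pairwise distinct within each family
  (∀ i ≤ N, ∀ j ≤ N, a i = a j → i = j) ∧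
  (∀ i ≤ M, ∀ j ≤ M, b i = b j → i = j) ∧
  (∀ i, 1 ≤ i → i ≤ M → ∀ j, 1 ≤ j → j ≤ M → c i = c j → i = j) ∧
  -- (i) the aᵢ lie on a common horizontal line
  (∀ i ≤ N, a i 1 = a 0 1) ∧
  -- (ii) consecutive aᵢ are at distance 1
  (∀ i < N, dist (a i) (a (i + 1)) = 1) ∧
  -- (iii) endpoints
  b 0 = a 0 ∧ b M = a N ∧
  -- (iv) the zig-zag has unit sides
  (∀ i < M, dist (b i) (c (i + 1)) = 1 ∧ dist (c (i + 1)) (b (i + 1)) = 1) ∧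
  -- (v) the projections of b₁,…,b_{M-1} and c₁,…,c_M are strictly inside [pr a₀, pr a_N]
  (∀ i, 1 ≤ i → i < M → StrictBetween (a 0 0) (b i 0) (a N 0)) ∧
  (∀ i, 1 ≤ i → i ≤ M → StrictBetween (a 0 0) (c i 0) (a N 0)) ∧
  -- (vi) orderings of projections
  (∀ i, 1 ≤ i → i < M → StrictBetween (b (i - 1) 0) (b i 0) (b (i + 1) 0)) ∧
  (∀ i, 1 ≤ i → i ≤ M → StrictBetween (b (i - 1) 0) (c i 0) (b i 0))

def pt (x y : ℝ) : EuclideanSpace ℝ (Fin 2) := WithLp.toLp 2 (fun j => if j = 0 then x else y)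

lemma pt0 (x y : ℝ) : pt x y 0 = x := rfl
lemma pt1 (x y : ℝ) : pt x y 1 = y := rfl

lemma dist_sq_eq (p q : EuclideanSpace ℝ (Fin 2)) :
    dist p q ^ 2 = (p 0 - q 0) ^ 2 + (p 1 - q 1) ^ 2 := by
  rw [EuclideanSpace.dist_eq, Real.sq_sqrt (by positivity)]
  simp [Fin.sum_univ_two, Real.dist_eq, sq_abs]

lemma dist_pt (x y x' y' : ℝ) :
    dist (pt x y) (pt x' y') = Real.sqrt ((x - x') ^ 2 + (y - y') ^ 2) := by
  rw [EuclideanSpace.dist_eq]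
  congr 1
  simp [Fin.sum_univ_two, pt0, pt1, Real.dist_eq, sq_abs]

set_option maxHeartbeats 4000000 in
/-- For `0 < ε < 1` and `N < M`, the strip `ℝ × [0,ε]` contains an `(N,M)`-comb
if and only if `ε ≥ √(1 - N²/(4M²))`. -/
theorem strip_comb_iff (ε : ℝ) (hε0 : 0 < ε) (hε1 : ε < 1)
    (N M : ℕ) (hN : 0 < N) (hNM : N < M) :
    (∃ a b c : ℕ → EuclideanSpace ℝ (Fin 2), IsComb ε N M a b c) ↔
      ε ≥ Real.sqrt (1 - (N : ℝ) ^ 2 / (4 * (M : ℝ) ^ 2)) := by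
  have hM0 : (0:ℝ) < M := by exact_mod_cast Nat.pos_of_ne_zero (by omega)
  have hN0 : (0:ℝ) < N := by exact_mod_cast hN
  constructor
  · rintro ⟨a, b, c, haS, hbS, hcS, haI, hbI, hcI, haL, haD, hb0, hbM, hzig, hbIn, hcIn,
      hbOrd, hcOrd⟩
    set L := Real.sqrt (1 - ε ^ 2) with hLdef
    have hL2 : L ^ 2 = 1 - ε ^ 2 := Real.sq_sqrt (by nlinarith)
    have hLpos : 0 < L := Real.sqrt_pos.mpr (by nlinarith)
    have edge : ∀ p q : EuclideanSpace ℝ (Fin 2), p ∈ Strip ε → q ∈ Strip ε → dist p q = 1 →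
        L ≤ |p 0 - q 0| := by
      intro p q hp hq hd
      have h1 := dist_sq_eq p q
      rw [hd] at h1
      obtain ⟨hp0, hp1⟩ := hp
      obtain ⟨hq0, hq1⟩ := hq
      have hsq : 1 - ε ^ 2 ≤ (p 0 - q 0) ^ 2 := by nlinarith
      calc L ≤ Real.sqrt ((p 0 - q 0) ^ 2) := Real.sqrt_le_sqrt hsq
        _ = |p 0 - q 0| := Real.sqrt_sq_eq_abs _
    have gap : ∀ i < M, 2 * L ≤ |b (i + 1) 0 - b i 0| := by
      intro i hi
      obtain ⟨h1, h2⟩ := hzig i hi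
      have e1 : L ≤ |b i 0 - c (i + 1) 0| :=
        edge _ _ (hbS i (le_of_lt hi)) (hcS (i + 1) (by omega) (by omega)) h1
      have e2 : L ≤ |c (i + 1) 0 - b (i + 1) 0| :=
        edge _ _ (hcS (i + 1) (by omega) (by omega)) (hbS (i + 1) hi) h2
      have hbet := hcOrd (i + 1) (by omega) (by omega)
      simp only [Nat.add_sub_cancel] at hbet
      rcases hbet with ⟨hA, hB⟩ | ⟨hA, hB⟩
      · rcases le_abs.mp e1 with h | h <;> rcases le_abs.mp e2 with h' | h' <;>
          rw [abs_of_pos (by linarith)] <;> linarith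
      · rcases le_abs.mp e1 with h | h <;> rcases le_abs.mp e2 with h' | h' <;>
          rw [abs_of_neg (by linarith)] <;> linarith
    have sign : ∀ i, i < M → (0 < b 1 0 - b 0 0 → 0 < b (i + 1) 0 - b i 0) ∧
        (b 1 0 - b 0 0 < 0 → b (i + 1) 0 - b i 0 < 0) := by
      intro i
      induction i with
      | zero => exact fun _ => ⟨fun h => h, fun h => h⟩
      | succ k ih =>
        intro hk
        have ihk := ih (by omega)
        have hbet := hbOrd (k + 1) (by omega) (by omega)
        simp only [Nat.add_sub_cancel] at hbet
        constructor
        · intro hpos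
          have hdk := ihk.1 hpos
          rcases hbet with ⟨hA, hB⟩ | ⟨hA, hB⟩ <;> linarith
        · intro hneg
          have hdk := ihk.2 hneg
          rcases hbet with ⟨hA, hB⟩ | ⟨hA, hB⟩ <;> linarith
    have tele_b : b M 0 - b 0 0 = ∑ i ∈ Finset.range M, (b (i + 1) 0 - b i 0) :=
      (Finset.sum_range_sub (fun k => b k 0) M).symm
    have ha_step : ∀ i < N, |a (i + 1) 0 - a i 0| ≤ 1 := by
      intro i hi
      have h1 := dist_sq_eq (a i) (a (i + 1))
      rw [haD i hi] at h1
      rw [abs_le]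
      constructor <;> nlinarith [sq_nonneg (a i 1 - a (i + 1) 1)]
    have ha_bound : |a N 0 - a 0 0| ≤ (N : ℝ) := by
      have t := Finset.sum_range_sub (fun k => a k 0) N
      calc |a N 0 - a 0 0| = |∑ i ∈ Finset.range N, (a (i + 1) 0 - a i 0)| := by rw [t]
        _ ≤ ∑ i ∈ Finset.range N, |a (i + 1) 0 - a i 0| := Finset.abs_sum_le_sum_abs _ _
        _ ≤ ∑ i ∈ Finset.range N, (1 : ℝ) :=
            Finset.sum_le_sum (fun i hi => ha_step i (Finset.mem_range.mp hi))
        _ = N := by simp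
    have heq : b M 0 - b 0 0 = a N 0 - a 0 0 := by rw [hb0, hbM]
    have key : 2 * (M : ℝ) * L ≤ (N : ℝ) := by
      have h10 : 2 * L ≤ |b 1 0 - b 0 0| := gap 0 (by omega)
      have hd0 : b 1 0 - b 0 0 ≠ 0 := by
        intro h; rw [h, abs_zero] at h10; linarith
      have habs : 2 * (M : ℝ) * L ≤ |b M 0 - b 0 0| := by
        rcases lt_or_gt_of_ne hd0 with hneg | hpos
        · have hstep : ∀ i ∈ Finset.range M, (b (i + 1) 0 - b i 0) ≤ -(2 * L) := by
            intro i hi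
            have hi' := Finset.mem_range.mp hi
            have hs := (sign i hi').2 hneg
            have hg := gap i hi'
            rw [abs_of_neg hs] at hg
            linarith
          have hsum : b M 0 - b 0 0 ≤ -(2 * (M : ℝ) * L) := by
            rw [tele_b]
            calc ∑ i ∈ Finset.range M, (b (i + 1) 0 - b i 0)
                ≤ ∑ _i ∈ Finset.range M, -(2 * L) := Finset.sum_le_sum hstep
              _ = -(2 * (M : ℝ) * L) := by
                  rw [Finset.sum_const, Finset.card_range]; push_cast; ring
          have := neg_le_abs (b M 0 - b 0 0)
          linarith
        · have hstep : ∀ i ∈ Finset.range M, 2 * L ≤ (b (i + 1) 0 - b i 0) := by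
            intro i hi
            have hi' := Finset.mem_range.mp hi
            have hs := (sign i hi').1 hpos
            have hg := gap i hi'
            rw [abs_of_pos hs] at hg
            exact hg
          have hsum : 2 * (M : ℝ) * L ≤ b M 0 - b 0 0 := by
            rw [tele_b]
            calc (2 * (M : ℝ) * L) = ∑ _i ∈ Finset.range M, 2 * L := by
                  rw [Finset.sum_const, Finset.card_range]; push_cast; ring
              _ ≤ ∑ i ∈ Finset.range M, (b (i + 1) 0 - b i 0) := Finset.sum_le_sum hstep
          have := le_abs_self (b M 0 - b 0 0)
          linarith
      rw [heq] at habs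
      linarith [ha_bound, habs]
    have hfin : 1 - (N : ℝ) ^ 2 / (4 * (M : ℝ) ^ 2) ≤ ε ^ 2 := by
      have hsq : (2 * (M : ℝ) * L) * (2 * (M : ℝ) * L) ≤ (N : ℝ) * (N : ℝ) :=
        mul_le_mul key key (by positivity) (by positivity)
      have h4 : (1 - ε ^ 2) * (4 * (M : ℝ) ^ 2) ≤ (N : ℝ) ^ 2 := by nlinarith [hL2]
      have h5 : 1 - ε ^ 2 ≤ (N : ℝ) ^ 2 / (4 * (M : ℝ) ^ 2) :=
        (le_div_iff₀ (by positivity)).mpr h4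
      linarith
    calc Real.sqrt (1 - (N : ℝ) ^ 2 / (4 * (M : ℝ) ^ 2)) ≤ Real.sqrt (ε ^ 2) :=
          Real.sqrt_le_sqrt hfin
      _ = ε := Real.sqrt_sq hε0.le
  · intro hge
    set t : ℝ := N / M with ht
    have ht0 : 0 < t := by positivity
    set h : ℝ := Real.sqrt (1 - (N : ℝ) ^ 2 / (4 * (M : ℝ) ^ 2)) with hh
    have hfrac : (N : ℝ) ^ 2 / (4 * (M : ℝ) ^ 2) < 1 := by
      rw [div_lt_one (by positivity)]
      have hNM' : (N : ℝ) < M := by exact_mod_cast hNM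
      nlinarith
    have hh0 : 0 < h := Real.sqrt_pos.mpr (by linarith)
    have hh2 : h ^ 2 = 1 - (N : ℝ) ^ 2 / (4 * (M : ℝ) ^ 2) := Real.sq_sqrt (by linarith)
    have hMt : (M : ℝ) * t = N := by rw [ht]; field_simp
    have hts : (t / 2) ^ 2 + h ^ 2 = 1 := by
      rw [hh2, ht]; field_simp; ring
    refine ⟨fun i => pt i 0, fun i => pt (i * t) 0, fun i => pt (((i : ℝ) - 1 / 2) * t) h,
      ?_, ?_, ?_, ?_, ?_, ?_, ?_, ?_, ?_, ?_, ?_, ?_, ?_, ?_, ?_⟩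
    · intro i _; exact ⟨le_rfl, hε0.le⟩
    · intro i _; exact ⟨le_rfl, hε0.le⟩
    · intro i _ _; exact ⟨hh0.le, hge⟩
    · intro i _ j _ hij
      have h0 : (i : ℝ) = (j : ℝ) := congrArg (fun p => p 0) hij
      exact_mod_cast h0
    · intro i _ j _ hij
      have h0 : (i : ℝ) * t = (j : ℝ) * t := congrArg (fun p => p 0) hij
      have := mul_right_cancel₀ ht0.ne' h0
      exact_mod_cast this
    · intro i _ _ j _ _ hij
      have h0 : ((i : ℝ) - 1 / 2) * t = ((j : ℝ) - 1 / 2) * t := congrArg (fun p => p 0) hij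
      have h1 := mul_right_cancel₀ ht0.ne' h0
      have : (i : ℝ) = (j : ℝ) := by linarith
      exact_mod_cast this
    · intro i _; rfl
    · intro i _
      show dist (pt (i : ℝ) 0) (pt ((i + 1 : ℕ) : ℝ) 0) = 1
      rw [dist_pt]
      have he : ((i : ℝ) - ((i + 1 : ℕ) : ℝ)) ^ 2 + ((0 : ℝ) - 0) ^ 2 = 1 := by
        push_cast; ring
      rw [he, Real.sqrt_one]
    · show pt (((0 : ℕ) : ℝ) * t) 0 = pt ((0 : ℕ) : ℝ) 0
      norm_num
    · show pt (((M : ℕ) : ℝ) * t) 0 = pt ((N : ℕ) : ℝ) 0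
      rw [hMt]
    · intro i hi
      constructor
      · show dist (pt ((i : ℝ) * t) 0) (pt ((((i + 1 : ℕ) : ℝ) - 1 / 2) * t) h) = 1
        rw [dist_pt]
        have he : ((i : ℝ) * t - (((i + 1 : ℕ) : ℝ) - 1 / 2) * t) ^ 2 + ((0 : ℝ) - h) ^ 2 = 1 := by
          push_cast
          linear_combination hts
        rw [he, Real.sqrt_one]
      · show dist (pt ((((i + 1 : ℕ) : ℝ) - 1 / 2) * t) h) (pt (((i + 1 : ℕ) : ℝ) * t) 0) = 1
        rw [dist_pt]
        have he : ((((i + 1 : ℕ) : ℝ) - 1 / 2) * t - ((i + 1 : ℕ) : ℝ) * t) ^ 2 + (h - 0) ^ 2 = 1 := by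
          push_cast
          linear_combination hts
        rw [he, Real.sqrt_one]
    · intro i hi1 hiM
      show StrictBetween (((0 : ℕ) : ℝ)) ((i : ℝ) * t) (((N : ℕ) : ℝ))
      have h1 : (1 : ℝ) ≤ (i : ℝ) := by exact_mod_cast hi1
      have h2 : (i : ℝ) < (M : ℝ) := by exact_mod_cast hiM
      left
      constructor
      · push_cast; nlinarith
      · push_cast; nlinarith [hMt]
    · intro i hi1 hiM
      show StrictBetween (((0 : ℕ) : ℝ)) (((i : ℝ) - 1 / 2) * t) (((N : ℕ) : ℝ))
      have h1 : (1 : ℝ) ≤ (i : ℝ) := by exact_mod_cast hi1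
      have h2 : (i : ℝ) ≤ (M : ℝ) := by exact_mod_cast hiM
      left
      constructor
      · push_cast; nlinarith
      · push_cast; nlinarith [hMt]
    · intro i hi1 hiM
      show StrictBetween (((i - 1 : ℕ) : ℝ) * t) ((i : ℝ) * t) (((i + 1 : ℕ) : ℝ) * t)
      have h1 : (1 : ℝ) ≤ (i : ℝ) := by exact_mod_cast hi1
      have hc : ((i - 1 : ℕ) : ℝ) = (i : ℝ) - 1 := by push_cast [hi1]; ring
      rw [hc]
      left
      constructor
      · nlinarith
      · push_cast; nlinarith
    · intro i hi1 hiM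
      show StrictBetween (((i - 1 : ℕ) : ℝ) * t) (((i : ℝ) - 1 / 2) * t) ((i : ℝ) * t)
      have h1 : (1 : ℝ) ≤ (i : ℝ) := by exact_mod_cast hi1
      have hc : ((i - 1 : ℕ) : ℝ) = (i : ℝ) - 1 := by push_cast [hi1]; ring
      rw [hc]
      left
      constructor
      · nlinarith
      · nlinarith
end
end

section
/- Let n ≥ 2, m ≥ 1, p ∈ (1,∞), ε > 0, and let L = ℝⁿ × [0,ε]^m with the ℓ_p metric from ℝ^{n+m}. For x, y ∈ L, we have ||x - y||_p = 2 if and only if there is exactly one point z ∈ L with ||x - z||_p = ||y - z||_p = 1; moreover in that case z = (x+y)/2. -/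
noncomputable section

/-- The ℓ_p distance on \`ℝ^k\` (for a real exponent \`p\`). -/
def lpDist (p : ℝ) {k : ℕ} (x y : Fin k → ℝ) : ℝ :=
  (∑ i, |x i - y i| ^ p) ^ (1 / p)

/-- The layer \`ℝⁿ × [0,ε]^m\` inside \`ℝ^{n+m}\`: the first \`n\` coordinates are free and
the last \`m\` coordinates lie in \`[0,ε]\`. -/
def Layer (n m : ℕ) (ε : ℝ) : Set (Fin (n + m) → ℝ) :=
  {x | ∀ i : Fin (n + m), n ≤ (i : ℕ) → x i ∈ Set.Icc 0 ε}

/-- The unit distance graph of the layer \`L(n,m,p,ε)\`: two (distinct) points are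
adjacent iff their ℓ_p distance is exactly \`1\`. -/
def layerGraph (n m : ℕ) (p ε : ℝ) : SimpleGraph (Layer n m ε) where
  Adj x y := x ≠ y ∧ lpDist p x.1 y.1 = 1
  symm := ⟨fun x y h => ⟨h.1.symm, by simpa [lpDist, abs_sub_comm] using h.2⟩⟩
  loopless := ⟨fun x h => h.1 rfl⟩

/-- Two points lie in a common vertical fiber: equal first \`n\` coordinates. -/
def SameVertical (n m : ℕ) (x y : Fin (n + m) → ℝ) : Prop :=
  ∀ i : Fin (n + m), (i : ℕ) < n → x i = y i

/-- Two points lie on a common horizontal slice (in particular, the line through two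
such distinct points is parallel to \`ℝⁿ × {0}\`): equal last \`m\` coordinates. -/
def SameHorizontal (n m : ℕ) (x y : Fin (n + m) → ℝ) : Prop :=
  ∀ i : Fin (n + m), n ≤ (i : ℕ) → x i = y i


open Real Set Filter

variable {p : ℝ}

lemma abs_rpow_cont (hp : 1 < p) : Continuous (fun t : ℝ => |t| ^ p) :=
  continuous_abs.rpow_const (fun _ => Or.inr (by linarith))

lemma strictConvexOn_abs_rpow (hp : 1 < p) :
    StrictConvexOn ℝ Set.univ (fun t : ℝ => |t| ^ p) := by
  have hp0 : (0:ℝ) < p := by linarith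
  refine ⟨convex_univ, ?_⟩
  intro x _ y _ hxy a b ha hb hab
  simp only [smul_eq_mul]
  by_cases habs : |x| = |y|
  · have hy : y = -x := by
      rcases abs_eq_abs.mp habs with h | h
      · exact absurd h hxy
      · linarith
    have hx0 : x ≠ 0 := by
      rintro rfl
      simp [hy] at hxy
    have hxpos : 0 < |x| := abs_pos.mpr hx0
    have h1 : |a * x + b * y| = |a - b| * |x| := by
      rw [hy]; rw [← abs_mul]; ring_nf
    have h2 : |a - b| < 1 := by
      rw [abs_lt]; constructor <;> linarith
    have h3 : |a * x + b * y| < |x| := by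
      rw [h1]
      calc |a - b| * |x| < 1 * |x| := by
            exact mul_lt_mul_of_pos_right h2 hxpos
        _ = |x| := one_mul _
    have h4 : |a * x + b * y| ^ p < |x| ^ p :=
      Real.rpow_lt_rpow (abs_nonneg _) h3 hp0
    have h5 : a * |x| ^ p + b * |x| ^ p = |x| ^ p := by
      rw [← add_mul, hab, one_mul]
    rw [← habs]; linarith
  · have h1 : |a * x + b * y| ≤ a * |x| + b * |y| := by
      calc |a * x + b * y| ≤ |a * x| + |b * y| := abs_add_le _ _
        _ = a * |x| + b * |y| := by rw [abs_mul, abs_mul, abs_of_pos ha, abs_of_pos hb]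
    have h2 := (strictConvexOn_rpow hp).2 (Set.mem_Ici.mpr (abs_nonneg x))
      (Set.mem_Ici.mpr (abs_nonneg y)) habs ha hb hab
    simp only [smul_eq_mul] at h2
    calc |a * x + b * y| ^ p ≤ (a * |x| + b * |y|) ^ p :=
          Real.rpow_le_rpow (abs_nonneg _) h1 hp0.le
      _ < a * |x| ^ p + b * |y| ^ p := h2

lemma key_ineq (hp : 1 < p) (a b : ℝ) :
    |a + b| ^ p ≤ 2 ^ (p - 1) * (|a| ^ p + |b| ^ p) := by
  have hp0 : (0:ℝ) < p := by linarith
  have h1 : |a + b| ^ p ≤ (|a| + |b|) ^ p :=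
    Real.rpow_le_rpow (abs_nonneg _) (abs_add_le a b) hp0.le
  have h2 := (convexOn_rpow hp.le).2 (Set.mem_Ici.mpr (abs_nonneg a))
      (Set.mem_Ici.mpr (abs_nonneg b)) (by norm_num : (0:ℝ) ≤ 1/2)
      (by norm_num : (0:ℝ) ≤ 1/2) (by norm_num : (1:ℝ)/2 + 1/2 = 1)
  simp only [smul_eq_mul] at h2
  have h3 : (|a| + |b|) ^ p = 2 ^ p * ((1/2) * |a| + (1/2) * |b|) ^ p := by
    rw [← Real.mul_rpow (by norm_num) (by positivity)]
    ring_nf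
  have h4 : (2:ℝ) ^ (p - 1) = 2 ^ p / 2 := by
    rw [Real.rpow_sub (by norm_num), Real.rpow_one]
  have h2p : (0:ℝ) < 2 ^ p := Real.rpow_pos_of_pos (by norm_num) p
  calc |a + b| ^ p ≤ (|a| + |b|) ^ p := h1
    _ = 2 ^ p * ((1/2) * |a| + (1/2) * |b|) ^ p := h3
    _ ≤ 2 ^ p * ((1/2) * |a| ^ p + (1/2) * |b| ^ p) := by
        exact mul_le_mul_of_nonneg_left h2 h2p.le
    _ = 2 ^ (p - 1) * (|a| ^ p + |b| ^ p) := by rw [h4]; ring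

lemma key_eq (hp : 1 < p) {a b : ℝ}
    (h : |a + b| ^ p = 2 ^ (p - 1) * (|a| ^ p + |b| ^ p)) : a = b := by
  by_contra hab
  have h2 := (strictConvexOn_abs_rpow hp).2 (Set.mem_univ a) (Set.mem_univ b) hab
      (by norm_num : (0:ℝ) < 1/2) (by norm_num : (0:ℝ) < 1/2)
      (by norm_num : (1:ℝ)/2 + 1/2 = 1)
  simp only [smul_eq_mul] at h2
  have h2p : (0:ℝ) < 2 ^ p := Real.rpow_pos_of_pos (by norm_num) p
  have habs2 : |(1:ℝ)/2 * a + 1/2 * b| = |a + b| / 2 := by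
    rw [show (1:ℝ)/2 * a + 1/2 * b = (a + b)/2 by ring, abs_div, abs_two]
  have h3 : |(1:ℝ)/2 * a + 1/2 * b| ^ p = |a + b| ^ p / 2 ^ p := by
    rw [habs2, Real.div_rpow (abs_nonneg _) (by norm_num)]
  rw [h3, div_lt_iff₀ h2p] at h2
  have h4 : (2:ℝ) ^ (p - 1) = 2 ^ p / 2 := by
    rw [Real.rpow_sub (by norm_num), Real.rpow_one]
  rw [h4] at h
  nlinarith [h2, h]

lemma conv_pair (hp : 1 < p) {A B c d : ℝ} (h1 : A < c) (h2 : c < B)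
    (h3 : A < d) (hsum : A + B = c + d) :
    |c| ^ p + |d| ^ p < |A| ^ p + |B| ^ p := by
  have hBA : (0:ℝ) < B - A := by linarith
  have hlam1 : 0 < (B - c) / (B - A) := div_pos (by linarith) hBA
  have hlam2 : (B - c) / (B - A) < 1 := by
    rw [div_lt_one hBA]; linarith
  have h0 : (B - c) / (B - A) * (B - A) = B - c := div_mul_cancel₀ _ (ne_of_gt hBA)
  have hlam3 : 0 < 1 - (B - c) / (B - A) := by linarith
  have g1 := (strictConvexOn_abs_rpow hp).2 (Set.mem_univ A) (Set.mem_univ B)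
    (by linarith : A ≠ B) hlam1 hlam3 (by ring)
  have g2 := (strictConvexOn_abs_rpow hp).2 (Set.mem_univ A) (Set.mem_univ B)
    (by linarith : A ≠ B) hlam3 hlam1 (by ring)
  simp only [smul_eq_mul] at g1 g2
  have hc : (B - c) / (B - A) * A + (1 - (B - c) / (B - A)) * B = c := by
    linear_combination -h0
  have hd : (1 - (B - c) / (B - A)) * A + (B - c) / (B - A) * B = d := by
    linear_combination h0 + hsum
  rw [hc] at g1
  rw [hd] at g2
  linarith

lemma psi_strictMono (hp : 1 < p) {v : ℝ} (hv : 0 < v) :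
    StrictMono (fun b : ℝ => |v + b| ^ p - |v - b| ^ p) := by
  intro b1 b2 hb
  simp only
  have key : |b1 + v| ^ p + |b2 - v| ^ p < |b1 - v| ^ p + |b2 + v| ^ p := by
    exact conv_pair hp (by linarith) (by linarith) (by linarith) (by ring)
  have e1 : |v + b1| = |b1 + v| := by rw [add_comm]
  have e2 : |v + b2| = |b2 + v| := by rw [add_comm]
  have e3 : |v - b1| = |b1 - v| := abs_sub_comm _ _
  have e4 : |v - b2| = |b2 - v| := abs_sub_comm _ _
  rw [e1, e2, e3, e4]
  linarith

lemma psi_tendsto_atTop (hp : 1 < p) {v : ℝ} (hv : 0 < v) :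
    Tendsto (fun b : ℝ => |v + b| ^ p - |v - b| ^ p) atTop atTop := by
  have hp0 : (0:ℝ) < p := by linarith
  have hmin : Tendsto (fun b : ℝ => 2 * v * (v + b) ^ (p - 1)) atTop atTop := by
    apply Tendsto.const_mul_atTop (by linarith : (0:ℝ) < 2 * v)
    exact (tendsto_rpow_atTop (by linarith : (0:ℝ) < p - 1)).comp
      (tendsto_atTop_add_const_left _ v tendsto_id)
  apply tendsto_atTop_mono' atTop _ hmin
  filter_upwards [eventually_ge_atTop v] with b hb
  have hvb : (0:ℝ) < v + b := by linarith
  have e1 : |v + b| = v + b := abs_of_pos hvb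
  have e2 : |v - b| = b - v := by rw [abs_sub_comm, abs_of_nonneg (by linarith)]
  rw [e1, e2]
  have hps : 1 + (p - 1) = p := by ring
  have q1 : (v + b) ^ p = (v + b) * (v + b) ^ (p - 1) := by
    have h := Real.rpow_add' (y := 1) (z := p - 1) hvb.le (by linarith)
    rw [hps, Real.rpow_one] at h
    exact h
  have q2 : (b - v) ^ p ≤ (b - v) * (v + b) ^ (p - 1) := by
    rcases eq_or_lt_of_le hb with h | h
    · rw [← h]; simp [Real.zero_rpow (ne_of_gt hp0)]
    · have hbv : (0:ℝ) < b - v := by linarith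
      calc (b - v) ^ p = (b - v) * (b - v) ^ (p - 1) := by
            have h2 := Real.rpow_add' (y := 1) (z := p - 1) hbv.le (by linarith)
            rw [hps, Real.rpow_one] at h2
            exact h2
        _ ≤ (b - v) * (v + b) ^ (p - 1) := by
            apply mul_le_mul_of_nonneg_left _ hbv.le
            exact Real.rpow_le_rpow (by linarith) (by linarith) (by linarith)
  nlinarith [q1, q2]

lemma psi_surjective (hp : 1 < p) {v : ℝ} (hv : 0 < v) :
    Function.Surjective (fun b : ℝ => |v + b| ^ p - |v - b| ^ p) := by
  have hcont : Continuous (fun b : ℝ => |v + b| ^ p - |v - b| ^ p) := by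
    have h1 : Continuous (fun b : ℝ => |v + b| ^ p) :=
      (abs_rpow_cont hp).comp (continuous_const.add continuous_id)
    have h2 : Continuous (fun b : ℝ => |v - b| ^ p) :=
      (abs_rpow_cont hp).comp (continuous_const.sub continuous_id)
    exact h1.sub h2
  apply hcont.surjective (psi_tendsto_atTop hp hv)
  have hneg : Tendsto (fun b : ℝ => -(|v + b| ^ p - |v - b| ^ p)) atTop atBot :=
    tendsto_neg_atTop_atBot.comp (psi_tendsto_atTop hp hv)
  have hcomp : Tendsto (fun b : ℝ => -(|v + (-b)| ^ p - |v - (-b)| ^ p)) atBot atBot :=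
    hneg.comp tendsto_neg_atBot_atTop
  apply hcomp.congr
  intro b
  have e1 : v + -b = v - b := by ring
  have e2 : v - -b = v + b := by ring
  rw [e1, e2]
  ring

lemma core_pair (hp : 1 < p) {u v S : ℝ} (hv : 0 < v)
    (hS : |u| ^ p + |v| ^ p < S) :
    ∃ a b : ℝ, a ≠ 0 ∧ |u - a| ^ p + |v - b| ^ p = S ∧ |u + a| ^ p + |v + b| ^ p = S := by
  have hp0 : (0:ℝ) < p := by linarith
  set ψ := fun b : ℝ => |v + b| ^ p - |v - b| ^ p with hψ
  set e := StrictMono.orderIsoOfSurjective ψ (psi_strictMono hp hv) (psi_surjective hp hv)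
    with he
  set β := fun a : ℝ => e.symm (|u - a| ^ p - |u + a| ^ p) with hβ
  have hψβ : ∀ a, |v + β a| ^ p - |v - β a| ^ p = |u - a| ^ p - |u + a| ^ p := by
    intro a
    exact StrictMono.orderIsoOfSurjective_self_symm_apply ψ
      (psi_strictMono hp hv) (psi_surjective hp hv) _
  have hβcont : Continuous β := by
    apply (OrderIso.continuous e.symm).comp
    exact ((abs_rpow_cont hp).comp (continuous_const.sub continuous_id)).sub
      ((abs_rpow_cont hp).comp (continuous_const.add continuous_id))
  have hβ0 : β 0 = 0 := by
    have h1 : e 0 = 0 := by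
      show ψ 0 = 0
      simp [hψ]
    have h2 : β 0 = e.symm 0 := by simp [hβ]
    have h3 := e.symm_apply_apply 0
    rw [h1] at h3
    rw [h2, h3]
  set R := fun a : ℝ => |u - a| ^ p + |v - β a| ^ p with hR
  have hRcont : Continuous R :=
    ((abs_rpow_cont hp).comp (continuous_const.sub continuous_id)).add
      ((abs_rpow_cont hp).comp (continuous_const.sub hβcont))
  have hR0 : R 0 = |u| ^ p + |v| ^ p := by simp [hR, hβ0]
  have hS0 : (0:ℝ) ≤ S := le_of_lt (lt_of_le_of_lt (by positivity) hS)
  set A := |u| + S ^ (1/p) with hA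
  have hSp : (0:ℝ) ≤ S ^ (1/p) := Real.rpow_nonneg hS0 _
  have hA0 : (0:ℝ) ≤ A := by positivity
  have hRA : S ≤ R A := by
    have h1 : S ^ (1/p) ≤ |u - A| := by
      calc S ^ (1/p) ≤ A - u := by
            have := le_abs_self u; simp only [hA]; linarith
        _ ≤ |A - u| := le_abs_self _
        _ = |u - A| := abs_sub_comm _ _
    have h2 : (S ^ (1/p)) ^ p ≤ |u - A| ^ p :=
      Real.rpow_le_rpow hSp h1 hp0.le
    have h3 : (S ^ (1/p)) ^ p = S := by
      rw [one_div, Real.rpow_inv_rpow hS0 (ne_of_gt hp0)]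
    have h4 : (0:ℝ) ≤ |v - β A| ^ p := Real.rpow_nonneg (abs_nonneg _) _
    simp only [hR]
    linarith
  have hmem : S ∈ Set.Icc (R 0) (R A) := ⟨by rw [hR0]; exact hS.le, hRA⟩
  obtain ⟨a, _, haR⟩ := intermediate_value_Icc hA0 hRcont.continuousOn hmem
  refine ⟨a, β a, ?_, ?_, ?_⟩
  · rintro rfl
    rw [hR0] at haR
    linarith
  · exact haR
  · have := hψβ a
    simp only [hR] at haR
    linarith

lemma exists_pair (hp : 1 < p) {u v S : ℝ} (hS : |u| ^ p + |v| ^ p < S) :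
    ∃ a b : ℝ, ¬(a = 0 ∧ b = 0) ∧ |u - a| ^ p + |v - b| ^ p = S ∧
      |u + a| ^ p + |v + b| ^ p = S := by
  have hp0 : (0:ℝ) < p := by linarith
  rcases lt_trichotomy v 0 with hv | hv | hv
  · -- v < 0 : apply core to (u, -v), negate b
    have hS' : |u| ^ p + |(-v)| ^ p < S := by rwa [abs_neg]
    obtain ⟨a, b, ha, h1, h2⟩ := core_pair hp (by linarith : (0:ℝ) < -v) hS'
    refine ⟨a, -b, fun h => ha h.1, ?_, ?_⟩
    · rw [show v - -b = -(-v - b) by ring, abs_neg]; exact h1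
    · rw [show v + -b = -(-v + b) by ring, abs_neg]; exact h2
  · -- v = 0
    subst hv
    rw [abs_zero, Real.zero_rpow (ne_of_gt hp0)] at hS
    rcases lt_trichotomy u 0 with hu | hu | hu
    · -- u < 0 : core to (0, -u) swapped & negated
      have hS' : |(0:ℝ)| ^ p + |(-u)| ^ p < S := by
        rw [abs_neg, abs_zero, Real.zero_rpow (ne_of_gt hp0)]
        linarith
      obtain ⟨a, b, ha, h1, h2⟩ := core_pair hp (by linarith : (0:ℝ) < -u) hS'
      refine ⟨-b, a, fun h => ha h.2, ?_, ?_⟩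
      · rw [show u - -b = -(-u - b) by ring, abs_neg]
        linarith
      · rw [show u + -b = -(-u + b) by ring, abs_neg]
        linarith
    · -- u = 0
      subst hu
      have hS0 : (0:ℝ) < S := by
        rw [abs_zero, Real.zero_rpow (ne_of_gt hp0)] at hS
        linarith
      refine ⟨S ^ (1/p), 0, ?_, ?_, ?_⟩
      · intro h
        have : (0:ℝ) < S ^ (1/p) := Real.rpow_pos_of_pos hS0 _
        rw [h.1] at this
        exact lt_irrefl _ this
      · rw [zero_sub, zero_sub, abs_neg, abs_neg, abs_zero,
          Real.zero_rpow (ne_of_gt hp0), abs_of_pos (Real.rpow_pos_of_pos hS0 _),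
          one_div, Real.rpow_inv_rpow hS0.le (ne_of_gt hp0)]
        ring
      · rw [zero_add, zero_add, abs_zero, Real.zero_rpow (ne_of_gt hp0),
          abs_of_pos (Real.rpow_pos_of_pos hS0 _),
          one_div, Real.rpow_inv_rpow hS0.le (ne_of_gt hp0)]
        ring
    · -- u > 0 : core to (0, u) swapped
      have hS' : |(0:ℝ)| ^ p + |u| ^ p < S := by
        rw [abs_zero, Real.zero_rpow (ne_of_gt hp0)]
        linarith
      obtain ⟨a, b, ha, h1, h2⟩ := core_pair hp hu hS'
      exact ⟨b, a, fun h => ha h.2, by linarith, by linarith⟩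
  · obtain ⟨a, b, ha, h1, h2⟩ := core_pair hp hv hS
    exact ⟨a, b, fun h => ha h.1, h1, h2⟩

lemma lpDist_eq_iff (hp0 : 0 < p) {k : ℕ} (x y : Fin k → ℝ) {c : ℝ} (hc : 0 ≤ c) :
    lpDist p x y = c ↔ ∑ i, |x i - y i| ^ p = c ^ p := by
  have hT : 0 ≤ ∑ i, |x i - y i| ^ p :=
    Finset.sum_nonneg fun i _ => Real.rpow_nonneg (abs_nonneg _) _
  constructor
  · intro h
    have h2 := congrArg (fun t => t ^ p) h
    simp only [lpDist, one_div] at h2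
    rwa [Real.rpow_inv_rpow hT (ne_of_gt hp0)] at h2
  · intro h
    rw [lpDist, h, one_div, Real.rpow_rpow_inv hc (ne_of_gt hp0)]

lemma sum_split {k : ℕ} (F : Fin k → ℝ) {i0 i1 : Fin k} (h : i0 ≠ i1) :
    ∑ j, F j = F i0 + F i1 + ∑ j ∈ (Finset.univ.erase i0).erase i1, F j := by
  rw [← Finset.add_sum_erase _ F (Finset.mem_univ i0),
    ← Finset.add_sum_erase _ F (Finset.mem_erase.mpr ⟨h.symm, Finset.mem_univ i1⟩)]
  ring

/-- In a layer `L(n,m,p,ε)` with `n ≥ 2`: `‖x - y‖_p = 2` iff there is exactly one point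
`z` of the layer with `‖x - z‖_p = ‖y - z‖_p = 1`; in that case `z` is the midpoint. -/
theorem layer_dist_two_iff (n m : ℕ) (hn : 2 ≤ n) (hm : 1 ≤ m)
    (p : ℝ) (hp1 : 1 < p) (ε : ℝ) (hε : 0 < ε)
    (x y : Fin (n + m) → ℝ) (hx : x ∈ Layer n m ε) (hy : y ∈ Layer n m ε) :
    (lpDist p x y = 2 ↔
      ∃! z : Fin (n + m) → ℝ, z ∈ Layer n m ε ∧ lpDist p x z = 1 ∧ lpDist p y z = 1) ∧
    (lpDist p x y = 2 → ∀ z : Fin (n + m) → ℝ, z ∈ Layer n m ε →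
      lpDist p x z = 1 → lpDist p y z = 1 → z = (x + y) / 2) := by
  have hp0 : (0:ℝ) < p := by linarith
  have h2p : (0:ℝ) < 2 ^ p := Real.rpow_pos_of_pos (by norm_num) p
  have h2p' : (2:ℝ) ^ (p - 1) * 2 = 2 ^ p := by
    rw [Real.rpow_sub (by norm_num), Real.rpow_one]
    field_simp
  -- pointwise bound
  have hptwise : ∀ z : Fin (n + m) → ℝ, ∀ i, |x i - y i| ^ p ≤
      2 ^ (p - 1) * (|x i - z i| ^ p + |z i - y i| ^ p) := by
    intro z i
    have h := key_ineq hp1 (x i - z i) (z i - y i)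
    rwa [show x i - z i + (z i - y i) = x i - y i by ring] at h
  -- sum of rhs
  have hsumrhs : ∀ z : Fin (n + m) → ℝ, lpDist p x z = 1 → lpDist p y z = 1 →
      ∑ i, 2 ^ (p - 1) * (|x i - z i| ^ p + |z i - y i| ^ p) = 2 ^ p := by
    intro z h1 h2
    rw [lpDist_eq_iff hp0 _ _ zero_le_one, Real.one_rpow] at h1 h2
    have h2' : ∑ i, |z i - y i| ^ p = 1 := by
      rw [← h2]
      exact Finset.sum_congr rfl fun i _ => by rw [abs_sub_comm]
    rw [← Finset.mul_sum, Finset.sum_add_distrib, h1, h2']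
    rw [show (1:ℝ) + 1 = 2 by norm_num, h2p']
  -- uniqueness / midpoint
  have huniq : lpDist p x y = 2 → ∀ z : Fin (n + m) → ℝ,
      lpDist p x z = 1 → lpDist p y z = 1 → z = (x + y) / 2 := by
    intro hd z h1 h2
    have hd' := (lpDist_eq_iff hp0 x y (by norm_num : (0:ℝ) ≤ 2)).mp hd
    have hsum : ∑ i, |x i - y i| ^ p
        = ∑ i, 2 ^ (p - 1) * (|x i - z i| ^ p + |z i - y i| ^ p) := by
      rw [hd', hsumrhs z h1 h2]
    have heq := (Finset.sum_eq_sum_iff_of_le (fun i _ => hptwise z i)).mp hsum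
    funext i
    have h5 : x i - z i = z i - y i := by
      apply key_eq hp1
      have := heq i (Finset.mem_univ i)
      rwa [show x i - z i + (z i - y i) = x i - y i by ring]
    have : ((x + y) / 2) i = (x i + y i) / 2 := by
      simp [Pi.add_apply, Pi.div_apply]
    rw [this]
    linarith
  -- midpoint is a witness
  have hmid : lpDist p x y = 2 → ((x + y) / 2 ∈ Layer n m ε ∧
      lpDist p x ((x + y) / 2) = 1 ∧ lpDist p y ((x + y) / 2) = 1) := by
    intro hd
    have hd' := (lpDist_eq_iff hp0 x y (by norm_num : (0:ℝ) ≤ 2)).mp hd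
    have happ : ∀ i, ((x + y) / 2) i = (x i + y i) / 2 := by
      intro i; simp [Pi.add_apply, Pi.div_apply]
    refine ⟨?_, ?_, ?_⟩
    · intro i hi
      obtain ⟨ha1, ha2⟩ := hx i hi
      obtain ⟨hb1, hb2⟩ := hy i hi
      rw [happ i]
      exact ⟨by linarith, by linarith⟩
    · rw [lpDist_eq_iff hp0 _ _ zero_le_one, Real.one_rpow]
      calc ∑ i, |x i - ((x + y) / 2) i| ^ p
          = ∑ i, |x i - y i| ^ p / 2 ^ p := by
            refine Finset.sum_congr rfl fun i _ => ?_
            rw [happ i, show x i - (x i + y i) / 2 = (x i - y i) / 2 by ring,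
              abs_div, abs_two, Real.div_rpow (abs_nonneg _) (by norm_num)]
        _ = (∑ i, |x i - y i| ^ p) / 2 ^ p := by rw [Finset.sum_div]
        _ = 1 := by rw [hd']; field_simp
    · rw [lpDist_eq_iff hp0 _ _ zero_le_one, Real.one_rpow]
      calc ∑ i, |y i - ((x + y) / 2) i| ^ p
          = ∑ i, |x i - y i| ^ p / 2 ^ p := by
            refine Finset.sum_congr rfl fun i _ => ?_
            rw [happ i, show y i - (x i + y i) / 2 = -((x i - y i) / 2) by ring, abs_neg,
              abs_div, abs_two, Real.div_rpow (abs_nonneg _) (by norm_num)]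
        _ = (∑ i, |x i - y i| ^ p) / 2 ^ p := by rw [Finset.sum_div]
        _ = 1 := by rw [hd']; field_simp
  -- triangle bound
  have htri : ∀ z : Fin (n + m) → ℝ, lpDist p x z = 1 → lpDist p y z = 1 →
      lpDist p x y ≤ 2 := by
    intro z h1 h2
    have hb : ∑ i, |x i - y i| ^ p ≤ 2 ^ p := by
      calc ∑ i, |x i - y i| ^ p
          ≤ ∑ i, 2 ^ (p - 1) * (|x i - z i| ^ p + |z i - y i| ^ p) :=
            Finset.sum_le_sum fun i _ => hptwise z i
        _ = 2 ^ p := hsumrhs z h1 h2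
    have hT : 0 ≤ ∑ i, |x i - y i| ^ p :=
      Finset.sum_nonneg fun i _ => Real.rpow_nonneg (abs_nonneg _) _
    calc lpDist p x y = (∑ i, |x i - y i| ^ p) ^ (1/p) := rfl
      _ ≤ (2 ^ p) ^ (1/p) := Real.rpow_le_rpow hT hb (by positivity)
      _ = 2 := by rw [one_div, Real.rpow_rpow_inv (by norm_num) (ne_of_gt hp0)]
  -- two witnesses when distance < 2
  have htwo : lpDist p x y < 2 → ∃ z1 z2 : Fin (n + m) → ℝ, z1 ≠ z2 ∧
      (z1 ∈ Layer n m ε ∧ lpDist p x z1 = 1 ∧ lpDist p y z1 = 1) ∧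
      (z2 ∈ Layer n m ε ∧ lpDist p x z2 = 1 ∧ lpDist p y z2 = 1) := by
    intro hd
    have hT : 0 ≤ ∑ i, |x i - y i| ^ p :=
      Finset.sum_nonneg fun i _ => Real.rpow_nonneg (abs_nonneg _) _
    have hdnn : 0 ≤ lpDist p x y := Real.rpow_nonneg hT _
    have hTd : ∑ i, |x i - y i| ^ p = (lpDist p x y) ^ p :=
      (lpDist_eq_iff hp0 x y hdnn).mp rfl
    have hT2 : ∑ i, |x i - y i| ^ p < 2 ^ p := by
      rw [hTd]
      exact Real.rpow_lt_rpow hdnn hd hp0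
    have h0n : 0 < n + m := by omega
    have h1n : 1 < n + m := by omega
    set i0 : Fin (n + m) := ⟨0, by omega⟩ with hi0
    set i1 : Fin (n + m) := ⟨1, by omega⟩ with hi1
    have hne : i0 ≠ i1 := by
      intro h
      have := congrArg Fin.val h
      simp [hi0, hi1] at this
    set u := (x i0 - y i0) / 2 with hu
    set v := (x i1 - y i1) / 2 with hv
    set C := ∑ j ∈ (Finset.univ.erase i0).erase i1, |(x j - y j) / 2| ^ p with hC
    have hterm : ∀ j, |(x j - y j) / 2| ^ p = |x j - y j| ^ p / 2 ^ p := by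
      intro j; rw [abs_div, abs_two, Real.div_rpow (abs_nonneg _) (by norm_num)]
    have hCsplit : |u| ^ p + |v| ^ p + C = (∑ i, |x i - y i| ^ p) / 2 ^ p := by
      calc |u| ^ p + |v| ^ p + C = ∑ j, |(x j - y j) / 2| ^ p :=
            (sum_split (fun j => |(x j - y j) / 2| ^ p) hne).symm
        _ = ∑ j, |x j - y j| ^ p / 2 ^ p := Finset.sum_congr rfl fun j _ => hterm j
        _ = (∑ i, |x i - y i| ^ p) / 2 ^ p := by rw [Finset.sum_div]
    have hCS : |u| ^ p + |v| ^ p < 1 - C := by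
      have hq : (∑ i, |x i - y i| ^ p) / 2 ^ p < 1 := by
        rw [div_lt_one h2p]; exact hT2
      linarith
    obtain ⟨a, b, hab, hs1, hs2⟩ := exists_pair hp1 hCS
    set mid := fun j : Fin (n + m) => (x j + y j) / 2 with hmid'
    set z1 := fun j : Fin (n + m) =>
      if j = i0 then mid j + a else if j = i1 then mid j + b else mid j with hz1
    set z2 := fun j : Fin (n + m) =>
      if j = i0 then mid j - a else if j = i1 then mid j - b else mid j with hz2
    -- coordinate facts
    have hz1i0 : z1 i0 = mid i0 + a := by simp [hz1]
    have hz1i1 : z1 i1 = mid i1 + b := by simp [hz1, hne.symm]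
    have hz2i0 : z2 i0 = mid i0 - a := by simp [hz2]
    have hz2i1 : z2 i1 = mid i1 - b := by simp [hz2, hne.symm]
    have hz1rest : ∀ j, j ≠ i0 → j ≠ i1 → z1 j = mid j := by
      intro j hj0 hj1; simp [hz1, hj0, hj1]
    have hz2rest : ∀ j, j ≠ i0 → j ≠ i1 → z2 j = mid j := by
      intro j hj0 hj1; simp [hz2, hj0, hj1]
    -- generic distance computation
    have hdist : ∀ (w z : Fin (n + m) → ℝ), (∀ j, j ≠ i0 → j ≠ i1 → z j = mid j) →
        ∑ j, |w j - z j| ^ p = |w i0 - z i0| ^ p + |w i1 - z i1| ^ p +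
          ∑ j ∈ (Finset.univ.erase i0).erase i1, |w j - mid j| ^ p := by
      intro w z hrest
      rw [sum_split (fun j => |w j - z j| ^ p) hne]
      congr 1
      refine Finset.sum_congr rfl fun j hj => ?_
      rw [Finset.mem_erase] at hj
      have hj1 : j ≠ i1 := hj.1
      have hj0 : j ≠ i0 := (Finset.mem_erase.mp hj.2).1
      rw [hrest j hj0 hj1]
    -- rest sums for x and y
    have hrestx : ∑ j ∈ (Finset.univ.erase i0).erase i1, |x j - mid j| ^ p = C := by
      refine Finset.sum_congr rfl fun j _ => ?_
      rw [show x j - mid j = (x j - y j) / 2 by simp [hmid']; ring]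
    have hresty : ∑ j ∈ (Finset.univ.erase i0).erase i1, |y j - mid j| ^ p = C := by
      refine Finset.sum_congr rfl fun j _ => ?_
      rw [show y j - mid j = -((x j - y j) / 2) by simp [hmid']; ring, abs_neg]
    -- the four distances
    have hd11 : lpDist p x z1 = 1 := by
      rw [lpDist_eq_iff hp0 _ _ zero_le_one, Real.one_rpow,
        hdist x z1 hz1rest, hz1i0, hz1i1, hrestx,
        show x i0 - (mid i0 + a) = u - a by simp [hmid', hu]; ring,
        show x i1 - (mid i1 + b) = v - b by simp [hmid', hv]; ring]
      linarith
    have hd12 : lpDist p y z1 = 1 := by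
      rw [lpDist_eq_iff hp0 _ _ zero_le_one, Real.one_rpow,
        hdist y z1 hz1rest, hz1i0, hz1i1, hresty,
        show y i0 - (mid i0 + a) = -(u + a) by simp [hmid', hu]; ring,
        show y i1 - (mid i1 + b) = -(v + b) by simp [hmid', hv]; ring,
        abs_neg, abs_neg]
      linarith
    have hd21 : lpDist p x z2 = 1 := by
      rw [lpDist_eq_iff hp0 _ _ zero_le_one, Real.one_rpow,
        hdist x z2 hz2rest, hz2i0, hz2i1, hrestx,
        show x i0 - (mid i0 - a) = u + a by simp [hmid', hu]; ring,
        show x i1 - (mid i1 - b) = v + b by simp [hmid', hv]; ring]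
      linarith
    have hd22 : lpDist p y z2 = 1 := by
      rw [lpDist_eq_iff hp0 _ _ zero_le_one, Real.one_rpow,
        hdist y z2 hz2rest, hz2i0, hz2i1, hresty,
        show y i0 - (mid i0 - a) = -(u - a) by simp [hmid', hu]; ring,
        show y i1 - (mid i1 - b) = -(v - b) by simp [hmid', hv]; ring,
        abs_neg, abs_neg]
      linarith
    -- layer membership
    have hcoord : ∀ j : Fin (n + m), n ≤ (j : ℕ) → (j ≠ i0 ∧ j ≠ i1) := by
      intro j hj
      constructor <;> intro h <;> rw [h] at hj <;> simp [hi0, hi1] at hj <;> omega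
    have hmidL : ∀ j : Fin (n + m), n ≤ (j : ℕ) → mid j ∈ Set.Icc (0:ℝ) ε := by
      intro j hj
      obtain ⟨ha1, ha2⟩ := hx j hj
      obtain ⟨hb1, hb2⟩ := hy j hj
      exact ⟨by simp [hmid']; linarith, by simp [hmid']; linarith⟩
    have hL1 : z1 ∈ Layer n m ε := by
      intro j hj
      obtain ⟨hj0, hj1⟩ := hcoord j hj
      rw [hz1rest j hj0 hj1]
      exact hmidL j hj
    have hL2 : z2 ∈ Layer n m ε := by
      intro j hj
      obtain ⟨hj0, hj1⟩ := hcoord j hj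
      rw [hz2rest j hj0 hj1]
      exact hmidL j hj
    -- z1 ≠ z2
    have hzz : z1 ≠ z2 := by
      intro h
      apply hab
      constructor
      · have := congrFun h i0
        rw [hz1i0, hz2i0] at this
        linarith
      · have := congrFun h i1
        rw [hz1i1, hz2i1] at this
        linarith
    exact ⟨z1, z2, hzz, ⟨hL1, hd11, hd12⟩, ⟨hL2, hd21, hd22⟩⟩
  -- final packaging
  refine ⟨⟨?_, ?_⟩, fun hd z _ h1 h2 => huniq hd z h1 h2⟩
  · intro hd
    obtain ⟨hL, h1, h2⟩ := hmid hd
    exact ⟨(x + y) / 2, ⟨hL, h1, h2⟩, fun z ⟨_, hz1, hz2⟩ => huniq hd z hz1 hz2⟩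
  · intro hEx
    by_contra hd2
    rcases lt_or_gt_of_ne hd2 with hlt | hgt
    · obtain ⟨z1, z2, hzz, hw1, hw2⟩ := htwo hlt
      obtain ⟨z, _, huz⟩ := hEx
      exact hzz ((huz z1 hw1).trans (huz z2 hw2).symm)
    · obtain ⟨z, ⟨_, h1, h2⟩, _⟩ := hEx
      exact absurd (htri z h1 h2) (not_le.mpr hgt)
end
end

section
/- Let n ≥ 2, m ≥ 1, p ∈ (1,∞), ε₁, ε₂ > 0, and let f be an isomorphism of the unit distance graphs of L₁ = ℝⁿ × [0,ε₁]^m and L₂ = ℝⁿ × [0,ε₂]^m (with ℓ_p metric). Then for every k ∈ ℕ and x, y ∈ L₁, ||x - y||_p = k if and only if ||f(x) - f(y)||_p = k. -/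
noncomputable section

namespace LayerAux

open Finset Real

variable {p : ℝ}

lemma sum_rpow_nonneg {N : ℕ} (f : Fin N → ℝ) : 0 ≤ ∑ i, |f i| ^ p :=
  Finset.sum_nonneg fun i _ => Real.rpow_nonneg (abs_nonneg _) p

lemma lpDist_eq_iff (hp1 : 1 < p) {N : ℕ} {x y : Fin N → ℝ} {r : ℝ} (hr : 0 ≤ r) :
    lpDist p x y = r ↔ ∑ i, |x i - y i| ^ p = r ^ p := by
  have hp0 : p ≠ 0 := by linarith
  have hS : 0 ≤ ∑ i, |x i - y i| ^ p := sum_rpow_nonneg _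
  unfold lpDist
  rw [one_div]
  constructor
  · intro h
    rw [← h, Real.rpow_inv_rpow hS hp0]
  · intro h
    rw [h, Real.rpow_rpow_inv hr hp0]

lemma lpDist_nonneg (hp1 : 1 < p) {N : ℕ} (x y : Fin N → ℝ) : 0 ≤ lpDist p x y :=
  Real.rpow_nonneg (sum_rpow_nonneg _) _

lemma lpDist_comm {N : ℕ} (x y : Fin N → ℝ) : lpDist p x y = lpDist p y x := by
  unfold lpDist
  congr 1
  exact Finset.sum_congr rfl fun i _ => by rw [abs_sub_comm]

lemma lpDist_self (hp1 : 1 < p) {N : ℕ} (x : Fin N → ℝ) : lpDist p x x = 0 := by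
  rw [lpDist_eq_iff hp1 le_rfl, Real.zero_rpow (by linarith)]
  refine Finset.sum_eq_zero fun i _ => ?_
  simp [Real.zero_rpow (show p ≠ 0 by linarith)]

lemma lpDist_eq_zero_iff (hp1 : 1 < p) {N : ℕ} {x y : Fin N → ℝ} :
    lpDist p x y = 0 ↔ x = y := by
  have hp0 : p ≠ 0 := by linarith
  rw [lpDist_eq_iff hp1 le_rfl, Real.zero_rpow hp0]
  rw [Finset.sum_eq_zero_iff_of_nonneg (fun i _ => Real.rpow_nonneg (abs_nonneg _) p)]
  constructor
  · intro h
    funext i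
    have := h i (Finset.mem_univ i)
    have h2 : |x i - y i| = 0 := by
      by_contra hne
      exact hne ((Real.rpow_eq_zero (abs_nonneg _) hp0).mp this)
    have := abs_eq_zero.mp h2
    linarith
  · intro h
    subst h
    intro i _
    simp [Real.zero_rpow hp0]

lemma lpDist_triangle (hp1 : 1 < p) {N : ℕ} (x y z : Fin N → ℝ) :
    lpDist p x z ≤ lpDist p x y + lpDist p y z := by
  have := Real.Lp_add_le Finset.univ (fun i => x i - y i) (fun i => y i - z i) hp1.le
  unfold lpDist
  simpa [sub_add_sub_cancel] using this

lemma lpDist_ne (hp1 : 1 < p) {N : ℕ} {x y : Fin N → ℝ} (h : lpDist p x y = 1) : x ≠ y := by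
  intro he
  rw [he, lpDist_self hp1] at h
  norm_num at h





lemma key_scalar (hp1 : 1 < p) (u v : ℝ) :
    |u + v| ^ p ≤ 2 ^ (p - 1) * (|u| ^ p + |v| ^ p) := by
  have hp0 : (0:ℝ) < p := by linarith
  have habs : |u + v| ^ p ≤ (|u| + |v|) ^ p :=
    Real.rpow_le_rpow (abs_nonneg _) (abs_add_le u v) hp0.le
  have hconv := (strictConvexOn_rpow hp1).convexOn.2 (Set.mem_Ici.mpr (abs_nonneg u))
    (Set.mem_Ici.mpr (abs_nonneg v)) (by norm_num : (0:ℝ) ≤ 1/2) (by norm_num : (0:ℝ) ≤ 1/2)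
    (by norm_num)
  simp only [smul_eq_mul] at hconv
  have h2 : (|u| + |v|) ^ p = 2 ^ p * (1/2*|u| + 1/2*|v|) ^ p := by
    rw [← Real.mul_rpow (by norm_num) (by positivity)]
    ring_nf
  have h3 : (2:ℝ) ^ (p - 1) = 2 ^ p / 2 := by
    rw [Real.rpow_sub (by norm_num), Real.rpow_one]
  calc |u + v| ^ p ≤ (|u| + |v|) ^ p := habs
    _ = 2 ^ p * (1/2*|u| + 1/2*|v|) ^ p := h2
    _ ≤ 2 ^ p * (1/2 * |u| ^ p + 1/2 * |v| ^ p) := by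
        apply mul_le_mul_of_nonneg_left hconv (by positivity)
    _ = 2 ^ (p - 1) * (|u| ^ p + |v| ^ p) := by rw [h3]; ring

lemma key_scalar_strict (hp1 : 1 < p) {u v : ℝ} (huv : u ≠ v) :
    |u + v| ^ p < 2 ^ (p - 1) * (|u| ^ p + |v| ^ p) := by
  have hp0 : (0:ℝ) < p := by linarith
  have h3 : (2:ℝ) ^ (p - 1) = 2 ^ p / 2 := by
    rw [Real.rpow_sub (by norm_num), Real.rpow_one]
  by_cases hab : |u| = |v|
  · -- then u = -v, u + v = 0, and u ≠ 0
    rcases abs_eq_abs.mp hab with h | h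
    · exact absurd h huv
    · have hu0 : u ≠ 0 := by rintro rfl; simp at h; exact huv (by simp [h])
      have : u + v = 0 := by rw [h]; ring
      rw [this]
      simp only [abs_zero]
      rw [Real.zero_rpow (by linarith)]
      have : 0 < |u| ^ p := Real.rpow_pos_of_pos (abs_pos.mpr hu0) p
      have h2 : 0 < (2:ℝ) ^ (p-1) := Real.rpow_pos_of_pos (by norm_num) _
      nlinarith [Real.rpow_nonneg (abs_nonneg v) p]
  · have hconv := (strictConvexOn_rpow hp1).2 (Set.mem_Ici.mpr (abs_nonneg u))
      (Set.mem_Ici.mpr (abs_nonneg v)) hab (by norm_num : (0:ℝ) < 1/2)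
      (by norm_num : (0:ℝ) < 1/2) (by norm_num)
    simp only [smul_eq_mul] at hconv
    have habs : |u + v| ^ p ≤ (|u| + |v|) ^ p :=
      Real.rpow_le_rpow (abs_nonneg _) (abs_add_le u v) hp0.le
    have h2 : (|u| + |v|) ^ p = 2 ^ p * (1/2*|u| + 1/2*|v|) ^ p := by
      rw [← Real.mul_rpow (by norm_num) (by positivity)]
      ring_nf
    calc |u + v| ^ p ≤ (|u| + |v|) ^ p := habs
      _ = 2 ^ p * (1/2*|u| + 1/2*|v|) ^ p := h2
      _ < 2 ^ p * (1/2 * |u| ^ p + 1/2 * |v| ^ p) := by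
          apply mul_lt_mul_of_pos_left hconv (by positivity)
      _ = 2 ^ (p - 1) * (|u| ^ p + |v| ^ p) := by rw [h3]; ring



lemma midpoint_unique (hp1 : 1 < p) {N : ℕ} {a c b : Fin N → ℝ}
    (hac : lpDist p a c = 1) (hcb : lpDist p c b = 1) (hab : lpDist p a b = 2) :
    ∀ i, c i = (a i + b i) / 2 := by
  rw [lpDist_eq_iff hp1 (by norm_num)] at hac hcb hab
  rw [Real.one_rpow] at hac hcb
  -- set u i = c i - a i, v i = b i - c i
  have key : ∀ i ∈ Finset.univ, |a i - b i| ^ p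
      ≤ 2 ^ (p-1) * (|c i - a i| ^ p + |b i - c i| ^ p) := by
    intro i _
    have : |a i - b i| = |(c i - a i) + (b i - c i)| := by rw [abs_sub_comm]; ring_nf
    rw [this]
    exact key_scalar hp1 _ _
  by_contra hne
  push_neg at hne
  obtain ⟨j, hj⟩ := hne
  have hjne : c j - a j ≠ b j - c j := by intro h; apply hj; linarith
  have hstrict : |a j - b j| ^ p < 2 ^ (p-1) * (|c j - a j| ^ p + |b j - c j| ^ p) := by
    have : |a j - b j| = |(c j - a j) + (b j - c j)| := by rw [abs_sub_comm]; ring_nf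
    rw [this]
    exact key_scalar_strict hp1 hjne
  have hsum : ∑ i, |a i - b i| ^ p
      < ∑ i, 2 ^ (p-1) * (|c i - a i| ^ p + |b i - c i| ^ p) :=
    Finset.sum_lt_sum key ⟨j, Finset.mem_univ j, hstrict⟩
  have hrhs : ∑ i, 2 ^ (p-1) * (|c i - a i| ^ p + |b i - c i| ^ p) = 2 ^ p := by
    rw [← Finset.mul_sum]
    have h1 : ∑ i, (|c i - a i| ^ p + |b i - c i| ^ p)
        = (∑ i, |c i - a i| ^ p) + ∑ i, |b i - c i| ^ p := Finset.sum_add_distrib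
    have hca : ∑ i, |c i - a i| ^ p = 1 := by
      rw [← hac]; exact Finset.sum_congr rfl fun i _ => by rw [abs_sub_comm]
    have hbc : ∑ i, |b i - c i| ^ p = 1 := by
      rw [← hcb]; exact Finset.sum_congr rfl fun i _ => by rw [abs_sub_comm]
    rw [h1, hca, hbc]
    rw [Real.rpow_sub (by norm_num : (0:ℝ) < 2), Real.rpow_one]
    ring
  rw [hab, hrhs] at hsum
  exact lt_irrefl _ hsum

lemma lineMap_lpDist (hp1 : 1 < p) {N : ℕ} (x y : Fin N → ℝ) (s t : ℝ) :
    lpDist p (fun i => x i + s * (y i - x i)) (fun i => x i + t * (y i - x i))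
      = |s - t| * lpDist p x y := by
  have hp0 : p ≠ 0 := by linarith
  unfold lpDist
  have hterm : ∀ i : Fin N, |(x i + s * (y i - x i)) - (x i + t * (y i - x i))| ^ p
      = |s - t| ^ p * |x i - y i| ^ p := by
    intro i
    have h1 : (x i + s * (y i - x i)) - (x i + t * (y i - x i)) = (s - t) * -(x i - y i) := by
      ring
    rw [h1, abs_mul, abs_neg, Real.mul_rpow (abs_nonneg _) (abs_nonneg _)]
  rw [Finset.sum_congr rfl fun i _ => hterm i, ← Finset.mul_sum,
    Real.mul_rpow (Real.rpow_nonneg (abs_nonneg _) _) (sum_rpow_nonneg _),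
    one_div, Real.rpow_rpow_inv (abs_nonneg _) hp0]

section TwoDisk

variable {p : ℝ}

lemma cont_abs_rpow (hp1 : 1 < p) : Continuous fun t : ℝ => |t| ^ p :=
  continuous_abs.rpow_const fun _ => Or.inr (by linarith)

/-- Two circles of equal radius `ρ` in `ℝ²` (ℓ_p norm), centers `0` and `Δ`, with
`‖Δ‖ₚᵖ < 2ᵖρᵖ`, meet in at least two points. -/
lemma two_disk_points (hp1 : 1 < p) {ρ Δ₀ Δ₁ : ℝ} (hρ : 0 < ρ)
    (hd : |Δ₀| ^ p + |Δ₁| ^ p < 2 ^ p * ρ ^ p) :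
    ∃ x₁ y₁ x₂ y₂ : ℝ, (x₁ ≠ x₂ ∨ y₁ ≠ y₂) ∧
      |x₁| ^ p + |y₁| ^ p = ρ ^ p ∧ |x₁ - Δ₀| ^ p + |y₁ - Δ₁| ^ p = ρ ^ p ∧
      |x₂| ^ p + |y₂| ^ p = ρ ^ p ∧ |x₂ - Δ₀| ^ p + |y₂ - Δ₁| ^ p = ρ ^ p := by
  have hp0 : (0:ℝ) < p := by linarith
  have hpne : p ≠ 0 := hp0.ne'
  by_cases hΔ : Δ₀ = 0 ∧ Δ₁ = 0
  · refine ⟨ρ, 0, -ρ, 0, Or.inl (by intro h; linarith), ?_, ?_, ?_, ?_⟩ <;>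
      simp [hΔ.1, hΔ.2, abs_of_pos hρ, Real.zero_rpow hpne, abs_neg]
  · -- Δ ≠ 0
    have hz : (Complex.mk Δ₀ Δ₁) ≠ 0 := by
      intro h
      rw [Complex.ext_iff] at h
      exact hΔ ⟨h.1, h.2⟩
    set e : ℝ := ‖Complex.mk Δ₀ Δ₁‖ with he
    have he0 : 0 < e := by rw [he]; exact norm_pos_iff.mpr hz
    set S : ℝ := |Δ₀| ^ p + |Δ₁| ^ p with hSdef
    have hSpos : 0 < S := by
      rcases (not_and_or.mp hΔ) with h | h
      · have h1 : 0 < |Δ₀| ^ p := Real.rpow_pos_of_pos (abs_pos.mpr h) p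
        have h2 : 0 ≤ |Δ₁| ^ p := Real.rpow_nonneg (abs_nonneg _) p
        linarith
      · have h1 : 0 < |Δ₁| ^ p := Real.rpow_pos_of_pos (abs_pos.mpr h) p
        have h2 : 0 ≤ |Δ₀| ^ p := Real.rpow_nonneg (abs_nonneg _) p
        linarith
    set d : ℝ := S ^ (1/p) with hddef
    have hd0 : 0 < d := Real.rpow_pos_of_pos hSpos _
    have hdp : d ^ p = S := by
      rw [hddef, one_div, Real.rpow_inv_rpow hSpos.le hpne]
    have hd2ρ : d < 2 * ρ := by
      have h2 : (2 * ρ) ^ p = 2 ^ p * ρ ^ p := Real.mul_rpow (by norm_num) hρ.le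
      have : d ^ p < (2*ρ) ^ p := by rw [hdp, h2]; exact hd
      exact (Real.rpow_lt_rpow_iff hd0.le (by positivity) hp0).mp this
    -- the ℓ_p normalization factor
    set Np : ℝ → ℝ := fun θ => (|Real.cos θ| ^ p + |Real.sin θ| ^ p) ^ (1/p) with hNp
    have hNpPos : ∀ θ, 0 < Np θ := by
      intro θ
      have h1 : Real.cos θ ≠ 0 ∨ Real.sin θ ≠ 0 := by
        by_contra h
        push_neg at h
        have := Real.sin_sq_add_cos_sq θ
        rw [h.1, h.2] at this
        norm_num at this
      have hsum : 0 < |Real.cos θ| ^ p + |Real.sin θ| ^ p := by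
        rcases h1 with h | h
        · have h3 : 0 < |Real.cos θ| ^ p := Real.rpow_pos_of_pos (abs_pos.mpr h) p
          have h4 : 0 ≤ |Real.sin θ| ^ p := Real.rpow_nonneg (abs_nonneg _) p
          linarith
        · have h3 : 0 < |Real.sin θ| ^ p := Real.rpow_pos_of_pos (abs_pos.mpr h) p
          have h4 : 0 ≤ |Real.cos θ| ^ p := Real.rpow_nonneg (abs_nonneg _) p
          linarith
      exact Real.rpow_pos_of_pos hsum _
    have hNpp : ∀ θ, (Np θ) ^ p = |Real.cos θ| ^ p + |Real.sin θ| ^ p := by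
      intro θ
      have hsum : 0 ≤ |Real.cos θ| ^ p + |Real.sin θ| ^ p := by positivity
      rw [hNp]
      simp only
      rw [one_div, Real.rpow_inv_rpow hsum hpne]
    set u : ℝ → ℝ := fun θ => ρ * Real.cos θ / Np θ with hu
    set v : ℝ → ℝ := fun θ => ρ * Real.sin θ / Np θ with hv
    have honCircle : ∀ θ, |u θ| ^ p + |v θ| ^ p = ρ ^ p := by
      intro θ
      have hN := hNpPos θ
      have h1 : |u θ| ^ p = ρ ^ p * |Real.cos θ| ^ p / (Np θ) ^ p := by
        rw [hu]
        simp only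
        rw [abs_div, abs_mul, abs_of_pos hρ, abs_of_pos hN,
          Real.div_rpow (by positivity) hN.le, Real.mul_rpow hρ.le (abs_nonneg _)]
      have h2 : |v θ| ^ p = ρ ^ p * |Real.sin θ| ^ p / (Np θ) ^ p := by
        rw [hv]
        simp only
        rw [abs_div, abs_mul, abs_of_pos hρ, abs_of_pos hN,
          Real.div_rpow (by positivity) hN.le, Real.mul_rpow hρ.le (abs_nonneg _)]
      have hNppos : 0 < (Np θ) ^ p := Real.rpow_pos_of_pos hN p
      rw [h1, h2, ← add_div, ← mul_add, hNpp θ, mul_div_assoc,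
        div_self (by rw [hNpp θ] at hNppos; exact hNppos.ne'), mul_one]
    -- continuity of G
    set G : ℝ → ℝ := fun θ => |u θ - Δ₀| ^ p + |v θ - Δ₁| ^ p with hG
    have hcontNp : Continuous Np := by
      apply Continuous.rpow_const
      · exact ((cont_abs_rpow hp1).comp Real.continuous_cos).add
          ((cont_abs_rpow hp1).comp Real.continuous_sin)
      · intro x
        exact Or.inr (by positivity)
    have hcontu : Continuous u :=
      ((continuous_const.mul Real.continuous_cos).div hcontNp fun θ => (hNpPos θ).ne')
    have hcontv : Continuous v :=
      ((continuous_const.mul Real.continuous_sin).div hcontNp fun θ => (hNpPos θ).ne')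
    have hcontG : Continuous G :=
      ((cont_abs_rpow hp1).comp (hcontu.sub continuous_const)).add
        ((cont_abs_rpow hp1).comp (hcontv.sub continuous_const))
    -- values at θ₁ = arg Δ and θ₂ = θ₁ + π
    set θ₁ : ℝ := Complex.arg (Complex.mk Δ₀ Δ₁) with hθ₁
    have hcos1 : Real.cos θ₁ = Δ₀ / e := by
      rw [hθ₁, Complex.cos_arg hz]
    have hsin1 : Real.sin θ₁ = Δ₁ / e := by
      rw [hθ₁, Complex.sin_arg]
    have hNp1 : Np θ₁ = d / e := by
      have hep : 0 ≤ e ^ p := Real.rpow_nonneg he0.le p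
      have h1 : |Δ₀ / e| ^ p = |Δ₀| ^ p / e ^ p := by
        rw [abs_div, abs_of_pos he0, Real.div_rpow (abs_nonneg _) he0.le]
      have h2 : |Δ₁ / e| ^ p = |Δ₁| ^ p / e ^ p := by
        rw [abs_div, abs_of_pos he0, Real.div_rpow (abs_nonneg _) he0.le]
      rw [hNp]
      simp only
      rw [hcos1, hsin1, h1, h2, ← add_div, ← hSdef,
        Real.div_rpow hSpos.le hep, ← hddef]
      congr 1
      rw [one_div, Real.rpow_rpow_inv he0.le hpne]
    have hu1 : u θ₁ = ρ * Δ₀ / d := by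
      rw [hu]; simp only
      rw [hcos1, hNp1]
      field_simp
    have hv1 : v θ₁ = ρ * Δ₁ / d := by
      rw [hv]; simp only
      rw [hsin1, hNp1]
      field_simp
    have hGval : ∀ c : ℝ, |ρ * c / d - c| ^ p = (|ρ - d| ^ p / d ^ p) * |c| ^ p := by
      intro c
      have h1 : ρ * c / d - c = (ρ - d) * c / d := by field_simp
      rw [h1, abs_div, abs_mul, abs_of_pos hd0,
        Real.div_rpow (by positivity) hd0.le, Real.mul_rpow (abs_nonneg _) (abs_nonneg _)]
      ring
    have hG1 : G θ₁ = |ρ - d| ^ p := by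
      rw [hG]
      simp only
      rw [hu1, hv1, hGval Δ₀, hGval Δ₁, ← mul_add, ← hSdef, ← hdp]
      field_simp
    have hG1lt : G θ₁ < ρ ^ p := by
      rw [hG1]
      apply Real.rpow_lt_rpow (abs_nonneg _) _ hp0
      rw [abs_lt]
      constructor <;> linarith
    have hNp2 : Np (θ₁ + Real.pi) = Np θ₁ := by
      rw [hNp]; simp only [Real.cos_add_pi, Real.sin_add_pi, abs_neg]
    set θ₂ : ℝ := θ₁ + Real.pi with hθ₂
    have hu2 : u θ₂ = -u θ₁ := by
      rw [hu]; simp only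
      rw [hθ₂, Real.cos_add_pi, hNp2]
      ring
    have hv2 : v θ₂ = -v θ₁ := by
      rw [hv]; simp only
      rw [hθ₂, Real.sin_add_pi, hNp2]
      ring
    have hGval2 : ∀ c : ℝ, |-(ρ * c / d) - c| ^ p = ((ρ + d) ^ p / d ^ p) * |c| ^ p := by
      intro c
      have h1 : -(ρ * c / d) - c = -((ρ + d) * c / d) := by field_simp; ring
      rw [h1, abs_neg, abs_div, abs_mul, abs_of_pos hd0, abs_of_pos (by linarith : (0:ℝ) < ρ + d),
        Real.div_rpow (by positivity) hd0.le, Real.mul_rpow (by linarith) (abs_nonneg _)]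
      ring
    have hG2 : G θ₂ = (ρ + d) ^ p := by
      rw [hG]
      simp only
      rw [hu2, hv2, hu1, hv1, hGval2 Δ₀, hGval2 Δ₁, ← mul_add, ← hSdef, ← hdp]
      field_simp
    have hG2gt : ρ ^ p < G θ₂ := by
      rw [hG2]
      exact Real.rpow_lt_rpow hρ.le (by linarith) hp0
    have hπ : 0 < Real.pi := Real.pi_pos
    -- first root in (θ₁, θ₂)
    obtain ⟨θa, hθa, hGa⟩ : ∃ θa ∈ Set.Ioo θ₁ θ₂, G θa = ρ ^ p := by
      have := intermediate_value_Ioo (by linarith : θ₁ ≤ θ₂) hcontG.continuousOn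
      obtain ⟨θa, h1, h2⟩ := this ⟨hG1lt, hG2gt⟩
      exact ⟨θa, h1, h2⟩
    -- second root in (θ₂, θ₁ + 2π)
    have hG3 : G (θ₁ + 2 * Real.pi) = G θ₁ := by
      rw [hG]
      simp only [hu, hv, hNp, Real.cos_add_two_pi, Real.sin_add_two_pi]
    obtain ⟨θb, hθb, hGb⟩ : ∃ θb ∈ Set.Ioo θ₂ (θ₁ + 2 * Real.pi), G θb = ρ ^ p := by
      have := intermediate_value_Ioo' (by rw [hθ₂]; linarith : θ₂ ≤ θ₁ + 2 * Real.pi)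
        hcontG.continuousOn
      rw [hG3] at this
      obtain ⟨θb, h1, h2⟩ := this ⟨hG1lt, hG2gt⟩
      exact ⟨θb, h1, h2⟩
    -- the two solutions are distinct
    refine ⟨u θa, v θa, u θb, v θb, ?_, ?_, ?_, ?_, ?_⟩
    · -- distinctness
      by_contra hcon
      push_neg at hcon
      obtain ⟨hueq, hveq⟩ := hcon
      have hNa := hNpPos θa
      have hNb := hNpPos θb
      have hueq' : ρ * Real.cos θa / Np θa = ρ * Real.cos θb / Np θb := by
        rw [hu] at hueq; exact hueq
      have hveq' : ρ * Real.sin θa / Np θa = ρ * Real.sin θb / Np θb := by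
        rw [hv] at hveq; exact hveq
      rw [div_eq_div_iff hNa.ne' hNb.ne'] at hueq' hveq'
      clear hG1 hG2 hG3 hGa hGb hG1lt hG2gt honCircle hNpp hu1 hv1 hu2 hv2 hNp1 hNp2
      clear hGval hGval2 hueq hveq hcontG hcontu hcontv hcontNp hNpPos hd hdp hd2ρ
      clear hG hu hv
      clear_value G u v
      clear G u v
      clear hNp hddef hSdef he
      clear_value Np d S e
      clear hd0 hSpos he0 hcos1 hsin1
      clear d S e
      -- squares
      have hsq : (ρ * Real.cos θa * Np θb) ^ 2 + (ρ * Real.sin θa * Np θb) ^ 2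
          = (ρ * Real.cos θb * Np θa) ^ 2 + (ρ * Real.sin θb * Np θa) ^ 2 := by
        rw [hueq', hveq']
      have e1 := Real.sin_sq_add_cos_sq θa
      have e2 := Real.sin_sq_add_cos_sq θb
      have hsqq : (ρ * Np θb) ^ 2 = (ρ * Np θa) ^ 2 := by
        linear_combination hsq - (ρ * Np θb)^2 * e1 + (ρ * Np θa)^2 * e2
      have hfac : (Np θb - Np θa) * ((Np θb + Np θa) * ρ ^ 2) = 0 := by
        linear_combination hsqq
      have hNab : Np θb = Np θa := by
        rcases mul_eq_zero.mp hfac with h | h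
        · linarith
        · exfalso
          have : 0 < (Np θb + Np θa) * ρ ^ 2 := by positivity
          linarith
      rw [hNab] at hueq' hveq'
      have hca : Real.cos θa = Real.cos θb := by
        have h1 := mul_right_cancel₀ hNa.ne' hueq'
        have h2 := mul_left_cancel₀ hρ.ne' h1
        exact h2
      have hsa : Real.sin θa = Real.sin θb := by
        have h1 := mul_right_cancel₀ hNa.ne' hveq'
        have h2 := mul_left_cancel₀ hρ.ne' h1
        exact h2
      -- hence θa ≡ θb mod 2π
      have hexp : Complex.exp (θa * Complex.I) = Complex.exp (θb * Complex.I) := by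
        rw [Complex.exp_mul_I, Complex.exp_mul_I, ← Complex.ofReal_cos, ← Complex.ofReal_sin,
          ← Complex.ofReal_cos, ← Complex.ofReal_sin, hca, hsa]
      obtain ⟨k, hk⟩ := Complex.exp_eq_exp_iff_exists_int.mp hexp
      have hk2 : (θa : ℂ) = θb + k * (2 * Real.pi) := by
        have h5 : ((θa : ℂ) - θb - k * (2 * Real.pi)) * Complex.I = 0 := by
          rw [sub_mul, sub_mul, hk]
          push_cast
          ring
        rcases mul_eq_zero.mp h5 with h | h
        · linear_combination h
        · exact absurd h Complex.I_ne_zero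
      have hk3 : θa = θb + k * (2 * Real.pi) := by exact_mod_cast hk2
      have hlow : -(2 * Real.pi) < θa - θb := by
        obtain ⟨h1, h2⟩ := hθa
        obtain ⟨h3, h4⟩ := hθb
        rw [hθ₂] at h2 h3
        linarith
      have hhigh : θa - θb < 0 := by
        obtain ⟨h1, h2⟩ := hθa
        obtain ⟨h3, h4⟩ := hθb
        linarith
      have hba : (k : ℝ) * (2 * Real.pi) = θa - θb := by linarith
      have hkr1 : (-1 : ℝ) < (k : ℝ) := by
        apply (mul_lt_mul_iff_of_pos_right (by linarith : (0:ℝ) < 2 * Real.pi)).mp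
        rw [hba]; linarith
      have hkr2 : (k : ℝ) < 0 := by
        apply (mul_lt_mul_iff_of_pos_right (by linarith : (0:ℝ) < 2 * Real.pi)).mp
        rw [hba]; linarith
      have hki1 : (-1 : ℤ) < k := by exact_mod_cast hkr1
      have hki2 : k < 0 := by exact_mod_cast hkr2
      omega
    · exact honCircle θa
    · exact hGa
    · exact honCircle θb
    · exact hGb

end TwoDisk

section LayerLemmas

variable {p : ℝ} {n m : ℕ} {ε : ℝ}

lemma sum_split (hn : 2 ≤ n) (g : Fin (n + m) → ℝ) :
    ∑ i, g i = g ⟨0, by omega⟩ + g ⟨1, by omega⟩ +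
      ∑ i ∈ (Finset.univ.erase ⟨0, by omega⟩).erase ⟨1, by omega⟩, g i := by
  set i0 : Fin (n+m) := ⟨0, by omega⟩
  set i1 : Fin (n+m) := ⟨1, by omega⟩
  have h01 : i1 ≠ i0 := by
    intro h
    have := Fin.mk.injEq 1 (by omega : 1 < n + m) 0 (by omega : 0 < n + m)
    simp [i0, i1, Fin.ext_iff] at h
  rw [← Finset.add_sum_erase _ g (Finset.mem_univ i0),
    ← Finset.add_sum_erase _ g (Finset.mem_erase.mpr ⟨h01, Finset.mem_univ i1⟩)]
  ring

lemma mem_layer_combo {a b : Fin (n + m) → ℝ} (ha : a ∈ Layer n m ε) (hb : b ∈ Layer n m ε)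
    {t : ℝ} (ht0 : 0 ≤ t) (ht1 : t ≤ 1) :
    (fun i => a i + t * (b i - a i)) ∈ Layer n m ε := by
  intro i hi
  obtain ⟨ha0, ha1⟩ := ha i hi
  obtain ⟨hb0, hb1⟩ := hb i hi
  constructor
  · show 0 ≤ a i + t * (b i - a i)
    nlinarith
  · show a i + t * (b i - a i) ≤ ε
    nlinarith

lemma midpoint_mem_layer {a b : Fin (n + m) → ℝ} (ha : a ∈ Layer n m ε) (hb : b ∈ Layer n m ε) :
    (fun i => (a i + b i) / 2) ∈ Layer n m ε := by
  intro i hi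
  obtain ⟨ha0, ha1⟩ := ha i hi
  obtain ⟨hb0, hb1⟩ := hb i hi
  constructor
  · linarith
  · linarith

lemma abs_half_rpow (hp1 : 1 < p) (x : ℝ) : |x / 2| ^ p = |x| ^ p / 2 ^ p := by
  rw [abs_div, Real.div_rpow (abs_nonneg _) (by norm_num : (0:ℝ) ≤ |2|)]
  norm_num

lemma midpoint_dists (hp1 : 1 < p) {N : ℕ} {a b : Fin N → ℝ} (hab : lpDist p a b = 2) :
    lpDist p a (fun i => (a i + b i) / 2) = 1 ∧ lpDist p (fun i => (a i + b i) / 2) b = 1 := by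
  have h2 : (0:ℝ) ≤ 2 := by norm_num
  rw [lpDist_eq_iff hp1 h2] at hab
  have h2p : (0:ℝ) < 2 ^ p := Real.rpow_pos_of_pos (by norm_num) p
  constructor
  · rw [lpDist_eq_iff hp1 (by norm_num : (0:ℝ) ≤ 1), Real.one_rpow]
    have : ∀ i, |a i - (a i + b i) / 2| ^ p = |a i - b i| ^ p / 2 ^ p := by
      intro i
      have h : a i - (a i + b i) / 2 = (a i - b i) / 2 := by ring
      rw [h, abs_half_rpow hp1]
    rw [Finset.sum_congr rfl fun i _ => this i, ← Finset.sum_div, hab, div_self h2p.ne']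
  · rw [lpDist_eq_iff hp1 (by norm_num : (0:ℝ) ≤ 1), Real.one_rpow]
    have : ∀ i, |(a i + b i) / 2 - b i| ^ p = |a i - b i| ^ p / 2 ^ p := by
      intro i
      have h : (a i + b i) / 2 - b i = (a i - b i) / 2 := by ring
      rw [h, abs_half_rpow hp1]
    rw [Finset.sum_congr rfl fun i _ => this i, ← Finset.sum_div, hab, div_self h2p.ne']

/-- If two layer points are at distance `< 2`, they have two distinct common
"unit-distance" points in the layer. -/
lemma exists_two_common (hp1 : 1 < p) (hn : 2 ≤ n) {a b : Fin (n + m) → ℝ}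
    (ha : a ∈ Layer n m ε) (hb : b ∈ Layer n m ε) (hab : lpDist p a b < 2) :
    ∃ c₁ c₂ : Fin (n + m) → ℝ, c₁ ∈ Layer n m ε ∧ c₂ ∈ Layer n m ε ∧ c₁ ≠ c₂ ∧
      lpDist p a c₁ = 1 ∧ lpDist p c₁ b = 1 ∧ lpDist p a c₂ = 1 ∧ lpDist p c₂ b = 1 := by
  have hp0 : (0:ℝ) < p := by linarith
  have hpne : p ≠ 0 := hp0.ne'
  have h2p : (0:ℝ) < 2 ^ p := Real.rpow_pos_of_pos (by norm_num) p
  set i0 : Fin (n+m) := ⟨0, by omega⟩ with hi0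
  set i1 : Fin (n+m) := ⟨1, by omega⟩ with hi1
  set rest : Finset (Fin (n+m)) := (Finset.univ.erase i0).erase i1 with hrest
  set S : ℝ := ∑ i, |a i - b i| ^ p with hS
  have hS2p : S < 2 ^ p := by
    have hDnn := lpDist_nonneg hp1 a b
    have : lpDist p a b ^ p < 2 ^ p := Real.rpow_lt_rpow hDnn hab hp0
    have hSd : lpDist p a b ^ p = S := by
      rw [hS]
      unfold lpDist
      rw [one_div, Real.rpow_inv_rpow (sum_rpow_nonneg _) hpne]
    linarith [hSd ▸ this]
  set C : ℝ := ∑ i ∈ rest, |(a i - b i)/2| ^ p with hC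
  have hCnn : 0 ≤ C := Finset.sum_nonneg fun i _ => Real.rpow_nonneg (abs_nonneg _) _
  have hClt : C < 1 := by
    have h1 : C ≤ ∑ i, |(a i - b i)/2| ^ p :=
      Finset.sum_le_sum_of_subset_of_nonneg (Finset.subset_univ _)
        (fun i _ _ => Real.rpow_nonneg (abs_nonneg _) _)
    have h2 : ∑ i, |(a i - b i)/2| ^ p = S / 2 ^ p := by
      rw [Finset.sum_congr rfl fun i _ => abs_half_rpow hp1 _, hS, Finset.sum_div]
    rw [h2] at h1
    have : S / 2 ^ p < 1 := (div_lt_one h2p).mpr hS2p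
    linarith
  set ρ : ℝ := (1 - C) ^ (1/p) with hρdef
  have hρ : 0 < ρ := Real.rpow_pos_of_pos (by linarith) _
  have hρp : ρ ^ p = 1 - C := by
    rw [hρdef, one_div, Real.rpow_inv_rpow (by linarith) hpne]
  set Δ₀ : ℝ := b i0 - a i0 with hΔ₀
  set Δ₁ : ℝ := b i1 - a i1 with hΔ₁
  have hrestsum : ∑ i ∈ rest, |a i - b i| ^ p = 2 ^ p * C := by
    rw [hC, Finset.mul_sum]
    refine Finset.sum_congr rfl fun i _ => ?_
    rw [abs_half_rpow hp1]
    field_simp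
  have hsplitS : S = |Δ₀| ^ p + |Δ₁| ^ p + 2 ^ p * C := by
    rw [hS, sum_split hn (fun i => |a i - b i| ^ p)]
    rw [← hrestsum]
    congr 2
    · rw [hΔ₀, abs_sub_comm]
    · rw [hΔ₁, abs_sub_comm]
  have hd : |Δ₀| ^ p + |Δ₁| ^ p < 2 ^ p * ρ ^ p := by
    rw [hρp]
    have : 2 ^ p * (1 - C) = 2 ^ p - 2 ^ p * C := by ring
    rw [this]
    linarith
  obtain ⟨x₁, y₁, x₂, y₂, hxy, hc1a, hc1b, hc2a, hc2b⟩ := two_disk_points hp1 hρ hd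
  -- build the two common neighbours
  have hbuild : ∀ x y : ℝ, |x| ^ p + |y| ^ p = ρ ^ p → |x - Δ₀| ^ p + |y - Δ₁| ^ p = ρ ^ p →
      (fun i => if i = i0 then a i0 + x else if i = i1 then a i1 + y else (a i + b i)/2)
        ∈ Layer n m ε ∧
      lpDist p a (fun i => if i = i0 then a i0 + x else if i = i1 then a i1 + y
        else (a i + b i)/2) = 1 ∧
      lpDist p (fun i => if i = i0 then a i0 + x else if i = i1 then a i1 + y
        else (a i + b i)/2) b = 1 := by
    intro x y hxa hxb
    set c : Fin (n+m) → ℝ :=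
      fun i => if i = i0 then a i0 + x else if i = i1 then a i1 + y else (a i + b i)/2 with hc'
    have hne01 : i0 ≠ i1 := by simp [hi0, hi1, Fin.ext_iff]
    have hci0 : c i0 = a i0 + x := by simp [hc']
    have hci1 : c i1 = a i1 + y := by simp [hc', hne01.symm]
    have hcrest : ∀ i ∈ rest, c i = (a i + b i)/2 := by
      intro i hi
      rw [hrest] at hi
      have h1 := Finset.ne_of_mem_erase hi
      have h2 := Finset.ne_of_mem_erase (Finset.mem_of_mem_erase hi)
      simp [hc', h1, h2]
    refine ⟨?_, ?_, ?_⟩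
    · -- layer membership
      intro i hi
      have hii0 : i ≠ i0 := by
        intro h
        rw [h] at hi
        simp [hi0] at hi
        omega
      have hii1 : i ≠ i1 := by
        intro h
        rw [h] at hi
        simp [hi1] at hi
        omega
      have : c i = (a i + b i)/2 := by simp [hc', hii0, hii1]
      rw [this]
      obtain ⟨ha0, ha1⟩ := ha i hi
      obtain ⟨hb0, hb1⟩ := hb i hi
      constructor <;> [linarith; linarith]
    · rw [lpDist_eq_iff hp1 (by norm_num : (0:ℝ) ≤ 1), Real.one_rpow,
        sum_split hn (fun i => |a i - c i| ^ p)]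
      have e0 : |a i0 - c i0| ^ p = |x| ^ p := by rw [hci0]; congr 1; rw [abs_sub_comm]; simp
      have e1 : |a i1 - c i1| ^ p = |y| ^ p := by rw [hci1]; congr 1; rw [abs_sub_comm]; simp
      have er : ∑ i ∈ rest, |a i - c i| ^ p = C := by
        rw [hC]
        refine Finset.sum_congr rfl fun i hi => ?_
        rw [hcrest i hi]
        congr 1
        ring_nf
      rw [e0, e1, er, hxa, hρp]
      ring
    · rw [lpDist_eq_iff hp1 (by norm_num : (0:ℝ) ≤ 1), Real.one_rpow,
        sum_split hn (fun i => |c i - b i| ^ p)]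
      have e0 : |c i0 - b i0| ^ p = |x - Δ₀| ^ p := by
        rw [hci0]; congr 1; rw [hΔ₀]; ring_nf
      have e1 : |c i1 - b i1| ^ p = |y - Δ₁| ^ p := by
        rw [hci1]; congr 1; rw [hΔ₁]; ring_nf
      have er : ∑ i ∈ rest, |c i - b i| ^ p = C := by
        rw [hC]
        refine Finset.sum_congr rfl fun i hi => ?_
        rw [hcrest i hi]
        congr 1
        ring_nf
      rw [e0, e1, er, hxb, hρp]
      ring
  obtain ⟨hm1, hd1a, hd1b⟩ := hbuild x₁ y₁ hc1a hc1b
  obtain ⟨hm2, hd2a, hd2b⟩ := hbuild x₂ y₂ hc2a hc2b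
  refine ⟨_, _, hm1, hm2, ?_, hd1a, hd1b, hd2a, hd2b⟩
  intro h
  have hne01 : i0 ≠ i1 := by simp [hi0, hi1, Fin.ext_iff]
  rcases hxy with hx | hy
  · have := congrFun h i0
    simp at this
    exact hx (by linarith)
  · have := congrFun h i1
    simp [hne01.symm] at this
    exact hy (by linarith)

end LayerLemmas

section Graph

variable {p ε : ℝ} {n m : ℕ}

lemma ne_of_dist_one (hp1 : 1 < p) {x y : ↥(Layer n m ε)} (h : lpDist p x.1 y.1 = 1) :
    x ≠ y := fun he => (lpDist_ne hp1 h) (by rw [he])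

/-- `a` and `b` have a unique common neighbour. -/
def ExU (n m : ℕ) (p ε : ℝ) (a b : ↥(Layer n m ε)) : Prop :=
  ∃! c : ↥(Layer n m ε), (layerGraph n m p ε).Adj a c ∧ (layerGraph n m p ε).Adj c b

lemma layer_adj (hp1 : 1 < p) {x y : ↥(Layer n m ε)} (h : lpDist p x.1 y.1 = 1) :
    (layerGraph n m p ε).Adj x y := ⟨ne_of_dist_one hp1 h, h⟩

lemma layer_adj_dist {x y : ↥(Layer n m ε)} (h : (layerGraph n m p ε).Adj x y) :
    lpDist p x.1 y.1 = 1 := h.2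

lemma char2 (hp1 : 1 < p) (hn : 2 ≤ n) (a b : ↥(Layer n m ε)) :
    lpDist p a.1 b.1 = 2 ↔ ExU n m p ε a b := by
  constructor
  · intro hab
    obtain ⟨h1, h2⟩ := midpoint_dists hp1 hab
    set mp : ↥(Layer n m ε) := ⟨fun i => (a.1 i + b.1 i)/2, midpoint_mem_layer a.2 b.2⟩
      with hmp
    have h1' : lpDist p a.1 mp.1 = 1 := h1
    have h2' : lpDist p mp.1 b.1 = 1 := h2
    refine ⟨mp, ⟨layer_adj hp1 h1', layer_adj hp1 h2'⟩, ?_⟩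
    intro c hc
    have hd1 : lpDist p a.1 c.1 = 1 := layer_adj_dist hc.1
    have hd2 : lpDist p c.1 b.1 = 1 := layer_adj_dist hc.2
    have := midpoint_unique hp1 hd1 hd2 hab
    exact Subtype.ext (funext this)
  · rintro ⟨c, ⟨hc1, hc2⟩, huniq⟩
    have hd1 : lpDist p a.1 c.1 = 1 := layer_adj_dist hc1
    have hd2 : lpDist p c.1 b.1 = 1 := layer_adj_dist hc2
    have hle : lpDist p a.1 b.1 ≤ 2 := by
      have := lpDist_triangle hp1 a.1 c.1 b.1
      rw [hd1, hd2] at this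
      linarith
    rcases eq_or_lt_of_le hle with h | h
    · exact h
    · exfalso
      obtain ⟨c₁, c₂, hm1, hm2, hne, h1a, h1b, h2a, h2b⟩ :=
        exists_two_common hp1 hn a.2 b.2 h
      set w₁ : ↥(Layer n m ε) := ⟨c₁, hm1⟩ with hw₁
      set w₂ : ↥(Layer n m ε) := ⟨c₂, hm2⟩ with hw₂
      have h1a' : lpDist p a.1 w₁.1 = 1 := h1a
      have h1b' : lpDist p w₁.1 b.1 = 1 := h1b
      have h2a' : lpDist p a.1 w₂.1 = 1 := h2a
      have h2b' : lpDist p w₂.1 b.1 = 1 := h2b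
      have e1 : w₁ = c := huniq _ ⟨layer_adj hp1 h1a', layer_adj hp1 h1b'⟩
      have e2 : w₂ = c := huniq _ ⟨layer_adj hp1 h2a', layer_adj hp1 h2b'⟩
      apply hne
      have := e1.trans e2.symm
      exact congrArg Subtype.val this

/-- A rigid chain of length `k` between `x` and `y`. -/
def IsChn (n m : ℕ) (p ε : ℝ) (k : ℕ) (x y : ↥(Layer n m ε)) : Prop :=
  ∃ z : ℕ → ↥(Layer n m ε), z 0 = x ∧ z k = y ∧
    (∀ i, i < k → (layerGraph n m p ε).Adj (z i) (z (i+1))) ∧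
    (∀ i, i + 2 ≤ k → ExU n m p ε (z i) (z (i+2)))

lemma chain_iff (hp1 : 1 < p) (hn : 2 ≤ n) (k : ℕ) (x y : ↥(Layer n m ε)) :
    IsChn n m p ε k x y ↔ lpDist p x.1 y.1 = (k : ℝ) := by
  have hp0 : (0:ℝ) < p := by linarith
  have hpne : p ≠ 0 := hp0.ne'
  constructor
  · rintro ⟨z, hz0, hzk, hadj, hexu⟩
    rcases Nat.eq_zero_or_pos k with rfl | hk
    · subst hz0
      subst hzk
      simpa using lpDist_self hp1 (z 0).1
    · set v : Fin (n+m) → ℝ := fun c => (z 1).1 c - (z 0).1 c with hv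
      have hstep : ∀ i, i + 1 ≤ k → ∀ c, (z (i+1)).1 c = (z i).1 c + v c := by
        intro i
        induction i with
        | zero => intro _ c; simp [hv]
        | succ j ih =>
          intro hj c
          have hexj := hexu j (by omega)
          have hd2 : lpDist p (z j).1 (z (j+2)).1 = 2 := (char2 hp1 hn _ _).mpr hexj
          have hd1 : lpDist p (z j).1 (z (j+1)).1 = 1 := (hadj j (by omega)).2
          have hd1' : lpDist p (z (j+1)).1 (z (j+2)).1 = 1 := (hadj (j+1) (by omega)).2
          have hmid := midpoint_unique hp1 hd1 hd1' hd2 c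
          have hjc := ih (by omega) c
          show (z (j+2)).1 c = (z (j+1)).1 c + v c
          linarith
      have hall : ∀ i, i ≤ k → ∀ c, (z i).1 c = x.1 c + (i:ℝ) * v c := by
        intro i
        induction i with
        | zero => intro _ c; rw [hz0]; simp
        | succ j ih =>
          intro hj c
          have h1 := hstep j (by omega) c
          have h2 := ih (by omega) c
          rw [h1, h2]
          push_cast
          ring
      have hyc : ∀ c, y.1 c = x.1 c + (k:ℝ) * v c := by
        intro c
        rw [← hzk]
        exact hall k le_rfl c
      have hv1 : ∑ c, |v c| ^ p = 1 := by
        have hd1 : lpDist p (z 0).1 (z 1).1 = 1 := (hadj 0 hk).2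
        rw [lpDist_eq_iff hp1 (by norm_num : (0:ℝ) ≤ 1), Real.one_rpow] at hd1
        rw [← hd1]
        exact Finset.sum_congr rfl fun c _ => by rw [hv]; simp [abs_sub_comm]
      rw [lpDist_eq_iff hp1 (Nat.cast_nonneg k)]
      have : ∀ c, |x.1 c - y.1 c| ^ p = (k:ℝ) ^ p * |v c| ^ p := by
        intro c
        have h1 : x.1 c - y.1 c = -((k:ℝ) * v c) := by rw [hyc c]; ring
        rw [h1, abs_neg, abs_mul, abs_of_nonneg (Nat.cast_nonneg k : (0:ℝ) ≤ (k:ℝ)),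
          Real.mul_rpow (Nat.cast_nonneg k) (abs_nonneg _)]
      rw [Finset.sum_congr rfl fun c _ => this c, ← Finset.mul_sum, hv1, mul_one]
  · intro hxy
    rcases Nat.eq_zero_or_pos k with rfl | hk
    · have : x = y := by
        apply Subtype.ext
        apply (lpDist_eq_zero_iff hp1).mp
        simpa using hxy
      subst this
      exact ⟨fun _ => x, rfl, rfl, fun i hi => absurd hi (by omega), fun i hi =>
        absurd hi (by omega)⟩
    · have hK0 : ((k:ℝ)) ≠ 0 := Nat.cast_ne_zero.mpr (by omega)
      have hKpos : (0:ℝ) < (k:ℝ) := by exact_mod_cast hk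
      set t : ℕ → ℝ := fun i => ((min i k : ℕ) : ℝ) / k with ht
      have ht0 : ∀ i, 0 ≤ t i := fun i => by positivity
      have ht1 : ∀ i, t i ≤ 1 := by
        intro i
        rw [ht]
        simp only
        rw [div_le_one hKpos]
        exact_mod_cast Nat.min_le_right i k
      have hteq : ∀ i, i ≤ k → t i = (i:ℝ) / k := by
        intro i hi
        rw [ht]
        simp only
        rw [min_eq_left hi]
      set z : ℕ → ↥(Layer n m ε) := fun i =>
        ⟨fun c => x.1 c + t i * (y.1 c - x.1 c), mem_layer_combo x.2 y.2 (ht0 i) (ht1 i)⟩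
        with hz
      have hdist : ∀ i j : ℕ, lpDist p (z i).1 (z j).1 = |t i - t j| * (k:ℝ) := by
        intro i j
        have := lineMap_lpDist hp1 x.1 y.1 (t i) (t j)
        rw [hxy] at this
        exact this
      have hdiff : ∀ i d : ℕ, i + d ≤ k → |t (i + d) - t i| = (d : ℝ) / k := by
        intro i d hid
        rw [hteq (i+d) hid, hteq i (by omega)]
        rw [abs_of_nonneg]
        · push_cast
          field_simp
          ring
        · have h2 : ((i+d:ℕ):ℝ)/k - (i:ℝ)/k = (d:ℝ)/k := by push_cast; ring
          rw [h2]
          positivity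
      refine ⟨z, ?_, ?_, ?_, ?_⟩
      · apply Subtype.ext
        funext c
        show x.1 c + t 0 * (y.1 c - x.1 c) = x.1 c
        rw [hteq 0 (by omega)]
        simp
      · apply Subtype.ext
        funext c
        show x.1 c + t k * (y.1 c - x.1 c) = y.1 c
        rw [hteq k le_rfl, div_self hK0]
        ring
      · intro i hi
        have hd : lpDist p (z i).1 (z (i+1)).1 = 1 := by
          rw [hdist i (i+1), abs_sub_comm, hdiff i 1 (by omega)]
          push_cast
          field_simp
        exact ⟨ne_of_dist_one hp1 hd, hd⟩
      · intro i hi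
        apply (char2 hp1 hn _ _).mp
        rw [hdist i (i+2), abs_sub_comm, hdiff i 2 (by omega)]
        push_cast
        field_simp

lemma chain_map {ε₁ ε₂ : ℝ} (f : layerGraph n m p ε₁ ≃g layerGraph n m p ε₂)
    {k : ℕ} {x y : ↥(Layer n m ε₁)} (h : IsChn n m p ε₁ k x y) :
    IsChn n m p ε₂ k (f x) (f y) := by
  obtain ⟨z, h0, hk, hadj, hexu⟩ := h
  refine ⟨fun i => f (z i), congrArg f h0, congrArg f hk,
    fun i hi => f.map_adj_iff.mpr (hadj i hi), ?_⟩
  intro i hi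
  obtain ⟨c, ⟨hc1, hc2⟩, hu⟩ := hexu i hi
  refine ⟨f c, ⟨f.map_adj_iff.mpr hc1, f.map_adj_iff.mpr hc2⟩, ?_⟩
  rintro c' ⟨hc1', hc2'⟩
  have h1 : (layerGraph n m p ε₁).Adj (z i) (f.symm c') := by
    rw [← f.map_adj_iff]
    simpa using hc1'
  have h2 : (layerGraph n m p ε₁).Adj (f.symm c') (z (i+2)) := by
    rw [← f.map_adj_iff]
    simpa using hc2'
  have := hu (f.symm c') ⟨h1, h2⟩
  rw [← this]
  simp

end Graph

end LayerAux

/-- An isomorphism of the unit distance graphs of two layers preserves integer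
ℓ_p distances. -/
theorem layer_iso_preserves_integer_dist (n m : ℕ) (hn : 2 ≤ n) (hm : 1 ≤ m)
    (p : ℝ) (hp1 : 1 < p) (ε₁ ε₂ : ℝ) (hε₁ : 0 < ε₁) (hε₂ : 0 < ε₂)
    (f : layerGraph n m p ε₁ ≃g layerGraph n m p ε₂)
    (k : ℕ) (x y : Layer n m ε₁) :
    lpDist p x.1 y.1 = k ↔ lpDist p (f x).1 (f y).1 = k := by
  rw [← LayerAux.chain_iff hp1 hn k x y, ← LayerAux.chain_iff hp1 hn k (f x) (f y)]
  constructor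
  · exact LayerAux.chain_map f
  · intro h
    have := LayerAux.chain_map f.symm h
    simpa using this
end
end

section
/- Let n ≥ 2, m ≥ 1, p ∈ (1,∞), ε₁, ε₂ > 0, and let f be an isomorphism of the unit distance graphs of L₁ = ℝⁿ × [0,ε₁]^m and L₂ = ℝⁿ × [0,ε₂]^m. If a, b ∈ L₁ are distinct and the line through a and b is horizontal (parallel to ℝⁿ × {0}), then the line through f(a) and f(b) is horizontal. -/
noncomputable section

open scoped ENNReal NNReal


namespace LpAux

variable {k : ℕ} {p : ℝ}

theorem sum_nonneg' (hp : 0 < p) (x y : Fin k → ℝ) : 0 ≤ ∑ i, |x i - y i| ^ p :=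
  Finset.sum_nonneg fun i _ => Real.rpow_nonneg (abs_nonneg _) _

theorem lp_nonneg (hp : 0 < p) (x y : Fin k → ℝ) : 0 ≤ lpDist p x y :=
  Real.rpow_nonneg (sum_nonneg' hp x y) _

theorem lp_rpow (hp : 0 < p) (x y : Fin k → ℝ) :
    (lpDist p x y) ^ p = ∑ i, |x i - y i| ^ p := by
  rw [lpDist, one_div, Real.rpow_inv_rpow (sum_nonneg' hp x y) hp.ne']

theorem lp_symm (x y : Fin k → ℝ) : lpDist p x y = lpDist p y x := by
  simp [lpDist, abs_sub_comm]

theorem lp_self (hp : 0 < p) (x : Fin k → ℝ) : lpDist p x x = 0 := by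
  have h0 : (∑ i, |x i - x i| ^ p) = 0 := by
    simp [Real.zero_rpow hp.ne']
  rw [lpDist, h0, Real.zero_rpow (show (1:ℝ)/p ≠ 0 by positivity)]

theorem lp_eq_zero_iff (hp : 0 < p) {x y : Fin k → ℝ} : lpDist p x y = 0 ↔ x = y := by
  constructor
  · intro h
    have hsum : ∑ i, |x i - y i| ^ p = 0 := by
      have := congrArg (· ^ p) h
      simpa [lp_rpow hp, Real.zero_rpow hp.ne'] using this
    have hterm : ∀ i ∈ Finset.univ, |x i - y i| ^ p = 0 :=
      (Finset.sum_eq_zero_iff_of_nonneg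
        (fun i _ => Real.rpow_nonneg (abs_nonneg _) _)).1 hsum
    funext i
    have h0 : |x i - y i| ^ p = 0 := hterm i (Finset.mem_univ i)
    have : |x i - y i| = 0 := by
      by_contra hne
      have hpos : 0 < |x i - y i| := lt_of_le_of_ne (abs_nonneg _) (Ne.symm hne)
      exact absurd h0 (by positivity)
    have := abs_eq_zero.1 this
    linarith
  · rintro rfl; exact lp_self hp x

theorem coord_le_lp (hp : 0 < p) (x y : Fin k → ℝ) (i : Fin k) :
    |x i - y i| ≤ lpDist p x y := by
  have h1 : |x i - y i| ^ p ≤ ∑ j, |x j - y j| ^ p :=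
    Finset.single_le_sum (f := fun j => |x j - y j| ^ p)
      (fun j _ => Real.rpow_nonneg (abs_nonneg _) _) (Finset.mem_univ i)
  calc |x i - y i| = (|x i - y i| ^ p) ^ (1/p) := by
        rw [one_div, Real.rpow_rpow_inv (abs_nonneg _) hp.ne']
    _ ≤ lpDist p x y :=
        Real.rpow_le_rpow (Real.rpow_nonneg (abs_nonneg _) _) h1 (by positivity)

theorem lp_triangle (hp : 1 ≤ p) (x y z : Fin k → ℝ) :
    lpDist p x z ≤ lpDist p x y + lpDist p y z := by
  have hp0 : 0 < p := lt_of_lt_of_le one_pos hp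
  set q : ℝ≥0∞ := ENNReal.ofReal p with hq
  haveI : Fact (1 ≤ q) := ⟨ENNReal.one_le_ofReal.mpr hp⟩
  have hqr : q.toReal = p := ENNReal.toReal_ofReal hp0.le
  have hd : ∀ a b : Fin k → ℝ, lpDist p a b =
      dist ((WithLp.equiv q (∀ _ : Fin k, ℝ)).symm a) ((WithLp.equiv q (∀ _ : Fin k, ℝ)).symm b) := by
    intro a b
    rw [PiLp.dist_eq_sum (by rw [hqr]; exact hp0)]
    simp [lpDist, hqr, Real.dist_eq]
  rw [hd x z, hd x y, hd y z]
  exact dist_triangle _ _ _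

end LpAux


def lpN (p : ℝ) {k : ℕ} (d : Fin k → ℝ) : ℝ := lpDist p d 0

namespace LpAux

variable {k : ℕ} {p : ℝ}

theorem lpN_eq (d : Fin k → ℝ) : lpN p d = (∑ i, |d i| ^ p) ^ (1 / p) := by
  simp [lpN, lpDist]

theorem lpN_nonneg (hp : 0 < p) (d : Fin k → ℝ) : 0 ≤ lpN p d := lp_nonneg hp _ _

theorem lpN_rpow (hp : 0 < p) (d : Fin k → ℝ) : (lpN p d) ^ p = ∑ i, |d i| ^ p := by
  have := lp_rpow hp d 0
  simpa [lpN] using this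

theorem lp_eq_lpN (x y : Fin k → ℝ) : lpDist p x y = lpN p (x - y) := by
  simp [lpN, lpDist]

theorem lpN_eq_zero_iff (hp : 0 < p) {d : Fin k → ℝ} : lpN p d = 0 ↔ d = 0 := by
  rw [lpN, lp_eq_zero_iff hp]

theorem lpN_smul (hp : 0 < p) (t : ℝ) (d : Fin k → ℝ) :
    lpN p (t • d) = |t| * lpN p d := by
  have h1 : ∀ i : Fin k, |(t • d) i| ^ p = |t| ^ p * |d i| ^ p := by
    intro i
    rw [Pi.smul_apply, smul_eq_mul, abs_mul, Real.mul_rpow (abs_nonneg _) (abs_nonneg _)]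
  rw [lpN_eq, lpN_eq]
  calc (∑ i, |(t • d) i| ^ p) ^ (1/p) = (|t| ^ p * ∑ i, |d i| ^ p) ^ (1/p) := by
        rw [Finset.mul_sum]; exact congrArg (· ^ (1/p)) (Finset.sum_congr rfl fun i _ => h1 i)
    _ = (|t| ^ p) ^ (1/p) * (∑ i, |d i| ^ p) ^ (1/p) := by
        rw [Real.mul_rpow (Real.rpow_nonneg (abs_nonneg _) _)
          (Finset.sum_nonneg fun i _ => Real.rpow_nonneg (abs_nonneg _) _)]
    _ = |t| * (∑ i, |d i| ^ p) ^ (1/p) := by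
        rw [one_div, Real.rpow_rpow_inv (abs_nonneg _) hp.ne']

/-- `|x| ^ p` is strictly convex on `ℝ` for `1 < p`. -/
theorem psi_strictConvex (hp : 1 < p) :
    StrictConvexOn ℝ Set.univ (fun x : ℝ => |x| ^ p) := by
  have hp0 : 0 < p := lt_trans one_pos hp
  refine ⟨convex_univ, ?_⟩
  intro x _ y _ hxy a b ha hb hab
  simp only [smul_eq_mul]
  have h1 : |a * x + b * y| ≤ a * |x| + b * |y| := by
    calc |a * x + b * y| ≤ |a * x| + |b * y| := abs_add_le _ _
      _ = a * |x| + b * |y| := by rw [abs_mul, abs_mul, abs_of_pos ha, abs_of_pos hb]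
  by_cases hxa : |x| = |y|
  · have hx0 : x ≠ 0 := by
      intro h0
      apply hxy
      rw [h0] at hxa ⊢
      have : |y| = 0 := by simpa using hxa.symm
      exact (abs_eq_zero.1 this).symm
    have hyx : y = -x := by
      rcases abs_eq_abs.1 hxa with h | h
      · exact absurd h hxy
      · linarith [h]
    have h2 : |a * x + b * y| = |a - b| * |x| := by
      rw [hyx]; rw [show a * x + b * (-x) = (a - b) * x by ring, abs_mul]
    have h3 : |a - b| < 1 := by
      rw [abs_sub_lt_iff]; constructor <;> linarith
    have h4 : |a * x + b * y| < |x| := by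
      rw [h2]
      have : 0 < |x| := abs_pos.2 hx0
      nlinarith
    have h5 : |a * x + b * y| ^ p < |x| ^ p :=
      Real.rpow_lt_rpow (abs_nonneg _) h4 hp0
    have h6 : a * |x| ^ p + b * |y| ^ p = |x| ^ p := by
      rw [← hxa, ← add_mul, hab, one_mul]
    linarith
  · have hsc := (strictConvexOn_rpow hp).2 (Set.mem_Ici.2 (abs_nonneg x))
      (Set.mem_Ici.2 (abs_nonneg y)) hxa ha hb hab
    simp only [smul_eq_mul] at hsc
    have h7 : |a * x + b * y| ^ p ≤ (a * |x| + b * |y|) ^ p :=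
      Real.rpow_le_rpow (abs_nonneg _) h1 hp0.le
    exact lt_of_le_of_lt h7 hsc

/-- Four-point strict convexity inequality for `ψ = |·| ^ p`. -/
theorem four_point (hp : 1 < p) {c a b d : ℝ} (hca : c < a) (hab : a ≤ b) (hbd : b < d)
    (hsum : a + b = c + d) : |a| ^ p + |b| ^ p < |c| ^ p + |d| ^ p := by
  have hcd : c < d := lt_of_lt_of_le hca (le_trans hab hbd.le)
  have he : (0:ℝ) < d - c := by linarith
  set l1 : ℝ := (d - a) / (d - c) with hl1
  set l2 : ℝ := (d - b) / (d - c) with hl2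
  have hl1p : 0 < l1 := div_pos (by linarith) he
  have hl1p' : 0 < 1 - l1 := by
    rw [hl1]; rw [sub_pos, div_lt_one he]; linarith
  have hl2p : 0 < l2 := div_pos (by linarith) he
  have hl2p' : 0 < 1 - l2 := by
    rw [hl2]; rw [sub_pos, div_lt_one he]; linarith
  have hψ := psi_strictConvex hp
  have hA := hψ.2 (Set.mem_univ c) (Set.mem_univ d) hcd.ne hl1p hl1p' (by ring)
  have hB := hψ.2 (Set.mem_univ c) (Set.mem_univ d) hcd.ne hl2p hl2p' (by ring)
  simp only [smul_eq_mul] at hA hB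
  have ha' : l1 * c + (1 - l1) * d = a := by
    rw [hl1]; field_simp; ring
  have hb' : l2 * c + (1 - l2) * d = b := by
    rw [hl2]; field_simp; ring
  rw [ha'] at hA
  rw [hb'] at hB
  have hl12 : l1 + l2 = 1 := by
    rw [hl1, hl2]; rw [← add_div, div_eq_one_iff_eq he.ne']; linarith
  have hC : l1 * |c| ^ p + l2 * |c| ^ p = |c| ^ p := by rw [← add_mul, hl12, one_mul]
  have hD : (1 - l1) * |d| ^ p + (1 - l2) * |d| ^ p = |d| ^ p := by
    rw [← add_mul, show (1 - l1) + (1 - l2) = 1 by linarith, one_mul]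
  linarith

end LpAux


namespace LpAux

variable {k : ℕ} {p : ℝ}

/-- Equality case of Minkowski: if `‖a‖ = ‖b‖ = R` and `‖a + b‖ = 2R` then `a = b`. -/
theorem lp_eq_of_norm_add (hp : 1 < p) {a b : Fin k → ℝ} {R : ℝ}
    (ha : lpN p a = R) (hb : lpN p b = R) (hab : lpN p (a + b) = 2 * R) : a = b := by
  have hp0 : 0 < p := lt_trans one_pos hp
  have hR : 0 ≤ R := ha ▸ lpN_nonneg hp0 a
  have hSa : ∑ i, |a i| ^ p = R ^ p := by rw [← lpN_rpow hp0, ha]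
  have hSb : ∑ i, |b i| ^ p = R ^ p := by rw [← lpN_rpow hp0, hb]
  have hSab : ∑ i, |a i + b i| ^ p = 2 ^ p * R ^ p := by
    rw [show (∑ i, |a i + b i| ^ p) = ∑ i, |(a + b) i| ^ p by simp,
      ← lpN_rpow hp0, hab, Real.mul_rpow (by norm_num) hR]
  -- termwise convexity bound
  have key : ∀ x y : ℝ, 0 ≤ x → 0 ≤ y → (x + y) ^ p ≤ 2 ^ (p - 1) * (x ^ p + y ^ p) := by
    intro x y hx hy
    have hcv := (convexOn_rpow hp.le).2 (Set.mem_Ici.2 hx) (Set.mem_Ici.2 hy)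
      (by norm_num : (0:ℝ) ≤ 1/2) (by norm_num : (0:ℝ) ≤ 1/2) (by norm_num)
    simp only [smul_eq_mul] at hcv
    have h2 : (x + y) ^ p = 2 ^ p * (1/2 * x + 1/2 * y) ^ p := by
      rw [← Real.mul_rpow (by norm_num) (by linarith)]
      ring_nf
    rw [h2]
    calc 2 ^ p * (1/2 * x + 1/2 * y) ^ p ≤ 2 ^ p * (1/2 * x ^ p + 1/2 * y ^ p) := by
          apply mul_le_mul_of_nonneg_left hcv (Real.rpow_nonneg (by norm_num) _)
      _ = 2 ^ (p - 1) * (x ^ p + y ^ p) := by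
          rw [Real.rpow_sub (by norm_num : (0:ℝ) < 2), Real.rpow_one]
          ring
  have hterm_le : ∀ i : Fin k, |a i + b i| ^ p ≤ 2 ^ (p-1) * (|a i| ^ p + |b i| ^ p) := by
    intro i
    calc |a i + b i| ^ p ≤ (|a i| + |b i|) ^ p :=
          Real.rpow_le_rpow (abs_nonneg _) (abs_add_le _ _) hp0.le
      _ ≤ 2 ^ (p-1) * (|a i| ^ p + |b i| ^ p) := key _ _ (abs_nonneg _) (abs_nonneg _)
  have hsum_eq : ∑ i, |a i + b i| ^ p = ∑ i, 2 ^ (p-1) * (|a i| ^ p + |b i| ^ p) := by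
    rw [hSab]
    rw [← Finset.mul_sum, Finset.sum_add_distrib, hSa, hSb]
    rw [Real.rpow_sub (by norm_num : (0:ℝ) < 2), Real.rpow_one]
    ring
  have hterm_eq : ∀ i ∈ Finset.univ, |a i + b i| ^ p = 2 ^ (p-1) * (|a i| ^ p + |b i| ^ p) :=
    (Finset.sum_eq_sum_iff_of_le (fun i _ => hterm_le i)).1 hsum_eq
  funext i
  have hi := hterm_eq i (Finset.mem_univ i)
  set x := |a i| with hx
  set y := |b i| with hy
  -- first: x = y
  have hxy : x = y := by
    by_contra hne
    have hsc := (strictConvexOn_rpow hp).2 (Set.mem_Ici.2 (abs_nonneg (a i)))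
      (Set.mem_Ici.2 (abs_nonneg (b i))) hne
      (by norm_num : (0:ℝ) < 1/2) (by norm_num : (0:ℝ) < 1/2) (by norm_num)
    simp only [smul_eq_mul] at hsc
    have h2 : (x + y) ^ p = 2 ^ p * (1/2 * x + 1/2 * y) ^ p := by
      rw [← Real.mul_rpow (by norm_num) (by positivity)]
      ring_nf
    have hlt : (x + y) ^ p < 2 ^ (p-1) * (x ^ p + y ^ p) := by
      rw [h2]
      calc 2 ^ p * (1/2 * x + 1/2 * y) ^ p < 2 ^ p * (1/2 * x ^ p + 1/2 * y ^ p) := by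
            apply mul_lt_mul_of_pos_left hsc (Real.rpow_pos_of_pos (by norm_num) _)
        _ = 2 ^ (p-1) * (x ^ p + y ^ p) := by
            rw [Real.rpow_sub (by norm_num : (0:ℝ) < 2), Real.rpow_one]; ring
    have hle : |a i + b i| ^ p ≤ (x + y) ^ p :=
      Real.rpow_le_rpow (abs_nonneg _) (abs_add_le _ _) hp0.le
    linarith
  -- second: |a i + b i| = x + y
  have habs : |a i + b i| = x + y := by
    have hx0 : 0 ≤ x := hx ▸ abs_nonneg (a i)
    have h1 : |a i + b i| ^ p = (x + y) ^ p := by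
      rw [hi, ← hxy]
      rw [show 2 ^ (p-1) * (x ^ p + x ^ p) = 2 ^ p * x ^ p by
        rw [Real.rpow_sub (by norm_num : (0:ℝ) < 2), Real.rpow_one]; ring]
      rw [show x + x = 2 * x by ring, Real.mul_rpow (by norm_num) hx0]
    have h2 := congrArg (· ^ (1/p)) h1
    simpa [one_div, Real.rpow_rpow_inv (abs_nonneg _) hp0.ne',
      Real.rpow_rpow_inv (by positivity : (0:ℝ) ≤ x + y) hp0.ne'] using h2
  -- conclude a i = b i
  rcases eq_or_ne (a i) 0 with h0 | h0
  · have : y = 0 := by rw [← hxy, hx, h0, abs_zero]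
    have hb0 : b i = 0 := abs_eq_zero.1 this
    rw [h0, hb0]
  · rcases abs_eq_abs.1 hxy.symm with h | h
    · exact h.symm
    · exfalso
      have hx0 : 0 < x := abs_pos.2 h0
      have hz : a i + b i = 0 := by rw [h]; ring
      rw [hz, abs_zero] at habs
      linarith [hxy, habs]
  
end LpAux


namespace LpAux

variable {k n m : ℕ} {p : ℝ}

/-- Packaged double IVT. -/
theorem ivt_two {D : ℝ → ℝ} (hc : Continuous D) {R T : ℝ} (h0 : D 0 < R)
    (hT : R ≤ D T) (hT' : R ≤ D (-T)) (hTpos : 0 < T) :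
    ∃ t₁ t₂ : ℝ, t₁ < 0 ∧ 0 < t₂ ∧ D t₁ = R ∧ D t₂ = R := by
  have h2 : R ∈ Set.Icc (D 0) (D T) := ⟨h0.le, hT⟩
  obtain ⟨t₂, ht₂mem, ht₂⟩ := intermediate_value_Icc hTpos.le hc.continuousOn h2
  have h3 : R ∈ Set.Icc (D 0) (D (-T)) := ⟨h0.le, hT'⟩
  obtain ⟨t₁, ht₁mem, ht₁⟩ :=
    intermediate_value_Icc' (by linarith : -T ≤ (0:ℝ)) hc.continuousOn h3
  refine ⟨t₁, t₂, ?_, ?_, ht₁, ht₂⟩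
  · rcases lt_or_eq_of_le ht₁mem.2 with h | h
    · exact h
    · exfalso; rw [h] at ht₁; linarith
  · rcases lt_or_eq_of_le ht₂mem.1 with h | h
    · exact h
    · exfalso; rw [← h] at ht₂; linarith

theorem mid_mem_layer {ε : ℝ} {u v : Fin (n + m) → ℝ}
    (hu : u ∈ Layer n m ε) (hv : v ∈ Layer n m ε) :
    (fun i => (u i + v i) / 2) ∈ Layer n m ε := by
  intro j hj
  obtain ⟨h1, h2⟩ := hu j hj
  obtain ⟨h3, h4⟩ := hv j hj
  exact ⟨by linarith, by linarith⟩

theorem lp_mid_left (hp : 0 < p) (u v : Fin k → ℝ) :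
    lpDist p u (fun i => (u i + v i) / 2) = lpDist p u v / 2 := by
  have h1 : (u - fun i => (u i + v i) / 2) = (1/2 : ℝ) • (u - v) := by
    funext i; simp [Pi.sub_apply]; ring
  rw [lp_eq_lpN, h1, lpN_smul hp, lp_eq_lpN, abs_of_pos (by norm_num : (0:ℝ) < 1/2)]
  ring

theorem lp_mid_right (hp : 0 < p) (u v : Fin k → ℝ) :
    lpDist p (fun i => (u i + v i) / 2) v = lpDist p u v / 2 := by
  have h1 : ((fun i => (u i + v i) / 2) - v) = (1/2 : ℝ) • (u - v) := by
    funext i; simp [Pi.sub_apply]; ring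
  rw [lp_eq_lpN, h1, lpN_smul hp, lp_eq_lpN, abs_of_pos (by norm_num : (0:ℝ) < 1/2)]
  ring

end LpAux


namespace LpAux

variable {n m : ℕ} {p : ℝ}

theorem two_equidistant_aux1 (hn : 1 ≤ n) (hp : 1 < p) {ε R : ℝ}
    {u v : Fin (n + m) → ℝ}
    (hu : u ∈ Layer n m ε) (hv : v ∈ Layer n m ε) (hR : 0 < R)
    (hr : lpDist p u v < 2 * R)
    (hH : ∀ i : Fin (n + m), (i : ℕ) < n → u i = v i) :
    ∃ w₁ w₂ : Fin (n + m) → ℝ, (w₁ ∈ Layer n m ε ∧ w₂ ∈ Layer n m ε) ∧ w₁ ≠ w₂ ∧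
      (lpDist p u w₁ = R ∧ lpDist p w₁ v = R) ∧
      (lpDist p u w₂ = R ∧ lpDist p w₂ v = R) ∧
      (∀ j : Fin (n + m), n ≤ (j : ℕ) → w₁ j = (u j + v j) / 2 ∧ w₂ j = (u j + v j) / 2) := by
  have hp0 : 0 < p := lt_trans one_pos hp
  set c : Fin (n + m) → ℝ := fun i => (u i + v i) / 2 with hc
  have hnm : 0 < n + m := by omega
  set i0 : Fin (n + m) := ⟨0, hnm⟩ with hi0def
  have hi0n : (i0 : ℕ) < n := by simp [hi0def]; omega
  set W : ℝ → Fin (n + m) → ℝ := fun t => Function.update c i0 (c i0 + t) with hW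
  have hWi0 : ∀ t, W t i0 = c i0 + t := fun t => Function.update_self _ _ _
  have hWne : ∀ t (i : Fin (n + m)), i ≠ i0 → W t i = c i := fun t i hi =>
    Function.update_of_ne hi _ _
  have hco : ∀ t (i : Fin (n + m)), |u i - W t i| = |W t i - v i| := by
    intro t i
    by_cases hi : i = i0
    · subst hi
      rw [hWi0]
      have huv : u i0 = v i0 := hH i0 hi0n
      have : u i0 - (c i0 + t) = -((c i0 + t) - v i0) := by rw [← huv]; ring
      rw [this, abs_neg]
    · rw [hWne t i hi]
      have h1 : u i - c i = (u i - v i) / 2 := by rw [hc]; ring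
      have h2 : c i - v i = (u i - v i) / 2 := by rw [hc]; ring
      rw [h1, h2]
  set D : ℝ → ℝ := fun t => lpDist p u (W t) with hD
  have hDv : ∀ t, lpDist p (W t) v = D t := by
    intro t
    rw [hD]
    simp only [lpDist]
    congr 1
    exact Finset.sum_congr rfl fun i _ => by rw [← hco t i]
  have hDcont : Continuous D := by
    rw [hD]
    simp only [lpDist]
    apply Continuous.rpow_const ?_ (fun x => Or.inr (by positivity))
    apply continuous_finset_sum
    intro i _
    apply Continuous.rpow_const ?_ (fun x => Or.inr hp0.le)
    apply Continuous.abs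
    by_cases hi : i = i0
    · subst hi
      have hfun : (fun t : ℝ => u i0 - W t i0) = fun t => (u i0 - c i0) - t := by
        funext t; rw [hWi0]; ring
      rw [hfun]
      exact continuous_const.sub continuous_id
    · have hfun : (fun t : ℝ => u i - W t i) = fun _ => u i - c i := by
        funext t; rw [hWne t i hi]
      rw [hfun]
      exact continuous_const
  have hW0 : W 0 = c := by
    rw [hW]; simp
  have hD0 : D 0 < R := by
    rw [hD]
    simp only [hW0]
    rw [hc, lp_mid_left hp0]
    linarith
  have hgrow : ∀ t : ℝ, |t| - |c i0 - u i0| ≤ D t := by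
    intro t
    have h1 := coord_le_lp hp0 u (W t) i0
    rw [hWi0] at h1
    have h2 : |t| - |c i0 - u i0| ≤ |u i0 - (c i0 + t)| := by
      have h3 : u i0 - (c i0 + t) = -(t + (c i0 - u i0)) := by ring
      rw [h3, abs_neg]
      have h4 : |t| ≤ |t + (c i0 - u i0)| + |c i0 - u i0| := by
        have h5 := abs_add_le (t + (c i0 - u i0)) (-(c i0 - u i0))
        rw [show t + (c i0 - u i0) + -(c i0 - u i0) = t by ring, abs_neg] at h5
        exact h5
      linarith
    exact le_trans h2 h1
  set T : ℝ := R + |c i0 - u i0| + 1 with hTdef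
  have hTpos : 0 < T := by positivity
  have hT : R ≤ D T := by
    have := hgrow T
    rw [abs_of_pos hTpos] at this
    linarith
  have hT' : R ≤ D (-T) := by
    have := hgrow (-T)
    rw [abs_neg, abs_of_pos hTpos] at this
    linarith
  obtain ⟨t₁, t₂, ht₁, ht₂, hDt₁, hDt₂⟩ := ivt_two hDcont hD0 hT hT' hTpos
  have hlayer : ∀ t, W t ∈ Layer n m ε := by
    intro t j hj
    have hjne : j ≠ i0 := by
      intro h
      rw [h] at hj
      simp [hi0def] at hj
      omega
    rw [hWne t j hjne]
    exact mid_mem_layer hu hv j hj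
  refine ⟨W t₁, W t₂, ⟨hlayer t₁, hlayer t₂⟩, ?_, ⟨hDt₁, by rw [hDv t₁]; exact hDt₁⟩,
    ⟨hDt₂, by rw [hDv t₂]; exact hDt₂⟩, ?_⟩
  · intro heq
    have := congrFun heq i0
    rw [hWi0, hWi0] at this
    have : t₁ = t₂ := by linarith
    linarith
  · intro j hj
    have hjne : j ≠ i0 := by
      intro h
      rw [h] at hj
      simp [hi0def] at hj
      omega
    rw [hWne t₁ j hjne, hWne t₂ j hjne]
    exact ⟨rfl, rfl⟩

end LpAux


namespace LpAux

variable {p : ℝ}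

theorem g_cont (hp0 : 0 < p) (δ : ℝ) :
    Continuous (fun s : ℝ => |s + δ| ^ p - |s - δ| ^ p) := by
  apply Continuous.sub
  · exact ((continuous_id.add continuous_const).abs).rpow_const fun x => Or.inr hp0.le
  · exact ((continuous_id.sub continuous_const).abs).rpow_const fun x => Or.inr hp0.le

theorem g_odd (δ s : ℝ) :
    |(-s) + δ| ^ p - |(-s) - δ| ^ p = -(|s + δ| ^ p - |s - δ| ^ p) := by
  rw [show -s + δ = -(s - δ) by ring, show -s - δ = -(s + δ) by ring, abs_neg, abs_neg]
  ring

theorem g_strictMono (hp : 1 < p) {δ : ℝ} (hδ : 0 < δ) :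
    StrictMono (fun s : ℝ => |s + δ| ^ p - |s - δ| ^ p) := by
  intro s₁ s₂ hlt
  simp only
  rcases le_total (s₁ + δ) (s₂ - δ) with hle | hle
  · have := four_point hp (show s₁ - δ < s₁ + δ by linarith) hle
      (show s₂ - δ < s₂ + δ by linarith) (by ring)
    linarith
  · have := four_point hp (show s₁ - δ < s₂ - δ by linarith) hle
      (show s₁ + δ < s₂ + δ by linarith) (by ring)
    linarith

theorem g_tendsto_atTop (hp : 1 < p) {δ : ℝ} (hδ : 0 < δ) :
    Filter.Tendsto (fun s : ℝ => |s + δ| ^ p - |s - δ| ^ p) Filter.atTop Filter.atTop := by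
  have key : ∀ s : ℝ, δ + 1 ≤ s → 2 * δ * (s - δ) ^ (p - 1) ≤ |s + δ| ^ p - |s - δ| ^ p := by
    intro s hs
    have hb1 : (1:ℝ) ≤ s - δ := by linarith
    have hb0 : (0:ℝ) < s - δ := by linarith
    have ha0 : (0:ℝ) < s + δ := by linarith
    rw [abs_of_pos ha0, abs_of_pos hb0]
    have h1 : (s - δ) ^ (p - 1) ≤ (s + δ) ^ (p - 1) :=
      Real.rpow_le_rpow hb0.le (by linarith) (by linarith)
    have h2 : (s + δ) ^ p = (s + δ) ^ (p - 1) * (s + δ) := by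
      rw [← Real.rpow_add_one ha0.ne' (p - 1), sub_add_cancel]
    have h3 : (s - δ) ^ p = (s - δ) ^ (p - 1) * (s - δ) := by
      rw [← Real.rpow_add_one hb0.ne' (p - 1), sub_add_cancel]
    have h4 : (0:ℝ) < (s - δ) ^ (p - 1) := Real.rpow_pos_of_pos hb0 _
    nlinarith [h1, h4, ha0]
  have t1 : Filter.Tendsto (fun s : ℝ => s - δ) Filter.atTop Filter.atTop :=
    Filter.tendsto_atTop_add_const_right _ _ Filter.tendsto_id
  have t2 : Filter.Tendsto (fun s : ℝ => (s - δ) ^ (p - 1)) Filter.atTop Filter.atTop :=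
    (tendsto_rpow_atTop (by linarith : (0:ℝ) < p - 1)).comp t1
  have t3 : Filter.Tendsto (fun s : ℝ => 2 * δ * (s - δ) ^ (p - 1)) Filter.atTop Filter.atTop :=
    Filter.Tendsto.const_mul_atTop (by positivity) t2
  exact Filter.tendsto_atTop_mono' _ ((Filter.eventually_ge_atTop (δ + 1)).mono key) t3

theorem g_tendsto_atBot (hp : 1 < p) {δ : ℝ} (hδ : 0 < δ) :
    Filter.Tendsto (fun s : ℝ => |s + δ| ^ p - |s - δ| ^ p) Filter.atTop Filter.atTop →
    Filter.Tendsto (fun s : ℝ => |s + δ| ^ p - |s - δ| ^ p) Filter.atBot Filter.atBot := by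
  intro htop
  have hfun : (fun s : ℝ => |s + δ| ^ p - |s - δ| ^ p) =
      fun s : ℝ => -((fun x : ℝ => |x + δ| ^ p - |x - δ| ^ p) (-s)) := by
    funext s
    simp only
    rw [g_odd δ s]
    ring
  rw [hfun]
  exact (Filter.tendsto_neg_atTop_atBot).comp (htop.comp Filter.tendsto_neg_atBot_atTop)

end LpAux


namespace LpAux

variable {n m : ℕ} {p : ℝ}

theorem two_equidistant_aux2 (hn : 2 ≤ n) (hp : 1 < p) {ε R : ℝ}
    {u v : Fin (n + m) → ℝ}
    (hu : u ∈ Layer n m ε) (hv : v ∈ Layer n m ε) (hR : 0 < R)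
    (hr : lpDist p u v < 2 * R)
    (i0 : Fin (n + m)) (hi0n : (i0 : ℕ) < n) (hlt : u i0 < v i0) :
    ∃ w₁ w₂ : Fin (n + m) → ℝ, (w₁ ∈ Layer n m ε ∧ w₂ ∈ Layer n m ε) ∧ w₁ ≠ w₂ ∧
      (lpDist p u w₁ = R ∧ lpDist p w₁ v = R) ∧
      (lpDist p u w₂ = R ∧ lpDist p w₂ v = R) ∧
      (∀ j : Fin (n + m), n ≤ (j : ℕ) → w₁ j = (u j + v j) / 2 ∧ w₂ j = (u j + v j) / 2) := by
  have hp0 : 0 < p := lt_trans one_pos hp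
  set c : Fin (n + m) → ℝ := fun i => (u i + v i) / 2 with hc
  have hnm1 : 1 < n + m := by omega
  set j0 : Fin (n + m) := if (i0 : ℕ) = 0 then ⟨1, hnm1⟩ else ⟨0, by omega⟩ with hj0def
  have hj0n : (j0 : ℕ) < n := by
    rw [hj0def]; split <;> simp <;> omega
  have hne : i0 ≠ j0 := by
    rw [hj0def]
    split
    · next h => intro hcon; rw [hcon] at h; simp at h
    · next h => intro hcon; rw [hcon] at h; simp at h
  set δ : ℝ := (v i0 - u i0) / 2 with hδdef
  have hδ : 0 < δ := by rw [hδdef]; linarith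
  set γ : ℝ := (v j0 - u j0) / 2 with hγdef
  set g : ℝ → ℝ := fun s => |s + δ| ^ p - |s - δ| ^ p with hg
  set h : ℝ → ℝ := fun t => |t + γ| ^ p - |t - γ| ^ p with hh
  have gmono : StrictMono g := g_strictMono hp hδ
  have gcont : Continuous g := g_cont hp0 δ
  have gtop := g_tendsto_atTop hp hδ
  have gbot := g_tendsto_atBot hp hδ gtop
  have gsurj : Function.Surjective g := Continuous.surjective gcont gtop gbot
  set G := StrictMono.orderIsoOfSurjective g gmono gsurj with hG
  have hcont : Continuous h := g_cont hp0 γ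
  set σ : ℝ → ℝ := fun t => G.symm (-(h t)) with hσ
  have σcont : Continuous σ := G.symm.continuous.comp hcont.neg
  have hg0 : g 0 = 0 := by rw [hg]; simp
  have hh0 : h 0 = 0 := by rw [hh]; simp
  have σ0 : σ 0 = 0 := by
    rw [hσ]
    simp only [hh0, neg_zero]
    have hG0 : G 0 = 0 := hg0
    exact (OrderIso.symm_apply_eq G).2 hG0.symm
  have hgσ : ∀ t, g (σ t) = -(h t) := fun t =>
    StrictMono.orderIsoOfSurjective_self_symm_apply g gmono gsurj _
  set W : ℝ → Fin (n + m) → ℝ :=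
    fun t => Function.update (Function.update c i0 (c i0 + σ t)) j0 (c j0 + t) with hW
  have hWj0 : ∀ t, W t j0 = c j0 + t := fun t => Function.update_self _ _ _
  have hWi0 : ∀ t, W t i0 = c i0 + σ t := by
    intro t
    rw [hW]
    simp only
    rw [Function.update_of_ne hne, Function.update_self]
  have hWother : ∀ t (i : Fin (n + m)), i ≠ i0 → i ≠ j0 → W t i = c i := by
    intro t i h1 h2
    rw [hW]
    simp only
    rw [Function.update_of_ne h2, Function.update_of_ne h1]
  -- the two sums agree
  have hDuv : ∀ t, (∑ i, |u i - W t i| ^ p) = ∑ i, |v i - W t i| ^ p := by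
    intro t
    have hsum : ∑ i, (|v i - W t i| ^ p - |u i - W t i| ^ p) = 0 := by
      rw [← Finset.sum_subset (Finset.subset_univ ({i0, j0} : Finset (Fin (n + m)))) ?_]
      · rw [Finset.sum_pair hne]
        rw [hWi0 t, hWj0 t]
        have E : (|v i0 - (c i0 + σ t)| ^ p - |u i0 - (c i0 + σ t)| ^ p) +
            (|v j0 - (c j0 + t)| ^ p - |u j0 - (c j0 + t)| ^ p) = -(g (σ t)) + -(h t) := by
          rw [hg, hh]
          simp only
          rw [show v i0 - (c i0 + σ t) = -(σ t - δ) by rw [hc, hδdef]; simp only; ring,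
              show u i0 - (c i0 + σ t) = -(σ t + δ) by rw [hc, hδdef]; simp only; ring,
              show v j0 - (c j0 + t) = -(t - γ) by rw [hc, hγdef]; simp only; ring,
              show u j0 - (c j0 + t) = -(t + γ) by rw [hc, hγdef]; simp only; ring,
              abs_neg, abs_neg, abs_neg, abs_neg]
          ring
        rw [E, hgσ t]
        ring
      · intro i _ hi
        simp only [Finset.mem_insert, Finset.mem_singleton] at hi
        push_neg at hi
        rw [hWother t i hi.1 hi.2]
        rw [show v i - c i = (v i - u i) / 2 by rw [hc]; simp only; ring,
            show u i - c i = -((v i - u i) / 2) by rw [hc]; simp only; ring, abs_neg]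
        ring
    have := Finset.sum_sub_distrib (s := Finset.univ)
      (f := fun i => |v i - W t i| ^ p) (g := fun i => |u i - W t i| ^ p)
    rw [this] at hsum
    linarith
  set D : ℝ → ℝ := fun t => lpDist p u (W t) with hD
  have hDv : ∀ t, lpDist p (W t) v = D t := by
    intro t
    rw [hD]
    simp only [lpDist]
    congr 1
    calc ∑ i, |W t i - v i| ^ p = ∑ i, |v i - W t i| ^ p :=
          Finset.sum_congr rfl fun i _ => by rw [abs_sub_comm]
      _ = ∑ i, |u i - W t i| ^ p := (hDuv t).symm
  have hDcont : Continuous D := by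
    rw [hD]
    simp only [lpDist]
    apply Continuous.rpow_const ?_ (fun x => Or.inr (by positivity))
    apply continuous_finset_sum
    intro i _
    apply Continuous.rpow_const ?_ (fun x => Or.inr hp0.le)
    apply Continuous.abs
    by_cases h2 : i = j0
    · subst h2
      have hfun : (fun t : ℝ => u j0 - W t j0) = fun t => (u j0 - c j0) - t := by
        funext t; rw [hWj0]; ring
      rw [hfun]
      exact continuous_const.sub continuous_id
    · by_cases h1 : i = i0
      · have hfun : (fun t : ℝ => u i - W t i) = fun t => (u i - c i) - σ t := by
          funext t; rw [h1, hWi0]; ring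
        rw [hfun]
        exact continuous_const.sub σcont
      · have hfun : (fun t : ℝ => u i - W t i) = fun _ => u i - c i := by
          funext t; rw [hWother t i h1 h2]
        rw [hfun]
        exact continuous_const
  have hW0 : W 0 = c := by
    rw [hW]
    simp only [σ0, add_zero]
    rw [Function.update_eq_self, Function.update_eq_self]
  have hD0 : D 0 < R := by
    rw [hD]
    simp only [hW0]
    rw [hc, lp_mid_left hp0]
    linarith
  have hgrow : ∀ t : ℝ, |t| - |c j0 - u j0| ≤ D t := by
    intro t
    have h1 := coord_le_lp hp0 u (W t) j0
    rw [hWj0] at h1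
    have h2 : |t| - |c j0 - u j0| ≤ |u j0 - (c j0 + t)| := by
      have h3 : u j0 - (c j0 + t) = -(t + (c j0 - u j0)) := by ring
      rw [h3, abs_neg]
      have h4 : |t| ≤ |t + (c j0 - u j0)| + |c j0 - u j0| := by
        have h5 := abs_add_le (t + (c j0 - u j0)) (-(c j0 - u j0))
        rw [show t + (c j0 - u j0) + -(c j0 - u j0) = t by ring, abs_neg] at h5
        exact h5
      linarith
    exact le_trans h2 h1
  set T : ℝ := R + |c j0 - u j0| + 1 with hTdef
  have hTpos : 0 < T := by positivity
  have hT : R ≤ D T := by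
    have := hgrow T
    rw [abs_of_pos hTpos] at this
    linarith
  have hT' : R ≤ D (-T) := by
    have := hgrow (-T)
    rw [abs_neg, abs_of_pos hTpos] at this
    linarith
  obtain ⟨t₁, t₂, ht₁, ht₂, hDt₁, hDt₂⟩ := ivt_two hDcont hD0 hT hT' hTpos
  have hlayer : ∀ t, W t ∈ Layer n m ε := by
    intro t j hj
    have hj1 : j ≠ i0 := by
      intro hcon
      rw [hcon] at hj
      omega
    have hj2 : j ≠ j0 := by
      intro hcon
      rw [hcon] at hj
      omega
    rw [hWother t j hj1 hj2]
    exact mid_mem_layer hu hv j hj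
  refine ⟨W t₁, W t₂, ⟨hlayer t₁, hlayer t₂⟩, ?_, ⟨hDt₁, by rw [hDv t₁]; exact hDt₁⟩,
    ⟨hDt₂, by rw [hDv t₂]; exact hDt₂⟩, ?_⟩
  · intro heq
    have := congrFun heq j0
    rw [hWj0, hWj0] at this
    have : t₁ = t₂ := by linarith
    linarith
  · intro j hj
    have hj1 : j ≠ i0 := by intro hcon; rw [hcon] at hj; omega
    have hj2 : j ≠ j0 := by intro hcon; rw [hcon] at hj; omega
    rw [hWother t₁ j hj1 hj2, hWother t₂ j hj1 hj2]
    exact ⟨rfl, rfl⟩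

end LpAux


namespace LpAux

variable {n m : ℕ} {p : ℝ}

theorem two_equidistant (hn : 2 ≤ n) (hp : 1 < p) {ε R : ℝ}
    {u v : Fin (n + m) → ℝ}
    (hu : u ∈ Layer n m ε) (hv : v ∈ Layer n m ε) (hR : 0 < R)
    (hr : lpDist p u v < 2 * R) :
    ∃ w₁ w₂ : Fin (n + m) → ℝ, (w₁ ∈ Layer n m ε ∧ w₂ ∈ Layer n m ε) ∧ w₁ ≠ w₂ ∧
      (lpDist p u w₁ = R ∧ lpDist p w₁ v = R) ∧
      (lpDist p u w₂ = R ∧ lpDist p w₂ v = R) ∧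
      (∀ j : Fin (n + m), n ≤ (j : ℕ) → w₁ j = (u j + v j) / 2 ∧ w₂ j = (u j + v j) / 2) := by
  by_cases hH : ∀ i : Fin (n + m), (i : ℕ) < n → u i = v i
  · exact two_equidistant_aux1 (by omega) hp hu hv hR hr hH
  · push_neg at hH
    obtain ⟨i0, hi0n, hne⟩ := hH
    rcases lt_or_gt_of_ne hne with hlt | hgt
    · exact two_equidistant_aux2 hn hp hu hv hR hr i0 hi0n hlt
    · obtain ⟨w₁, w₂, ⟨hw1, hw2⟩, hne', ⟨d1, d2⟩, ⟨d3, d4⟩, hvert⟩ :=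
        two_equidistant_aux2 hn hp hv hu hR (by rw [lp_symm]; exact hr) i0 hi0n hgt
      refine ⟨w₁, w₂, ⟨hw1, hw2⟩, hne', ⟨by rw [lp_symm]; exact d2, by rw [lp_symm]; exact d1⟩,
        ⟨by rw [lp_symm]; exact d4, by rw [lp_symm]; exact d3⟩, ?_⟩
      intro j hj
      obtain ⟨ha, hb⟩ := hvert j hj
      exact ⟨by rw [ha]; ring, by rw [hb]; ring⟩

end LpAux

/-- "Distance exactly 2", graph-theoretically. -/
def gE2 {V : Type*} (G : SimpleGraph V) (x y : V) : Prop :=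
  ¬G.Adj x y ∧ x ≠ y ∧ ∃! w, G.Adj x w ∧ G.Adj w y

/-- "Distance exactly 4 with unique exact-2 midpoint", graph-theoretically. -/
def gU4 {V : Type*} (G : SimpleGraph V) (x z : V) : Prop :=
  ∃! w, gE2 G x w ∧ gE2 G w z

namespace LpAux

theorem gE2_map {V₁ V₂ : Type*} {G₁ : SimpleGraph V₁} {G₂ : SimpleGraph V₂}
    (f : G₁ ≃g G₂) {x y : V₁} (h : gE2 G₁ x y) : gE2 G₂ (f x) (f y) := by
  obtain ⟨hna, hxy, w, ⟨h1, h2⟩, huniq⟩ := h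
  refine ⟨fun hc => hna (f.map_rel_iff.1 hc), fun hc => hxy (f.toEquiv.injective hc),
    f w, ⟨f.map_rel_iff.2 h1, f.map_rel_iff.2 h2⟩, ?_⟩
  intro w' ⟨ha, hb⟩
  have ha' : G₁.Adj x (f.symm w') := by
    have : G₂.Adj (f x) (f (f.symm w')) := by
      rwa [f.apply_symm_apply]
    exact f.map_rel_iff.1 this
  have hb' : G₁.Adj (f.symm w') y := by
    have : G₂.Adj (f (f.symm w')) (f y) := by
      rwa [f.apply_symm_apply]
    exact f.map_rel_iff.1 this
  have := huniq (f.symm w') ⟨ha', hb'⟩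
  rw [← this]
  exact (f.apply_symm_apply w').symm

theorem gU4_map {V₁ V₂ : Type*} {G₁ : SimpleGraph V₁} {G₂ : SimpleGraph V₂}
    (f : G₁ ≃g G₂) {x z : V₁} (h : gU4 G₁ x z) : gU4 G₂ (f x) (f z) := by
  obtain ⟨w, ⟨h1, h2⟩, huniq⟩ := h
  refine ⟨f w, ⟨gE2_map f h1, gE2_map f h2⟩, ?_⟩
  intro w' ⟨ha, hb⟩
  have ha' : gE2 G₁ x (f.symm w') := by
    have := gE2_map f.symm ha
    rwa [f.symm_apply_apply] at this
  have hb' : gE2 G₁ (f.symm w') z := by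
    have := gE2_map f.symm hb
    rwa [f.symm_apply_apply] at this
  have := huniq (f.symm w') ⟨ha', hb'⟩
  rw [← this]
  exact (f.apply_symm_apply w').symm

end LpAux


namespace LpAux

variable {n m : ℕ} {p ε : ℝ}

theorem adj_of_dist (hp : 1 < p) {a b : ↥(Layer n m ε)} (hd : lpDist p a.1 b.1 = 1) :
    (layerGraph n m p ε).Adj a b := by
  have hp0 : 0 < p := lt_trans one_pos hp
  refine (show _ ∧ _ from ⟨fun hc => ?_, hd⟩)
  rw [hc, lp_self hp0] at hd
  norm_num at hd

theorem dist_of_adj {a b : ↥(Layer n m ε)} (h : (layerGraph n m p ε).Adj a b) :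
    lpDist p a.1 b.1 = 1 := (show _ ∧ _ from h).2

/-- Helper: the midpoint characterization for a tight triple. -/
theorem mid_of (hp : 1 < p) {a b w : Fin (n + m) → ℝ} {R : ℝ}
    (d1 : lpDist p a w = R) (d2 : lpDist p w b = R) (d4 : lpDist p a b = 2 * R) :
    w = fun i => (a i + b i) / 2 := by
  have hab : (w - a) + (b - w) = b - a := by funext i; simp only [Pi.add_apply, Pi.sub_apply]; ring
  have h1 : lpN p (w - a) = R := by rw [← lp_eq_lpN, lp_symm]; exact d1
  have h2 : lpN p (b - w) = R := by rw [← lp_eq_lpN, lp_symm]; exact d2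
  have h3 : lpN p ((w - a) + (b - w)) = 2 * R := by
    rw [hab, ← lp_eq_lpN, lp_symm]; exact d4
  have := lp_eq_of_norm_add hp h1 h2 h3
  funext i
  have hi := congrFun this i
  simp only [Pi.sub_apply] at hi
  linarith

theorem E2_iff (hn : 2 ≤ n) (hp : 1 < p) (x y : ↥(Layer n m ε)) :
    gE2 (layerGraph n m p ε) x y ↔ lpDist p x.1 y.1 = 2 := by
  have hp0 : 0 < p := lt_trans one_pos hp
  constructor
  · rintro ⟨hna, hne, w, ⟨hxw, hwy⟩, huniq⟩
    have d1 : lpDist p x.1 w.1 = 1 := dist_of_adj hxw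
    have d2 : lpDist p w.1 y.1 = 1 := dist_of_adj hwy
    have htri : lpDist p x.1 y.1 ≤ 2 := by
      have := lp_triangle hp.le x.1 w.1 y.1
      rw [d1, d2] at this
      linarith
    have hpos : 0 < lpDist p x.1 y.1 := by
      rcases lt_or_eq_of_le (lp_nonneg hp0 x.1 y.1) with h | h
      · exact h
      · exfalso
        exact hne (Subtype.ext ((lp_eq_zero_iff hp0).1 h.symm))
    by_contra hd
    have hlt : lpDist p x.1 y.1 < 2 := lt_of_le_of_ne htri hd
    obtain ⟨w₁, w₂, ⟨hw1, hw2⟩, hwne, ⟨e1, e2⟩, ⟨e3, e4⟩, _⟩ :=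
      two_equidistant hn hp x.2 y.2 one_pos (by linarith)
    have h1 := huniq ⟨w₁, hw1⟩ ⟨adj_of_dist hp e1, adj_of_dist hp e2⟩
    have h2 := huniq ⟨w₂, hw2⟩ ⟨adj_of_dist hp e3, adj_of_dist hp e4⟩
    apply hwne
    have := h1.trans h2.symm
    exact congrArg Subtype.val this
  · intro hd
    have hne : x ≠ y := by
      intro hc
      rw [hc, lp_self hp0] at hd
      norm_num at hd
    have hna : ¬(layerGraph n m p ε).Adj x y := by
      intro hc'
      have h1 := dist_of_adj hc'
      rw [hd] at h1
      norm_num at h1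
    set mid : Fin (n + m) → ℝ := fun i => (x.1 i + y.1 i) / 2 with hmid
    have hmidmem : mid ∈ Layer n m ε := mid_mem_layer x.2 y.2
    have dxm : lpDist p x.1 mid = 1 := by
      rw [hmid, lp_mid_left hp0, hd]; norm_num
    have dmy : lpDist p mid y.1 = 1 := by
      rw [hmid, lp_mid_right hp0, hd]; norm_num
    refine ⟨hna, hne, ⟨mid, hmidmem⟩, ⟨adj_of_dist hp dxm, adj_of_dist hp dmy⟩, ?_⟩
    rintro w ⟨hxw, hwy⟩
    have := mid_of hp (dist_of_adj hxw) (dist_of_adj hwy) (by rw [hd]; norm_num)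
    exact Subtype.ext this

theorem U4_of (hn : 2 ≤ n) (hp : 1 < p) {x y z : ↥(Layer n m ε)}
    (d1 : lpDist p x.1 y.1 = 2) (d2 : lpDist p y.1 z.1 = 2)
    (d4 : lpDist p x.1 z.1 = 4) : gU4 (layerGraph n m p ε) x z := by
  refine ⟨y, ⟨(E2_iff hn hp x y).2 d1, (E2_iff hn hp y z).2 d2⟩, ?_⟩
  rintro w ⟨e1, e2⟩
  have f1 := (E2_iff hn hp x w).1 e1
  have f2 := (E2_iff hn hp w z).1 e2
  have hw := mid_of hp f1 f2 (by rw [d4]; norm_num)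
  have hy := mid_of hp d1 d2 (by rw [d4]; norm_num)
  exact Subtype.ext (hw.trans hy.symm)

theorem straight_of (hn : 2 ≤ n) (hp : 1 < p) {x y z : ↥(Layer n m ε)}
    (h1 : gE2 (layerGraph n m p ε) x y) (h2 : gE2 (layerGraph n m p ε) y z)
    (h4 : gU4 (layerGraph n m p ε) x z) :
    z.1 = fun i => 2 * y.1 i - x.1 i := by
  have hp0 : 0 < p := lt_trans one_pos hp
  have d1 : lpDist p x.1 y.1 = 2 := (E2_iff hn hp x y).1 h1
  have d2 : lpDist p y.1 z.1 = 2 := (E2_iff hn hp y z).1 h2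
  have htri : lpDist p x.1 z.1 ≤ 4 := by
    have := lp_triangle hp.le x.1 y.1 z.1
    rw [d1, d2] at this
    linarith
  have d4 : lpDist p x.1 z.1 = 4 := by
    by_contra hd
    have hlt : lpDist p x.1 z.1 < 4 := lt_of_le_of_ne htri hd
    obtain ⟨w₁, w₂, ⟨hw1, hw2⟩, hwne, ⟨e1, e2⟩, ⟨e3, e4⟩, _⟩ :=
      two_equidistant hn hp x.2 z.2 (by norm_num : (0:ℝ) < 2) (by linarith)
    obtain ⟨w, -, huniq⟩ := h4
    have q1 := huniq ⟨w₁, hw1⟩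
      ⟨(E2_iff hn hp _ _).2 e1, (E2_iff hn hp _ _).2 e2⟩
    have q2 := huniq ⟨w₂, hw2⟩
      ⟨(E2_iff hn hp _ _).2 e3, (E2_iff hn hp _ _).2 e4⟩
    exact hwne (congrArg Subtype.val (q1.trans q2.symm))
  have hy := mid_of hp d1 d2 (by rw [d4]; norm_num)
  funext i
  have := congrFun hy i
  linarith

end LpAux


namespace LpAux

variable {n m : ℕ} {p : ℝ}

set_option maxHeartbeats 1000000 in
theorem step_horizontal (hn : 2 ≤ n) (hp : 1 < p) {ε₁ ε₂ : ℝ}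
    (f : layerGraph n m p ε₁ ≃g layerGraph n m p ε₂)
    {x y : ↥(Layer n m ε₁)} (hhor : SameHorizontal n m x.1 y.1)
    (hd : lpDist p x.1 y.1 = 2) :
    SameHorizontal n m (f x).1 (f y).1 := by
  have hp0 : 0 < p := lt_trans one_pos hp
  set d : Fin (n + m) → ℝ := fun i => y.1 i - x.1 i with hdd
  have hdn : lpN p d = 2 := by
    have hfun : d = y.1 - x.1 := rfl
    rw [hfun, ← lp_eq_lpN, lp_symm]
    exact hd
  set Z : ℕ → Fin (n + m) → ℝ := fun k i => x.1 i + (k : ℝ) * d i with hZ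
  have hZmem : ∀ k, Z k ∈ Layer n m ε₁ := by
    intro k j hj
    have hdj : d j = 0 := by rw [hdd]; simp only; rw [hhor j hj]; ring
    have : Z k j = x.1 j := by rw [hZ]; simp only; rw [hdj]; ring
    rw [this]
    exact x.2 j hj
  set z : ℕ → ↥(Layer n m ε₁) := fun k => ⟨Z k, hZmem k⟩ with hz
  have hz0 : z 0 = x := by
    apply Subtype.ext
    funext i
    rw [hz]; simp [hZ]
  have hz1 : z 1 = y := by
    apply Subtype.ext
    funext i
    rw [hz]; simp only [hZ, hdd]
    push_cast
    ring
  have hstep : ∀ k : ℕ, lpDist p (z k).1 (z (k + 1)).1 = 2 := by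
    intro k
    show lpDist p (Z k) (Z (k + 1)) = 2
    have hfun : Z k - Z (k + 1) = (-1 : ℝ) • d := by
      funext i
      simp only [Pi.sub_apply, Pi.smul_apply, smul_eq_mul, hZ]
      push_cast
      ring
    rw [lp_eq_lpN, hfun, lpN_smul hp0, hdn]
    norm_num
  have hskip : ∀ k : ℕ, lpDist p (z k).1 (z (k + 2)).1 = 4 := by
    intro k
    show lpDist p (Z k) (Z (k + 2)) = 4
    have hfun : Z k - Z (k + 2) = (-2 : ℝ) • d := by
      funext i
      simp only [Pi.sub_apply, Pi.smul_apply, smul_eq_mul, hZ]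
      push_cast
      ring
    rw [lp_eq_lpN, hfun, lpN_smul hp0, hdn]
    norm_num
  have hE2 : ∀ k : ℕ, gE2 (layerGraph n m p ε₁) (z k) (z (k + 1)) := fun k =>
    (E2_iff hn hp (z k) (z (k+1))).2 (hstep k)
  have hU4 : ∀ k : ℕ, gU4 (layerGraph n m p ε₁) (z k) (z (k + 2)) := fun k =>
    U4_of hn hp (hstep k) (hstep (k + 1)) (hskip k)
  set v : ℕ → Fin (n + m) → ℝ := fun k => (f (z k)).1 with hv
  have hrec : ∀ k : ℕ, v (k + 2) = fun i => 2 * v (k + 1) i - v k i := fun k =>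
    straight_of hn hp (gE2_map f (hE2 k)) (gE2_map f (hE2 (k + 1))) (gU4_map f (hU4 k))
  have hlin : ∀ (k : ℕ) (i : Fin (n + m)),
      v k i = v 0 i + (k : ℝ) * (v 1 i - v 0 i) := by
    have key : ∀ (k : ℕ) (i : Fin (n + m)),
        v k i = v 0 i + (k : ℝ) * (v 1 i - v 0 i) ∧
        v (k + 1) i = v 0 i + ((k : ℝ) + 1) * (v 1 i - v 0 i) := by
      intro k
      induction k with
      | zero => intro i; constructor <;> push_cast <;> ring
      | succ k ih =>
        intro i
        refine ⟨by push_cast; exact (ih i).2, ?_⟩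
        have h2 := congrFun (hrec k) i
        rw [h2]
        rw [(ih i).1, (ih i).2]
        push_cast
        ring
    exact fun k i => (key k i).1
  intro j hj
  by_contra hne
  set δ : ℝ := v 1 j - v 0 j with hδdef
  have hδne : δ ≠ 0 := by
    rw [hδdef]
    intro hc
    apply hne
    have h0 : v 0 = (f x).1 := by rw [show v 0 = (f (z 0)).1 from rfl, hz0]
    have h1 : v 1 = (f y).1 := by rw [show v 1 = (f (z 1)).1 from rfl, hz1]
    rw [← h0, ← h1]
    linarith [hc]
  have hbound : ∀ k : ℕ, v k j ∈ Set.Icc (0:ℝ) ε₂ := fun k => (f (z k)).2 j hj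
  obtain ⟨N, hN⟩ := exists_nat_gt ((ε₂ + |v 0 j|) / |δ|)
  have hδpos : 0 < |δ| := abs_pos.2 hδne
  have hNδ : ε₂ + |v 0 j| < (N : ℝ) * |δ| := by
    rw [div_lt_iff₀ hδpos] at hN
    linarith
  have hvN : v N j = v 0 j + (N : ℝ) * δ := by rw [hlin N j, ← hδdef]
  have habs : |v N j| ≤ ε₂ := by
    obtain ⟨hb1, hb2⟩ := hbound N
    rw [abs_of_nonneg hb1]
    exact hb2
  have h1 : (N : ℝ) * |δ| = |(N : ℝ) * δ| := by
    rw [abs_mul, Nat.abs_cast]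
  have h2 : |(N : ℝ) * δ| ≤ |v N j| + |v 0 j| := by
    have h3 : (N : ℝ) * δ = v N j - v 0 j := by rw [hvN]; ring
    rw [h3]
    exact abs_sub _ _
  linarith


end LpAux

namespace LpAux

variable {n m : ℕ} {p : ℝ}

theorem horizontal_chain (hn : 2 ≤ n) (hp : 1 < p) {ε : ℝ} :
    ∀ (k : ℕ) (x y : ↥(Layer n m ε)), SameHorizontal n m x.1 y.1 →
      lpDist p x.1 y.1 ≤ 2 * k →
      Relation.ReflTransGen
        (fun a b : ↥(Layer n m ε) => SameHorizontal n m a.1 b.1 ∧ lpDist p a.1 b.1 = 2) x y := by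
  have hp0 : 0 < p := lt_trans one_pos hp
  intro k
  induction k with
  | zero =>
    intro x y hh hd
    have h0 : lpDist p x.1 y.1 = 0 := le_antisymm (by simpa using hd) (lp_nonneg hp0 _ _)
    have hxy : x = y := Subtype.ext ((lp_eq_zero_iff hp0).1 h0)
    rw [hxy]
  | succ k ih =>
    intro x y hh hd
    rcases eq_or_ne (lpDist p x.1 y.1) 0 with h0 | h0
    · rw [Subtype.ext ((lp_eq_zero_iff hp0).1 h0)]
    · have hpos : 0 < lpDist p x.1 y.1 :=
        lt_of_le_of_ne (lp_nonneg hp0 _ _) (Ne.symm h0)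
      rcases eq_or_ne (lpDist p x.1 y.1) 2 with h2 | h2
      · exact Relation.ReflTransGen.single ⟨hh, h2⟩
      · rcases lt_or_gt_of_ne h2 with hlt2 | hgt2
        · obtain ⟨w₁, w₂, ⟨hw1, _⟩, _, ⟨e1, e2⟩, _, hvert⟩ :=
            two_equidistant hn hp x.2 y.2 (by norm_num : (0:ℝ) < 2) (by linarith)
          set wS : ↥(Layer n m ε) := ⟨w₁, hw1⟩ with hwS
          have e1' : lpDist p x.1 wS.1 = 2 := e1
          have e2' : lpDist p wS.1 y.1 = 2 := e2
          have hhx : SameHorizontal n m x.1 wS.1 := fun j hj => by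
            show x.1 j = w₁ j
            rw [(hvert j hj).1, ← hh j hj]; ring
          have hhy : SameHorizontal n m wS.1 y.1 := fun j hj => by
            show w₁ j = y.1 j
            rw [(hvert j hj).1, hh j hj]; ring
          exact Relation.ReflTransGen.head ⟨hhx, e1'⟩
            (Relation.ReflTransGen.single ⟨hhy, e2'⟩)
        · set r : ℝ := lpDist p x.1 y.1 with hrdef
          set y' : Fin (n + m) → ℝ := fun i => x.1 i + (2 / r) * (y.1 i - x.1 i) with hy'
          have hy'mem : y' ∈ Layer n m ε := by
            intro j hj
            have hval : y' j = x.1 j := by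
              rw [hy']; simp only; rw [hh j hj]; ring
            rw [hval]
            exact x.2 j hj
          set yS : ↥(Layer n m ε) := ⟨y', hy'mem⟩ with hyS
          have hhxy' : SameHorizontal n m x.1 yS.1 := fun j hj => by
            show x.1 j = y' j
            rw [hy']; simp only; rw [hh j hj]; ring
          have hhy'y : SameHorizontal n m yS.1 y.1 := fun j hj => by
            show y' j = y.1 j
            rw [hy']; simp only; rw [hh j hj]; ring
          have hdxy' : lpDist p x.1 yS.1 = 2 := by
            show lpDist p x.1 y' = 2
            have hfun : x.1 - y' = (2 / r) • (x.1 - y.1) := by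
              funext i
              simp only [Pi.sub_apply, Pi.smul_apply, smul_eq_mul, hy']
              ring
            rw [lp_eq_lpN, hfun, lpN_smul hp0, ← lp_eq_lpN, ← hrdef,
              abs_of_pos (by positivity : (0:ℝ) < 2 / r)]
            field_simp
          have hdy'y : lpDist p yS.1 y.1 = r - 2 := by
            show lpDist p y' y.1 = r - 2
            have hfun : y' - y.1 = (1 - 2 / r) • (x.1 - y.1) := by
              funext i
              simp only [Pi.sub_apply, Pi.smul_apply, smul_eq_mul, hy']
              ring
            have hpos' : (0:ℝ) < 1 - 2 / r := by
              rw [sub_pos, div_lt_one hpos]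
              exact hgt2
            rw [lp_eq_lpN, hfun, lpN_smul hp0, ← lp_eq_lpN, ← hrdef, abs_of_pos hpos']
            field_simp
          have hrest : lpDist p yS.1 y.1 ≤ 2 * k := by
            rw [hdy'y]
            push_cast at hd
            linarith
          exact Relation.ReflTransGen.head ⟨hhxy', hdxy'⟩ (ih yS y hhy'y hrest)

end LpAux


/-- An isomorphism of the unit distance graphs of two layers maps pairs of distinct
points spanning a horizontal line to pairs spanning a horizontal line. -/
theorem layer_iso_preserves_horizontal_line (n m : ℕ) (hn : 2 ≤ n) (hm : 1 ≤ m)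
    (p : ℝ) (hp1 : 1 < p) (ε₁ ε₂ : ℝ) (hε₁ : 0 < ε₁) (hε₂ : 0 < ε₂)
    (f : layerGraph n m p ε₁ ≃g layerGraph n m p ε₂)
    (a b : Layer n m ε₁) (hab : a ≠ b)
    (hhor : SameHorizontal n m a.1 b.1) :
    SameHorizontal n m (f a).1 (f b).1 := by
  obtain ⟨k, hk⟩ := exists_nat_ge (lpDist p a.1 b.1 / 2)
  have hk2 : lpDist p a.1 b.1 ≤ 2 * k := by linarith
  have hchain := LpAux.horizontal_chain hn hp1 k a b hhor hk2
  have main : ∀ c : ↥(Layer n m ε₁),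
      Relation.ReflTransGen
        (fun x y : ↥(Layer n m ε₁) =>
          SameHorizontal n m x.1 y.1 ∧ lpDist p x.1 y.1 = 2) a c →
      SameHorizontal n m (f a).1 (f c).1 := by
    intro c hc
    induction hc with
    | refl => exact fun j hj => rfl
    | tail hrest hstep ih =>
      intro j hj
      exact (ih j hj).trans (LpAux.step_horizontal hn hp1 f hstep.1 hstep.2 j hj)
  exact main b hchain
end
end

section
/- Let n ≥ 2, m ≥ 1, p ∈ (1,∞), ε > 0, L = ℝⁿ × [0,ε]^m with ℓ_p metric, and let ρ be the graph distance in the unit distance graph of L. There exists C = C(ε) > 0 such that for all a, b ∈ L with ρ(a,b) > C, one has ρ(a,b) = ⌈||a - b||_p⌉. -/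
noncomputable section

open scoped ENNReal

/-! ### Auxiliary lemmas -/

section Aux

lemma lpDist_def {p : ℝ} {k : ℕ} (x y : Fin k → ℝ) :
    lpDist p x y = (∑ i, |x i - y i| ^ p) ^ (1 / p) := rfl

lemma lpDist_nonneg {p : ℝ} {k : ℕ} (x y : Fin k → ℝ) : 0 ≤ lpDist p x y :=
  Real.rpow_nonneg
    (Finset.sum_nonneg fun i _ => Real.rpow_nonneg (abs_nonneg _) _) _

lemma lpDist_comm {p : ℝ} {k : ℕ} (x y : Fin k → ℝ) : lpDist p x y = lpDist p y x := by
  simp [lpDist, abs_sub_comm]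

lemma lpDist_rpow {p : ℝ} (hp : 0 < p) {k : ℕ} (x y : Fin k → ℝ) :
    lpDist p x y ^ p = ∑ i, |x i - y i| ^ p := by
  have h0 : (0:ℝ) ≤ ∑ i, |x i - y i| ^ p :=
    Finset.sum_nonneg fun i _ => Real.rpow_nonneg (abs_nonneg _) _
  rw [lpDist, one_div, Real.rpow_inv_rpow h0 hp.ne']

lemma lpDist_eq_one {p : ℝ} (hp : 0 < p) {k : ℕ} {x y : Fin k → ℝ}
    (h : ∑ i, |x i - y i| ^ p = 1) : lpDist p x y = 1 := by
  rw [lpDist, h, Real.one_rpow]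

lemma lpDist_self {p : ℝ} (hp : 0 < p) {k : ℕ} (x : Fin k → ℝ) : lpDist p x x = 0 := by
  simp [lpDist, Real.zero_rpow hp.ne', one_div, Real.zero_rpow (inv_ne_zero hp.ne')]

lemma lpDist_triangle {p : ℝ} (hp : 1 ≤ p) {k : ℕ} (x y z : Fin k → ℝ) :
    lpDist p x z ≤ lpDist p x y + lpDist p y z := by
  haveI : Fact (1 ≤ ENNReal.ofReal p) := ⟨ENNReal.one_le_ofReal.2 hp⟩
  have hp0 : 0 < p := lt_of_lt_of_le one_pos hp
  have htr : (ENNReal.ofReal p).toReal = p := ENNReal.toReal_ofReal hp0.le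
  have key : ∀ a b : Fin k → ℝ,
      lpDist p a b = dist ((WithLp.equiv (ENNReal.ofReal p) (Fin k → ℝ)).symm a)
        ((WithLp.equiv (ENNReal.ofReal p) (Fin k → ℝ)).symm b) := by
    intro a b
    rw [PiLp.dist_eq_sum (by rw [htr]; exact hp0)]
    simp [lpDist, htr, Real.dist_eq, WithLp.equiv_symm_apply, PiLp.toLp_apply]
  rw [key, key, key]
  exact dist_triangle _ _ _

/-- On a sphere of radius `A` there is a point at distance exactly `A` from `z`,
provided `‖z‖ ≤ 2A` (intermediate value theorem on the connected sphere). -/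
lemma exists_sphere_point {E : Type*} [NormedAddCommGroup E] [NormedSpace ℝ E]
    (hrank : 1 < Module.rank ℝ E) {A : ℝ} (hA : 0 ≤ A) (z : E) (hz : ‖z‖ ≤ 2 * A) :
    ∃ ξ : E, ‖ξ‖ = A ∧ ‖ξ - z‖ = A := by
  obtain ⟨⟨ξ0, hξ0⟩, -⟩ := isConnected_sphere hrank (0 : E) hA
  by_cases hz0 : z = 0
  · subst hz0
    rw [mem_sphere_zero_iff_norm] at hξ0
    exact ⟨ξ0, hξ0, by simpa using hξ0⟩
  · have hR : 0 < ‖z‖ := norm_pos_iff.2 hz0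
    have hnorm_smul : ‖(A / ‖z‖) • z‖ = A := by
      rw [norm_smul, Real.norm_eq_abs, abs_of_nonneg (by positivity)]
      field_simp
    have ha : (A / ‖z‖) • z ∈ Metric.sphere (0 : E) A := by
      rw [mem_sphere_zero_iff_norm]; exact hnorm_smul
    have hb : -((A / ‖z‖) • z) ∈ Metric.sphere (0 : E) A := by
      rw [mem_sphere_zero_iff_norm, norm_neg]; exact hnorm_smul
    have hfa : ‖(A / ‖z‖) • z - z‖ = |A - ‖z‖| := by
      rw [show (A / ‖z‖) • z - z = (A / ‖z‖ - 1) • z from by rw [sub_smul, one_smul],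
        norm_smul, Real.norm_eq_abs,
        show |A / ‖z‖ - 1| * ‖z‖ = |(A / ‖z‖ - 1) * ‖z‖| from by
          rw [abs_mul, abs_of_pos hR],
        show (A / ‖z‖ - 1) * ‖z‖ = A - ‖z‖ from by field_simp]
    have hfb : ‖-((A / ‖z‖) • z) - z‖ = A + ‖z‖ := by
      rw [show -((A / ‖z‖) • z) - z = -((A / ‖z‖ + 1) • z) from by
          rw [add_smul, one_smul]; abel,
        norm_neg, norm_smul, Real.norm_eq_abs, abs_of_nonneg (by positivity)]
      field_simp
    have hconn := (isConnected_sphere hrank (0 : E) hA).isPreconnected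
    have hcont : ContinuousOn (fun ξ : E => ‖ξ - z‖) (Metric.sphere (0 : E) A) :=
      ((continuous_id.sub continuous_const).norm).continuousOn
    have hmem : A ∈ Set.Icc ‖(A / ‖z‖) • z - z‖ ‖-((A / ‖z‖) • z) - z‖ := by
      rw [hfa, hfb]
      constructor
      · exact abs_le.2 ⟨by linarith, by linarith⟩
      · linarith
    obtain ⟨ξ, hξs, hξ⟩ := hconn.intermediate_value ha hb hcont hmem
    exact ⟨ξ, mem_sphere_zero_iff_norm.1 hξs, hξ⟩

end Aux

section Layer

variable {n m : ℕ} {p ε : ℝ}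

lemma one_lt_rank_pilp (hn : 2 ≤ n) (q : ℝ≥0∞) :
    1 < Module.rank ℝ (PiLp q fun _ : Fin n => ℝ) := by
  rw [(WithLp.linearEquiv q ℝ (Fin n → ℝ)).rank_eq, rank_fin_fun]
  exact_mod_cast (show 1 < n by omega)

lemma adj_of_dist_one (hp0 : 0 < p) {x y : ↥(Layer n m ε)}
    (h : lpDist p x.1 y.1 = 1) : (layerGraph n m p ε).Adj x y := by
  refine ⟨?_, h⟩
  rintro rfl
  rw [lpDist_self hp0] at h
  norm_num at h

/-- Any two points of the layer at ℓ_p distance at most 2 are joined by a 2-step path. -/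
lemma two_step (hn : 2 ≤ n) (hp1 : 1 < p) {u b : Fin (n + m) → ℝ}
    (hu : u ∈ Layer n m ε) (hb : b ∈ Layer n m ε) (hd : lpDist p u b ≤ 2) :
    ∃ w ∈ Layer n m ε, lpDist p u w = 1 ∧ lpDist p w b = 1 := by
  have hp0 : 0 < p := lt_trans one_pos hp1
  haveI : Fact (1 ≤ ENNReal.ofReal p) := ⟨ENNReal.one_le_ofReal.2 hp1.le⟩
  set q : ℝ≥0∞ := ENNReal.ofReal p with hq
  have htr : q.toReal = p := ENNReal.toReal_ofReal hp0.le
  set c : Fin (n + m) → ℝ := fun i => b i - u i with hc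
  set v : ℝ := ∑ i : Fin m, |c (Fin.natAdd n i)| ^ p with hv
  set R2 : ℝ := ∑ j : Fin n, |c (Fin.castAdd m j)| ^ p with hR2
  have hv0 : 0 ≤ v := by
    rw [hv]; exact Finset.sum_nonneg fun i _ => Real.rpow_nonneg (abs_nonneg _) _
  have hR20 : 0 ≤ R2 := by
    rw [hR2]; exact Finset.sum_nonneg fun i _ => Real.rpow_nonneg (abs_nonneg _) _
  have key : (∑ i : Fin (n + m), |c i| ^ p) = R2 + v := by
    rw [hR2, hv]; exact Fin.sum_univ_add _
  have hS : lpDist p u b ^ p = R2 + v := by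
    rw [lpDist_rpow hp0, ← key]
    exact Finset.sum_congr rfl fun i _ => by simp only [hc]; rw [abs_sub_comm]
  have hd0 : 0 ≤ lpDist p u b := lpDist_nonneg _ _
  have h2p : (0:ℝ) < 2 ^ p := Real.rpow_pos_of_pos two_pos p
  have hSle : R2 + v ≤ 2 ^ p := by
    rw [← hS]
    exact Real.rpow_le_rpow hd0 hd hp0.le
  have hvle : v ≤ 2 ^ p := by linarith
  have hA0 : (0:ℝ) ≤ 1 - v / 2 ^ p := by
    have : v / 2 ^ p ≤ 1 := (div_le_one h2p).2 hvle
    linarith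
  set A : ℝ := (1 - v / 2 ^ p) ^ (1/p) with hA
  have hA_nonneg : 0 ≤ A := Real.rpow_nonneg hA0 _
  have hAp : A ^ p = 1 - v / 2 ^ p := by
    rw [hA, one_div, Real.rpow_inv_rpow hA0 hp0.ne']
  set z2 : PiLp q (fun _ : Fin n => ℝ) :=
    (WithLp.equiv q (Fin n → ℝ)).symm (fun j => c (Fin.castAdd m j)) with hz2
  have hz2norm : ‖z2‖ = R2 ^ (1/p) := by
    rw [PiLp.norm_eq_sum (by rw [htr]; exact hp0), htr, hR2]
    have hterm : ∀ j ∈ Finset.univ, ‖z2 j‖ ^ p = |c (Fin.castAdd m j)| ^ p := fun j _ => by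
      simp [hz2, WithLp.equiv_symm_apply, PiLp.toLp_apply, Real.norm_eq_abs]
    congr 1
    all_goals exact Finset.sum_congr rfl hterm
  have hz2p : ‖z2‖ ^ p = R2 := by
    rw [hz2norm, one_div, Real.rpow_inv_rpow hR20 hp0.ne']
  have hz2A : ‖z2‖ ≤ 2 * A := by
    have h1 : ‖z2‖ ^ p ≤ (2 * A) ^ p := by
      rw [Real.mul_rpow (by norm_num) hA_nonneg, hAp, hz2p]
      have h2 : (2:ℝ) ^ p * (1 - v / 2 ^ p) = 2 ^ p - v := by
        field_simp
      rw [h2]; linarith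
    exact (Real.rpow_le_rpow_iff (norm_nonneg _) (by positivity) hp0).1 h1
  obtain ⟨ξ, hξn, hξz⟩ := exists_sphere_point (one_lt_rank_pilp hn q) hA_nonneg z2 hz2A
  have hsum1 : ∑ j : Fin n, |ξ j| ^ p = A ^ p := by
    rw [PiLp.norm_eq_sum (by rw [htr]; exact hp0), htr] at hξn
    have h0 : (0:ℝ) ≤ ∑ j : Fin n, ‖ξ j‖ ^ p :=
      Finset.sum_nonneg fun j _ => Real.rpow_nonneg (norm_nonneg _) _
    have := congrArg (fun t : ℝ => t ^ p) hξn
    rw [one_div, Real.rpow_inv_rpow h0 hp0.ne'] at this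
    simpa [Real.norm_eq_abs] using this
  have hsum2 : ∑ j : Fin n, |ξ j - c (Fin.castAdd m j)| ^ p = A ^ p := by
    rw [PiLp.norm_eq_sum (by rw [htr]; exact hp0), htr] at hξz
    have h0 : (0:ℝ) ≤ ∑ j : Fin n, ‖(ξ - z2) j‖ ^ p :=
      Finset.sum_nonneg fun j _ => Real.rpow_nonneg (norm_nonneg _) _
    have := congrArg (fun t : ℝ => t ^ p) hξz
    rw [one_div, Real.rpow_inv_rpow h0 hp0.ne'] at this
    rw [← this]
    exact Finset.sum_congr rfl fun j _ => by
      simp [PiLp.sub_apply, hz2, WithLp.equiv_symm_apply, PiLp.toLp_apply, Real.norm_eq_abs]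
  set w : Fin (n + m) → ℝ :=
    fun i => if h : (i:ℕ) < n then u i + ξ ⟨(i:ℕ), h⟩ else (u i + b i) / 2 with hw
  have hw_cast : ∀ j : Fin n, w (Fin.castAdd m j) = u (Fin.castAdd m j) + ξ j := by
    intro j
    have hj : ((Fin.castAdd m j : Fin (n + m)) : ℕ) < n := by
      simpa using j.isLt
    rw [hw]
    simp only
    rw [dif_pos hj]
    congr 1
    all_goals exact congrArg ξ (Fin.ext (by simp))
  have hw_nat : ∀ i : Fin m,
      w (Fin.natAdd n i) = (u (Fin.natAdd n i) + b (Fin.natAdd n i)) / 2 := by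
    intro i
    have hni : ¬ ((Fin.natAdd n i : Fin (n + m)) : ℕ) < n := by
      simp [Fin.coe_natAdd]
    rw [hw]
    simp only
    rw [dif_neg hni]
  have hwmem : w ∈ Layer n m ε := by
    intro i hi
    have hni : ¬ ((i : ℕ) < n) := not_lt.2 hi
    rw [hw]
    simp only
    rw [dif_neg hni]
    obtain ⟨h1, h2⟩ := Set.mem_Icc.1 (hu i hi)
    obtain ⟨h3, h4⟩ := Set.mem_Icc.1 (hb i hi)
    exact Set.mem_Icc.2 ⟨by linarith, by linarith⟩
  have hvert : ∑ i : Fin m, |c (Fin.natAdd n i) / 2| ^ p = v / 2 ^ p := by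
    rw [hv, Finset.sum_div]
    refine Finset.sum_congr rfl fun i _ => ?_
    rw [abs_div, abs_two, Real.div_rpow (abs_nonneg _) (by norm_num)]
  refine ⟨w, hwmem, ?_, ?_⟩
  · apply lpDist_eq_one hp0
    rw [Fin.sum_univ_add (fun i => |u i - w i| ^ p)]
    have e1 : ∑ j : Fin n, |u (Fin.castAdd m j) - w (Fin.castAdd m j)| ^ p = A ^ p := by
      rw [← hsum1]
      refine Finset.sum_congr rfl fun j _ => ?_
      rw [hw_cast j, show u (Fin.castAdd m j) - (u (Fin.castAdd m j) + ξ j) = -(ξ j) from by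
        ring, abs_neg]
    have e2 : ∑ i : Fin m, |u (Fin.natAdd n i) - w (Fin.natAdd n i)| ^ p = v / 2 ^ p := by
      rw [← hvert]
      refine Finset.sum_congr rfl fun i _ => ?_
      rw [hw_nat i]
      congr 1
      simp only [hc]
      rw [show u (Fin.natAdd n i) - (u (Fin.natAdd n i) + b (Fin.natAdd n i)) / 2
          = -((b (Fin.natAdd n i) - u (Fin.natAdd n i)) / 2) from by ring, abs_neg]
    rw [e1, e2, hAp]
    ring
  · apply lpDist_eq_one hp0
    rw [Fin.sum_univ_add (fun i => |w i - b i| ^ p)]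
    have e1 : ∑ j : Fin n, |w (Fin.castAdd m j) - b (Fin.castAdd m j)| ^ p = A ^ p := by
      rw [← hsum2]
      refine Finset.sum_congr rfl fun j _ => ?_
      congr 1
      rw [hw_cast j]
      simp only [hc]
      ring_nf
    have e2 : ∑ i : Fin m, |w (Fin.natAdd n i) - b (Fin.natAdd n i)| ^ p = v / 2 ^ p := by
      rw [← hvert]
      refine Finset.sum_congr rfl fun i _ => ?_
      rw [hw_nat i]
      simp only [hc]
      rw [show (u (Fin.natAdd n i) + b (Fin.natAdd n i)) / 2 - b (Fin.natAdd n i)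
          = -((b (Fin.natAdd n i) - u (Fin.natAdd n i)) / 2) from by ring, abs_neg]
    rw [e1, e2, hAp]
    ring

/-- One unit step along the straight segment from `a` to `b`. -/
lemma straight_step (hp1 : 1 < p) {a b : Fin (n + m) → ℝ}
    (ha : a ∈ Layer n m ε) (hb : b ∈ Layer n m ε) (hd : 1 ≤ lpDist p a b) :
    ∃ x ∈ Layer n m ε, lpDist p a x = 1 ∧ lpDist p x b = lpDist p a b - 1 := by
  have hp0 : 0 < p := lt_trans one_pos hp1
  set d := lpDist p a b with hdd
  have hd0 : 0 < d := lt_of_lt_of_le one_pos hd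
  have hSd : ∑ i, |a i - b i| ^ p = d ^ p := (lpDist_rpow hp0 a b).symm
  refine ⟨fun i => a i + (b i - a i) / d, ?_, ?_, ?_⟩
  · intro i hi
    obtain ⟨h1, h2⟩ := Set.mem_Icc.1 (ha i hi)
    obtain ⟨h3, h4⟩ := Set.mem_Icc.1 (hb i hi)
    have ht1 : 1 / d ≤ 1 := by rw [div_le_one hd0]; exact hd
    have ht0 : 0 < 1 / d := by positivity
    have hrw : a i + (b i - a i) / d = (1 - 1 / d) * a i + (1 / d) * b i := by
      field_simp; ring
    rw [Set.mem_Icc]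
    show 0 ≤ a i + (b i - a i) / d ∧ a i + (b i - a i) / d ≤ ε
    rw [hrw]
    constructor
    · nlinarith [mul_nonneg (by linarith : (0:ℝ) ≤ 1 - 1 / d) h1, mul_nonneg ht0.le h3]
    · nlinarith [mul_nonneg (by linarith : (0:ℝ) ≤ 1 - 1 / d) (by linarith : 0 ≤ ε - a i),
        mul_nonneg ht0.le (by linarith : 0 ≤ ε - b i)]
  · apply lpDist_eq_one hp0
    have hterm : ∀ i, |a i - (a i + (b i - a i) / d)| ^ p = |a i - b i| ^ p / d ^ p := by
      intro i
      rw [show a i - (a i + (b i - a i) / d) = (a i - b i) / d from by field_simp; ring,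
        abs_div, abs_of_pos hd0, Real.div_rpow (abs_nonneg _) hd0.le]
    simp_rw [hterm]
    rw [← Finset.sum_div, hSd, div_self (by positivity : d ^ p ≠ 0)]
  · have hd1 : (0:ℝ) ≤ d - 1 := by linarith
    have hterm : ∀ i, |(a i + (b i - a i) / d) - b i| ^ p
        = |a i - b i| ^ p * ((d - 1) / d) ^ p := by
      intro i
      rw [show (a i + (b i - a i) / d) - b i = (a i - b i) * ((d - 1) / d) from by
        field_simp; ring, abs_mul,
        Real.mul_rpow (abs_nonneg _) (abs_nonneg _),
        abs_of_nonneg (by positivity : (0:ℝ) ≤ (d - 1) / d)]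
    rw [lpDist_def]
    simp_rw [hterm]
    rw [← Finset.sum_mul, hSd, ← Real.mul_rpow hd0.le (by positivity),
      show d * ((d - 1) / d) = d - 1 from by field_simp, one_div,
      Real.rpow_rpow_inv hd1 hp0.ne']

/-- A unit step in the first (horizontal) coordinate direction. -/
lemma unit_step (hn : 2 ≤ n) (hp1 : 1 < p) {a : Fin (n + m) → ℝ}
    (ha : a ∈ Layer n m ε) :
    ∃ x ∈ Layer n m ε, lpDist p a x = 1 := by
  have hp0 : 0 < p := lt_trans one_pos hp1
  have h0n : 0 < n + m := by omega
  set i0 : Fin (n + m) := ⟨0, h0n⟩ with hi0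
  refine ⟨Function.update a i0 (a i0 + 1), ?_, ?_⟩
  · intro i hi
    have hne : i ≠ i0 := by
      intro h
      rw [h, hi0] at hi
      simp at hi
      omega
    rw [Function.update_of_ne hne]
    exact ha i hi
  · apply lpDist_eq_one hp0
    rw [Finset.sum_eq_single i0]
    · rw [Function.update_self, show a i0 - (a i0 + 1) = -1 from by ring, abs_neg,
        abs_one, Real.one_rpow]
    · intro i _ hne
      rw [Function.update_of_ne hne, sub_self, abs_zero, Real.zero_rpow hp0.ne']
    · intro h
      exact absurd (Finset.mem_univ i0) h

set_option maxHeartbeats 1000000 in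
/-- For every `N ≥ 2` and every pair of layer points at ℓ_p distance at most `N`
there is a walk of length exactly `N` in the unit distance graph. -/
lemma exists_walk_length (hn : 2 ≤ n) (hp1 : 1 < p) :
    ∀ N : ℕ, 2 ≤ N → ∀ a b : ↥(Layer n m ε), lpDist p a.1 b.1 ≤ (N : ℝ) →
      ∃ W : (layerGraph n m p ε).Walk a b, W.length = N := by
  have hp0 : 0 < p := lt_trans one_pos hp1
  intro N hN
  induction N, hN using Nat.le_induction with
  | base =>
    intro a b hab
    obtain ⟨w, hwm, h1, h2⟩ := two_step hn hp1 a.2 b.2 (by exact_mod_cast hab)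
    exact ⟨SimpleGraph.Walk.cons (adj_of_dist_one hp0 (y := ⟨w, hwm⟩) h1)
      (SimpleGraph.Walk.cons (adj_of_dist_one hp0 h2) SimpleGraph.Walk.nil), rfl⟩
  | succ N hN2 ih =>
    intro a b hab
    by_cases h1 : 1 ≤ lpDist p a.1 b.1
    · obtain ⟨x, hxm, hax, hxb⟩ := straight_step hp1 a.2 b.2 h1
      have hle : lpDist p x b.1 ≤ (N : ℝ) := by
        rw [hxb]
        push_cast at hab ⊢
        linarith
      obtain ⟨W, hW⟩ := ih ⟨x, hxm⟩ b hle
      exact ⟨SimpleGraph.Walk.cons (adj_of_dist_one hp0 (y := ⟨x, hxm⟩) hax) W, by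
        simp [SimpleGraph.Walk.length_cons, hW]⟩
    · push_neg at h1
      obtain ⟨x, hxm, hax⟩ := unit_step hn hp1 a.2
      have hxa : lpDist p x a.1 = 1 := by rw [lpDist_comm]; exact hax
      have hle : lpDist p x b.1 ≤ (N : ℝ) := by
        have tri := lpDist_triangle hp1.le x a.1 b.1
        have h2N : (2:ℝ) ≤ N := by exact_mod_cast hN2
        linarith
      obtain ⟨W, hW⟩ := ih ⟨x, hxm⟩ b hle
      exact ⟨SimpleGraph.Walk.cons (adj_of_dist_one hp0 (y := ⟨x, hxm⟩) hax) W, by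
        simp [SimpleGraph.Walk.length_cons, hW]⟩

/-- The ℓ_p distance is at most the length of any walk. -/
lemma lpDist_le_length (hp1 : 1 < p) {a b : ↥(Layer n m ε)}
    (W : (layerGraph n m p ε).Walk a b) :
    lpDist p a.1 b.1 ≤ (W.length : ℝ) := by
  induction W with
  | nil => simp [lpDist_self (lt_trans one_pos hp1)]
  | @cons u v w h W' ih =>
    have h1 : lpDist p u.1 v.1 = 1 := h.2
    have tri := lpDist_triangle hp1.le u.1 v.1 w.1
    rw [SimpleGraph.Walk.length_cons]
    push_cast
    linarith

end Layer

/-- There is a constant `C = C(ε) > 0` such that any two points of the layer at graph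
distance greater than `C` are at graph distance exactly `⌈‖a - b‖_p⌉`. -/
theorem layer_graphDist_eq_ceil (n m : ℕ) (hn : 2 ≤ n) (hm : 1 ≤ m)
    (p : ℝ) (hp1 : 1 < p) (ε : ℝ) (hε : 0 < ε) :
    ∃ C : ℝ, 0 < C ∧ ∀ a b : Layer n m ε,
      ((layerGraph n m p ε).dist a b : ℝ) > C →
        (layerGraph n m p ε).dist a b = ⌈lpDist p a.1 b.1⌉₊ := by
  have hp0 : 0 < p := lt_trans one_pos hp1
  refine ⟨2, two_pos, ?_⟩
  intro a b hgt
  have hd0 : 0 ≤ lpDist p a.1 b.1 := lpDist_nonneg _ _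
  have hnot : ¬ lpDist p a.1 b.1 ≤ 2 := by
    intro hle
    obtain ⟨W, hW⟩ := exists_walk_length hn hp1 2 le_rfl a b (by exact_mod_cast hle)
    have h2 := SimpleGraph.dist_le W
    rw [hW] at h2
    have h3 : ((layerGraph n m p ε).dist a b : ℝ) ≤ 2 := by exact_mod_cast h2
    linarith
  push_neg at hnot
  set N := ⌈lpDist p a.1 b.1⌉₊ with hN
  have hdN : lpDist p a.1 b.1 ≤ (N : ℝ) := Nat.le_ceil _
  have hN2 : 2 ≤ N := by
    by_contra h
    push_neg at h
    have hN1 : (N : ℝ) ≤ 1 := by exact_mod_cast Nat.lt_succ_iff.1 h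
    linarith
  obtain ⟨W, hW⟩ := exists_walk_length hn hp1 N hN2 a b hdN
  have hub : (layerGraph n m p ε).dist a b ≤ N := by
    have h4 := SimpleGraph.dist_le W
    rw [hW] at h4
    exact h4
  have hreach : (layerGraph n m p ε).Reachable a b := ⟨W⟩
  obtain ⟨W0, hW0⟩ := hreach.exists_walk_length_eq_dist
  have hlb' := lpDist_le_length hp1 W0
  rw [hW0] at hlb'
  have hlb : N ≤ (layerGraph n m p ε).dist a b := Nat.ceil_le.2 (by exact_mod_cast hlb')
  exact le_antisymm hub hlb
end
end
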